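/- arXiv:2304.08161 — 9 statements merged into one kernel-verified Lean document; each statement's English description precedes it below -/
import Mathlib

section
/- Let f : [0,∞) → ℝ be continuous and define u(t) = ∫_0^t e^{-(t-s)} f(s) ds for t ≥ 0 (so that u is the solution of u'(t) = -u(t) + f(t) for t > 0 with u(0) = 0). If for every δ ∈ (0,1] one has ∫_t^{t+δ} f(s) ds → 0 as t → ∞, then u(t) → 0 as t → ∞. -/
open MeasureTheory Filter Set

namespace PerturbedAux

noncomputable def g (F : ℝ → ℝ) : ℝ → ℝ := fun t => ∫ s in (0:ℝ)..t, F s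

lemma g_sub {F : ℝ → ℝ} (hF : Continuous F) (a b : ℝ) :
    g F b - g F a = ∫ s in a..b, F s :=
  intervalIntegral.integral_interval_sub_left (hF.intervalIntegrable _ _)
    (hF.intervalIntegrable _ _)

lemma g_hasDerivAt {F : ℝ → ℝ} (hF : Continuous F) (x : ℝ) :
    HasDerivAt (g F) (F x) x :=
  intervalIntegral.integral_hasDerivAt_right (hF.intervalIntegrable _ _)
    (hF.stronglyMeasurableAtFilter _ _) hF.continuousAt

lemma g_cont {F : ℝ → ℝ} (hF : Continuous F) : Continuous (g F) :=
  continuous_iff_continuousAt.2 fun x => (g_hasDerivAt hF x).continuousAt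

lemma baire {F : ℝ → ℝ} (hF : Continuous F)
    (havg : ∀ δ ∈ Set.Ioc (0:ℝ) 1,
      Tendsto (fun t => ∫ s in t..(t + δ), F s) atTop (nhds 0))
    {ε : ℝ} (hε : 0 < ε) :
    ∃ c > 0, ∃ N : ℝ, ∀ δ, 0 ≤ δ → δ ≤ c → ∀ t, N ≤ t →
      |g F (t + δ) - g F t| ≤ ε := by
  set E : ℕ → Set ℝ := fun n =>
    Icc 0 1 ∩ ⋂ (t : ℝ) (_ : (n:ℝ) ≤ t), {δ | |g F (t + δ) - g F t| ≤ ε/2} with hE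
  have hEmem : ∀ {γ : ℝ} {n : ℕ}, γ ∈ E n → ∀ t, (n:ℝ) ≤ t →
      |g F (t + γ) - g F t| ≤ ε/2 := by
    intro γ n hγ t ht
    have := hγ.2
    simp only [mem_iInter] at this
    exact this t ht
  have hclosed : ∀ n, IsClosed (E n) := by
    intro n
    refine isClosed_Icc.inter (isClosed_iInter fun t => isClosed_iInter fun _ => ?_)
    exact isClosed_le (((((g_cont hF).comp (continuous_const.add continuous_id)).sub
      continuous_const).abs)) continuous_const
  have hcover : ∀ δ ∈ Icc (0:ℝ) 1, ∃ n : ℕ, δ ∈ E n := by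
    intro δ hδ
    rcases eq_or_lt_of_le hδ.1 with h0 | h0
    · refine ⟨0, hδ, ?_⟩
      simp only [mem_iInter]
      intro t _
      show |g F (t + δ) - g F t| ≤ ε/2
      rw [← h0, add_zero, sub_self, abs_zero]
      positivity
    · have := havg δ ⟨h0, hδ.2⟩
      rw [Metric.tendsto_atTop] at this
      obtain ⟨N, hN⟩ := this (ε/2) (by linarith)
      refine ⟨⌈max N 0⌉₊, hδ, ?_⟩
      simp only [mem_iInter]
      intro t ht
      have hNt : N ≤ t := le_trans (le_max_left _ _) (le_trans (Nat.le_ceil _) ht)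
      have := hN t hNt
      rw [Real.dist_eq, sub_zero] at this
      show |g F (t + δ) - g F t| ≤ ε/2
      rw [g_sub hF]
      exact le_of_lt this
  -- Baire category on the subtype
  haveI : Nonempty (Icc (0:ℝ) 1) := ⟨⟨0, by norm_num⟩⟩
  haveI : CompleteSpace (Icc (0:ℝ) 1) := isClosed_Icc.completeSpace_coe
  obtain ⟨n, x, hx⟩ := nonempty_interior_of_iUnion_of_closed
    (f := fun n => (Subtype.val ⁻¹' E n : Set (Icc (0:ℝ) 1)))
    (fun n => (hclosed n).preimage continuous_subtype_val)
    (by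
      rw [eq_univ_iff_forall]
      intro y
      obtain ⟨n, hn⟩ := hcover y.1 y.2
      exact mem_iUnion.2 ⟨n, hn⟩)
  rw [mem_interior_iff_mem_nhds, Metric.mem_nhds_iff] at hx
  obtain ⟨r, hr, hball⟩ := hx
  have hxm := x.2
  have hkey : ∀ δ : ℝ, δ ∈ Icc (0:ℝ) 1 → |δ - x.1| < r → δ ∈ E n := by
    intro δ hδ hlt
    exact hball (show (⟨δ, hδ⟩ : Icc (0:ℝ) 1) ∈ Metric.ball x r by
      rw [Metric.mem_ball, Subtype.dist_eq, Real.dist_eq]; exact hlt)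
  set a : ℝ := max (x.1 - r/2) 0 with ha
  set b : ℝ := min (x.1 + r/2) 1 with hb
  have hx0 : (0:ℝ) ≤ x.1 := hxm.1
  have hx1 : x.1 ≤ 1 := hxm.2
  have hab : a < b := by
    rw [ha, hb, max_lt_iff, lt_min_iff, lt_min_iff]
    constructor
    · exact ⟨by linarith, by linarith⟩
    · exact ⟨by linarith, by linarith⟩
  have hmemab : ∀ δ, a ≤ δ → δ ≤ b → δ ∈ E n := by
    intro δ h1 h2
    refine hkey δ ⟨le_trans (le_max_right _ _) h1, le_trans h2 (min_le_right _ _)⟩ ?_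
    have k1 : x.1 - r/2 ≤ δ := le_trans (le_max_left _ _) h1
    have k2 : δ ≤ x.1 + r/2 := le_trans h2 (min_le_left _ _)
    rw [abs_lt]; constructor <;> linarith
  refine ⟨b - a, by linarith, (n:ℝ), ?_⟩
  intro δ h0 hδc t ht
  have hbE : b ∈ E n := hmemab b (le_of_lt hab) le_rfl
  have hbdE : b - δ ∈ E n := hmemab (b - δ) (by linarith) (by linarith)
  have e1 := hEmem hbE t ht
  have e2 := hEmem hbdE (t + δ) (by linarith)
  have hrw : t + δ + (b - δ) = t + b := by ring
  rw [hrw] at e2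
  calc |g F (t + δ) - g F t|
      = |(g F (t + b) - g F t) - (g F (t + b) - g F (t + δ))| := by congr 1; ring
    _ ≤ |g F (t + b) - g F t| + |g F (t + b) - g F (t + δ)| := abs_sub _ _
    _ ≤ ε/2 + ε/2 := add_le_add e1 e2
    _ = ε := by ring

lemma uniform {F : ℝ → ℝ} (hF : Continuous F)
    (havg : ∀ δ ∈ Set.Ioc (0:ℝ) 1,
      Tendsto (fun t => ∫ s in t..(t + δ), F s) atTop (nhds 0))
    {ε : ℝ} (hε : 0 < ε) :
    ∃ T : ℝ, ∀ t, T ≤ t → ∀ δ, 0 ≤ δ → δ ≤ 1 →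
      |g F (t + δ) - g F t| ≤ ε := by
  obtain ⟨c, hc, N, key⟩ := baire hF havg (show 0 < 2*ε/3 by linarith)
  have step : ∀ k : ℕ, ∃ T : ℝ, ∀ t, T ≤ t → ∀ δ, 0 ≤ δ →
      δ ≤ min ((k:ℝ) * c) 1 → |g F (t + δ) - g F t| ≤ ε := by
    intro k
    induction k with
    | zero =>
      refine ⟨N, fun t _ δ h0 h1 => ?_⟩
      have : δ = 0 := le_antisymm (by simpa using h1) h0
      rw [this, add_zero, sub_self, abs_zero]
      positivity
    | succ k ih =>
      obtain ⟨T₀, h₀⟩ := ih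
      set δ₀ : ℝ := min ((k:ℝ) * c) 1 with hδ₀
      have hδ₀0 : 0 ≤ δ₀ := le_min (by positivity) zero_le_one
      have hmid : ∃ T₁ : ℝ, ∀ t, T₁ ≤ t → |g F (t + δ₀) - g F t| ≤ ε/3 := by
        rcases eq_or_lt_of_le hδ₀0 with h | h
        · exact ⟨0, fun t _ => by rw [← h, add_zero, sub_self, abs_zero]; positivity⟩
        · have htend := havg δ₀ ⟨h, min_le_right _ _⟩
          rw [Metric.tendsto_atTop] at htend
          obtain ⟨T₁, hT₁⟩ := htend (ε/3) (by linarith)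
          refine ⟨T₁, fun t ht => ?_⟩
          have := hT₁ t ht
          rw [Real.dist_eq, sub_zero] at this
          rw [g_sub hF]
          exact le_of_lt this
      obtain ⟨T₁, h₁⟩ := hmid
      refine ⟨max (max T₀ T₁) N, fun t ht δ h0 hle => ?_⟩
      have htT₀ : T₀ ≤ t := le_trans (le_trans (le_max_left _ _) (le_max_left _ _)) ht
      have htT₁ : T₁ ≤ t := le_trans (le_trans (le_max_right _ _) (le_max_left _ _)) ht
      have htN : N ≤ t := le_trans (le_max_right _ _) ht
      by_cases hcase : δ ≤ δ₀
      · exact h₀ t htT₀ δ h0 hcase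
      · push_neg at hcase
        have h2 : δ - δ₀ ≤ c := by
          have hmin : min (((k:ℕ)+1:ℝ) * c) 1 ≤ δ₀ + c := by
            rcases le_total ((k:ℝ) * c) 1 with hh | hh
            · calc min (((k:ℕ)+1:ℝ) * c) 1 ≤ ((k:ℝ)+1) * c := min_le_left _ _
                _ = (k:ℝ)*c + c := by ring
                _ ≤ δ₀ + c := by rw [hδ₀, min_eq_left hh]
            · calc min (((k:ℕ)+1:ℝ) * c) 1 ≤ 1 := min_le_right _ _
                _ ≤ δ₀ + c := by rw [hδ₀, min_eq_right hh]; linarith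
          have : δ ≤ min (((k:ℕ)+1:ℝ) * c) 1 := by
            have : ((k+1:ℕ):ℝ) = (k:ℕ) + 1 := by push_cast; ring
            rw [this] at hle
            exact hle
          linarith
        have e1 := h₁ t htT₁
        have e2 := key (δ - δ₀) (by linarith) h2 (t + δ₀) (by linarith)
        have hrw : t + δ₀ + (δ - δ₀) = t + δ := by ring
        rw [hrw] at e2
        calc |g F (t + δ) - g F t|
            = |(g F (t + δ) - g F (t + δ₀)) + (g F (t + δ₀) - g F t)| := by congr 1; ring
          _ ≤ |g F (t + δ) - g F (t + δ₀)| + |g F (t + δ₀) - g F t| := abs_add_le _ _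
          _ ≤ 2*ε/3 + ε/3 := add_le_add e2 e1
          _ = ε := by ring
  obtain ⟨T, hT⟩ := step ⌈1/c⌉₊
  have hk : (1:ℝ) ≤ (⌈1/c⌉₊ : ℝ) * c := by
    have := Nat.le_ceil (1/c)
    calc (1:ℝ) = (1/c) * c := by field_simp
      _ ≤ (⌈1/c⌉₊ : ℝ) * c := by
        apply mul_le_mul_of_nonneg_right this (le_of_lt hc)
  exact ⟨T, fun t ht δ h0 h1 => hT t ht δ h0 (le_min (le_trans h1 hk) h1)⟩

lemma lin {F : ℝ → ℝ} {ε T : ℝ}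
    (hT : ∀ t, T ≤ t → ∀ δ, 0 ≤ δ → δ ≤ 1 → |g F (t + δ) - g F t| ≤ ε) :
    ∀ m : ℕ, ∀ s t : ℝ, T ≤ s → s ≤ t → t ≤ s + m → |g F t - g F s| ≤ ε * m := by
  have hε0 : 0 ≤ ε := le_trans (abs_nonneg _) (hT T le_rfl 0 le_rfl zero_le_one)
  intro m
  induction m with
  | zero =>
    intro s t hTs hst hm
    have : t = s := le_antisymm (by simpa using hm) hst
    rw [this, sub_self, abs_zero]
    simp
  | succ m ih =>
    intro s t hTs hst hm
    by_cases h : t ≤ s + m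
    · have := ih s t hTs hst h
      push_cast at this ⊢
      nlinarith
    · push_neg at h
      have hm' : t ≤ s + m + 1 := by
        have : ((m+1:ℕ):ℝ) = (m:ℝ) + 1 := by push_cast; ring
        rw [this] at hm; linarith
      have hsm : (0:ℝ) ≤ (m:ℝ) := Nat.cast_nonneg m
      have e1 := ih s (s + m) hTs (by linarith) le_rfl
      have e2 := hT (s + (m:ℝ)) (by linarith) (t - (s + m)) (by linarith) (by linarith)
      have hrw : s + (m:ℝ) + (t - (s + m)) = t := by ring
      rw [hrw] at e2
      calc |g F t - g F s|
          = |(g F t - g F (s + m)) + (g F (s + m) - g F s)| := by congr 1; ring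
        _ ≤ |g F t - g F (s + m)| + |g F (s + m) - g F s| := abs_add_le _ _
        _ ≤ ε + ε * m := add_le_add e2 e1
        _ = ε * ((m:ℝ) + 1) := by ring
        _ = ε * ((m+1:ℕ):ℝ) := by push_cast; ring

lemma ibp {F : ℝ → ℝ} (hF : Continuous F) (t : ℝ) :
    ∫ s in (0:ℝ)..t, Real.exp (s - t) * F s
      = Real.exp (-t) * g F t + ∫ s in (0:ℝ)..t, Real.exp (s - t) * (g F t - g F s) := by
  have hcexp : Continuous fun s : ℝ => Real.exp (s - t) :=
    Real.continuous_exp.comp (continuous_id.sub continuous_const)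
  have hu : ∀ x ∈ Set.uIcc (0:ℝ) t, HasDerivAt (fun s => Real.exp (s - t))
      (Real.exp (x - t)) x := fun x _ => by
    simpa using ((hasDerivAt_id x).sub_const t).exp
  have hv : ∀ x ∈ Set.uIcc (0:ℝ) t, HasDerivAt (g F) (F x) x := fun x _ => g_hasDerivAt hF x
  have h1 := intervalIntegral.integral_mul_deriv_eq_deriv_mul hu hv
    (hcexp.intervalIntegrable _ _) (hF.intervalIntegrable _ _)
  have hg0 : g F 0 = 0 := intervalIntegral.integral_same
  have hexp : ∫ s in (0:ℝ)..t, Real.exp (s - t) = 1 - Real.exp (-t) := by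
    rw [intervalIntegral.integral_comp_sub_right (fun x => Real.exp x) t, integral_exp]
    simp
  have hsum : ∫ s in (0:ℝ)..t, Real.exp (s - t) * (g F t - g F s)
      = (1 - Real.exp (-t)) * g F t - ∫ s in (0:ℝ)..t, Real.exp (s - t) * g F s := by
    simp only [mul_sub]
    rw [intervalIntegral.integral_sub (f := fun s => Real.exp (s - t) * g F t)
      (g := fun s => Real.exp (s - t) * g F s) ((hcexp.mul continuous_const).intervalIntegrable _ _)
      ((hcexp.mul (g_cont hF)).intervalIntegrable _ _),
      intervalIntegral.integral_mul_const, hexp]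
  rw [h1, hsum, hg0]
  ring_nf
  rw [Real.exp_zero]
  ring

set_option maxHeartbeats 1000000 in
lemma main {F : ℝ → ℝ} (hF : Continuous F)
    (havg : ∀ δ ∈ Set.Ioc (0:ℝ) 1,
      Tendsto (fun t => ∫ s in t..(t + δ), F s) atTop (nhds 0)) :
    Tendsto (fun t => ∫ s in (0:ℝ)..t, Real.exp (s - t) * F s) atTop (nhds 0) := by
  rw [NormedAddCommGroup.tendsto_nhds_zero]
  intro ε hε
  have hη : (0:ℝ) < ε/8 := by linarith
  obtain ⟨T₀, hT₀⟩ := uniform hF havg hη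
  set η : ℝ := ε/8 with hηdef
  set T : ℝ := max T₀ 0 with hTdef
  have hT0 : (0:ℝ) ≤ T := le_max_right _ _
  have hT : ∀ t, T ≤ t → ∀ δ, 0 ≤ δ → δ ≤ 1 → |g F (t + δ) - g F t| ≤ η :=
    fun t ht => hT₀ t (le_trans (le_max_left _ _) ht)
  have hη0 : (0:ℝ) ≤ η := le_of_lt hη
  have hlin := lin hT
  obtain ⟨B, hB⟩ := (isCompact_Icc (a := (0:ℝ)) (b := T)).exists_bound_of_continuousOn
    (g_cont hF).continuousOn
  have hB0 : (0:ℝ) ≤ B := le_trans (norm_nonneg _) (hB 0 ⟨le_rfl, hT0⟩)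
  have hBabs : ∀ s, 0 ≤ s → s ≤ T → |g F s| ≤ B := by
    intro s h1 h2
    have := hB s ⟨h1, h2⟩
    rwa [Real.norm_eq_abs] at this
  have hgrow : ∀ s u : ℝ, T ≤ s → s ≤ u → |g F u - g F s| ≤ η * (u - s + 1) := by
    intro s u h1 h2
    have h3 : |g F u - g F s| ≤ η * ⌈u - s⌉₊ :=
      hlin ⌈u - s⌉₊ s u h1 h2 (by have := Nat.le_ceil (u - s); linarith)
    have h4 : (⌈u - s⌉₊ : ℝ) ≤ u - s + 1 := by
      have := Nat.ceil_lt_add_one (show (0:ℝ) ≤ u - s by linarith)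
      linarith
    calc |g F u - g F s| ≤ η * ⌈u - s⌉₊ := h3
      _ ≤ η * (u - s + 1) := mul_le_mul_of_nonneg_left h4 hη0
  have hgt : ∀ u, T ≤ u → |g F u| ≤ B + η * (u - T + 1) := by
    intro u hu
    have h1 := hgrow T u le_rfl hu
    have h2 := hBabs T hT0 le_rfl
    have h3 : |g F u| - |g F T| ≤ |g F u - g F T| := abs_sub_abs_le_abs_sub _ _
    linarith
  -- decay of the remainder term
  have hρ0 : Tendsto (fun y : ℝ => Real.exp (-y) * ((T+1) * (2*B + η*(y+1))))
      atTop (nhds 0) := by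
    have t1 : Tendsto (fun y : ℝ => Real.exp (-y)) atTop (nhds 0) :=
      Real.tendsto_exp_neg_atTop_nhds_zero
    have t2 : Tendsto (fun y : ℝ => y * Real.exp (-y)) atTop (nhds 0) := by
      have := Real.tendsto_pow_mul_exp_neg_atTop_nhds_zero 1
      simpa using this
    have comb := (t1.const_mul ((T+1)*(2*B+η))).add (t2.const_mul ((T+1)*η))
    have : ((T+1)*(2*B+η)) * 0 + ((T+1)*η) * 0 = 0 := by ring
    rw [this] at comb
    exact comb.congr fun y => by ring
  have hρcomp : Tendsto (fun t : ℝ => Real.exp (-(t-T)) * ((T+1) * (2*B + η*((t-T)+1))))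
      atTop (nhds 0) := by
    have hsub : Tendsto (fun t : ℝ => t - T) atTop atTop := by
      simpa [sub_eq_add_neg] using tendsto_atTop_add_const_right atTop (-T) tendsto_id
    exact hρ0.comp hsub
  have hev2 := hρcomp.eventually_lt_const (show (0:ℝ) < ε/2 by linarith)
  filter_upwards [eventually_ge_atTop T, hev2] with t htT hρt
  have ht0 : (0:ℝ) ≤ t := le_trans hT0 htT
  show ‖∫ s in (0:ℝ)..t, Real.exp (s - t) * F s‖ < ε
  rw [ibp hF t, Real.norm_eq_abs]
  have hcexp : Continuous fun s : ℝ => Real.exp (s - t) :=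
    Real.continuous_exp.comp (continuous_id.sub continuous_const)
  have hcint : Continuous fun s : ℝ => Real.exp (s - t) * (g F t - g F s) :=
    hcexp.mul (continuous_const.sub (g_cont hF))
  have hsplit : ∫ s in (0:ℝ)..t, Real.exp (s - t) * (g F t - g F s)
      = (∫ s in (0:ℝ)..T, Real.exp (s - t) * (g F t - g F s))
        + ∫ s in T..t, Real.exp (s - t) * (g F t - g F s) :=
    (intervalIntegral.integral_add_adjacent_intervals
      (hcint.intervalIntegrable _ _) (hcint.intervalIntegrable _ _)).symm
  -- bound the tail piece
  have hI2 : |∫ s in T..t, Real.exp (s - t) * (g F t - g F s)| ≤ 2*η := by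
    have habs := intervalIntegral.abs_integral_le_integral_abs
      (μ := volume) (f := fun s => Real.exp (s - t) * (g F t - g F s)) htT
    have hmono : ∀ s ∈ Icc T t, |Real.exp (s - t) * (g F t - g F s)|
        ≤ η * (Real.exp (s - t) * (t - s + 1)) := by
      intro s hs
      have habs2 : |Real.exp (s - t) * (g F t - g F s)| = Real.exp (s - t) * |g F t - g F s| := by
        rw [abs_mul, abs_of_pos (Real.exp_pos _)]
      rw [habs2]
      have h5 := hgrow s t hs.1 hs.2
      have hep := le_of_lt (Real.exp_pos (s - t))
      calc Real.exp (s - t) * |g F t - g F s|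
          ≤ Real.exp (s - t) * (η * (t - s + 1)) := mul_le_mul_of_nonneg_left h5 hep
        _ = η * (Real.exp (s - t) * (t - s + 1)) := by ring
    have hle2 := intervalIntegral.integral_mono_on (μ := volume) htT
      (hcint.abs.intervalIntegrable _ _)
      ((continuous_const.mul (hcexp.mul ((continuous_const.sub continuous_id).add continuous_const))).intervalIntegrable _ _)
      hmono
    have hanti : ∀ x ∈ Set.uIcc T t, HasDerivAt (fun s => Real.exp (s - t) * (t - s + 2))
        (Real.exp (x - t) * (t - x + 1)) x := by
      intro x _
      have h1 : HasDerivAt (fun s => Real.exp (s - t)) (Real.exp (x - t)) x := by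
        simpa using ((hasDerivAt_id x).sub_const t).exp
      have h2 : HasDerivAt (fun s : ℝ => t - s + 2) (-1) x := by
        simpa using (((hasDerivAt_id x).const_sub t).add_const 2)
      have h3 : HasDerivAt (fun s => Real.exp (s - t) * (t - s + 2)) _ x := h1.mul h2
      convert h3 using 1
      ring
    have hcomp : ∫ s in T..t, Real.exp (s - t) * (t - s + 1)
        = Real.exp (t - t) * (t - t + 2) - Real.exp (T - t) * (t - T + 2) :=
      intervalIntegral.integral_eq_sub_of_hasDerivAt hanti
        ((hcexp.mul ((continuous_const.sub continuous_id).add continuous_const)).intervalIntegrable _ _)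
    have hpull : ∫ s in T..t, η * (Real.exp (s - t) * (t - s + 1))
        = η * ∫ s in T..t, Real.exp (s - t) * (t - s + 1) :=
      intervalIntegral.integral_const_mul _ _
    have hpos : 0 ≤ Real.exp (T - t) * (t - T + 2) :=
      mul_nonneg (le_of_lt (Real.exp_pos _)) (by linarith)
    have : ∫ s in T..t, Real.exp (s - t) * (t - s + 1) ≤ 2 := by
      rw [hcomp, sub_self, Real.exp_zero]
      linarith
    calc |∫ s in T..t, Real.exp (s - t) * (g F t - g F s)|
        ≤ ∫ s in T..t, |Real.exp (s - t) * (g F t - g F s)| := habs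
      _ ≤ ∫ s in T..t, η * (Real.exp (s - t) * (t - s + 1)) := hle2
      _ = η * ∫ s in T..t, Real.exp (s - t) * (t - s + 1) := hpull
      _ ≤ η * 2 := mul_le_mul_of_nonneg_left this hη0
      _ = 2*η := by ring
  -- bound the head piece
  have hI1 : ‖∫ s in (0:ℝ)..T, Real.exp (s - t) * (g F t - g F s)‖
      ≤ (Real.exp (T - t) * (2*B + η * (t - T + 1))) * |T - 0| := by
    apply intervalIntegral.norm_integral_le_of_norm_le_const
    intro s hs
    rw [Set.uIoc_of_le hT0] at hs
    have hs0 : 0 ≤ s := le_of_lt hs.1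
    have hsT : s ≤ T := hs.2
    rw [Real.norm_eq_abs, abs_mul, abs_of_pos (Real.exp_pos _)]
    have e1 : Real.exp (s - t) ≤ Real.exp (T - t) := Real.exp_le_exp.2 (by linarith)
    have e2 : |g F t - g F s| ≤ 2*B + η * (t - T + 1) := by
      have h1 := hgt t htT
      have h2 := hBabs s hs0 hsT
      have h3 : |g F t - g F s| ≤ |g F t| + |g F s| := abs_sub _ _
      linarith
    exact mul_le_mul e1 e2 (abs_nonneg _) (le_of_lt (Real.exp_pos _))
  have hE0 : |Real.exp (-t) * g F t| ≤ Real.exp (T - t) * (B + η * (t - T + 1)) := by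
    rw [abs_mul, abs_of_pos (Real.exp_pos _)]
    exact mul_le_mul (Real.exp_le_exp.2 (by linarith)) (hgt t htT) (abs_nonneg _)
      (le_of_lt (Real.exp_pos _))
  rw [hsplit]
  have htri : |Real.exp (-t) * g F t
      + ((∫ s in (0:ℝ)..T, Real.exp (s - t) * (g F t - g F s))
        + ∫ s in T..t, Real.exp (s - t) * (g F t - g F s))|
      ≤ |Real.exp (-t) * g F t| + |∫ s in (0:ℝ)..T, Real.exp (s - t) * (g F t - g F s)|
        + |∫ s in T..t, Real.exp (s - t) * (g F t - g F s)| := by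
    calc _ ≤ |Real.exp (-t) * g F t| + |(∫ s in (0:ℝ)..T, Real.exp (s - t) * (g F t - g F s))
        + ∫ s in T..t, Real.exp (s - t) * (g F t - g F s)| := abs_add_le _ _
      _ ≤ _ := by have := abs_add_le (∫ s in (0:ℝ)..T, Real.exp (s - t) * (g F t - g F s))
                    (∫ s in T..t, Real.exp (s - t) * (g F t - g F s))
                  linarith
  have hI1' : |∫ s in (0:ℝ)..T, Real.exp (s - t) * (g F t - g F s)|
      ≤ (Real.exp (T - t) * (2*B + η * (t - T + 1))) * T := by
    have := hI1
    rw [Real.norm_eq_abs, sub_zero, abs_of_nonneg hT0] at this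
    exact this
  have hρle : Real.exp (T - t) * (B + η * (t - T + 1))
      + (Real.exp (T - t) * (2*B + η * (t - T + 1))) * T
      ≤ Real.exp (-(t-T)) * ((T+1) * (2*B + η*((t-T)+1))) := by
    rw [neg_sub]
    have hexppos := le_of_lt (Real.exp_pos (T - t))
    nlinarith [mul_nonneg hexppos hB0]
  have hrem : Real.exp (-(t-T)) * ((T+1) * (2*B + η*((t-T)+1))) < ε/2 := hρt
  have h2η : 2*η = ε/4 := by rw [hηdef]; ring
  linarith [htri, hE0, hI1', hI2]

end PerturbedAux

/-- If the sectional averages of a continuous `f` over `[t, t+δ]` tend to zero for every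
`δ ∈ (0,1]`, then the solution `u(t) = ∫_0^t e^{-(t-s)} f(s) ds` of `u' = -u + f`, `u(0) = 0`,
tends to zero as `t → ∞`. -/
theorem perturbedODE_tendsto_zero_of_avg
    (f : ℝ → ℝ) (hf : ContinuousOn f (Set.Ici (0:ℝ)))
    (havg : ∀ δ ∈ Set.Ioc (0:ℝ) 1,
      Tendsto (fun t => ∫ s in t..(t + δ), f s) atTop (nhds 0)) :
    Tendsto (fun t => ∫ s in (0:ℝ)..t, Real.exp (-(t - s)) * f s) atTop (nhds 0) := by
  set F : ℝ → ℝ := fun s => f (max s 0) with hFdef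
  have hFc : Continuous F :=
    hf.comp_continuous (continuous_id.max continuous_const) (fun x => Set.mem_Ici.2 (le_max_right _ _))
  have hFeq : ∀ s : ℝ, 0 ≤ s → F s = f s := fun s hs => by
    rw [hFdef]; simp [max_eq_left hs]
  have havg' : ∀ δ ∈ Set.Ioc (0:ℝ) 1,
      Tendsto (fun t => ∫ s in t..(t + δ), F s) atTop (nhds 0) := by
    intro δ hδ
    refine (havg δ hδ).congr' ?_
    filter_upwards [eventually_ge_atTop (0:ℝ)] with t ht
    refine intervalIntegral.integral_congr fun s hs => ?_
    rw [Set.uIcc_of_le (by linarith [hδ.1.le] : t ≤ t + δ)] at hs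
    exact (hFeq s (le_trans ht hs.1)).symm
  have hmain := PerturbedAux.main hFc havg'
  refine hmain.congr' ?_
  filter_upwards [eventually_ge_atTop (0:ℝ)] with t ht
  refine intervalIntegral.integral_congr fun s hs => ?_
  rw [Set.uIcc_of_le ht] at hs
  rw [hFeq s hs.1, neg_sub]
end

section
/- Let f : [0,∞) → ℝ be continuous and define u(t) = ∫_0^t e^{-(t-s)} f(s) ds for t ≥ 0 (so that u is the solution of u'(t) = -u(t) + f(t) for t > 0 with u(0) = 0). If u(t) → 0 as t → ∞, then for every δ ∈ (0,1] one has ∫_t^{t+δ} f(s) ds → 0 as t → ∞. -/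
open MeasureTheory Filter Set

/-- If the solution `u(t) = ∫_0^t e^{-(t-s)} f(s) ds` of `u' = -u + f`, `u(0) = 0`, tends to
zero as `t → ∞`, then for every `δ ∈ (0,1]` the sectional average `∫_t^{t+δ} f(s) ds` tends
to zero as `t → ∞`. -/
theorem avg_tendsto_zero_of_perturbedODE
    (f : ℝ → ℝ) (hf : ContinuousOn f (Set.Ici (0:ℝ)))
    (hu : Tendsto (fun t => ∫ s in (0:ℝ)..t, Real.exp (-(t - s)) * f s) atTop (nhds 0)) :
    ∀ δ ∈ Set.Ioc (0:ℝ) 1,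
      Tendsto (fun t => ∫ s in t..(t + δ), f s) atTop (nhds 0) := by
  intro δ hδ
  obtain ⟨hδ0, hδ1⟩ := hδ
  set g : ℝ → ℝ := fun s => Real.exp s * f s with hg_def
  have hg : ContinuousOn g (Set.Ici 0) :=
    Real.continuous_exp.continuousOn.mul hf
  set v : ℝ → ℝ := fun t => ∫ s in (0:ℝ)..t, g s with hv_def
  set u : ℝ → ℝ := fun t => Real.exp (-t) * v t with hu_def
  have huv : ∀ t, (∫ s in (0:ℝ)..t, Real.exp (-(t - s)) * f s) = u t := by
    intro t
    have h1 : ∀ s, Real.exp (-(t - s)) * f s = Real.exp (-t) * g s := by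
      intro s
      rw [hg_def, show -(t - s) = s + (-t) by ring, Real.exp_add]
      ring
    simp only [h1]
    rw [intervalIntegral.integral_const_mul]
  have hu' : Tendsto u atTop (nhds 0) := hu.congr huv
  have hginte : ∀ a b : ℝ, 0 ≤ a → 0 ≤ b → IntervalIntegrable g volume a b := by
    intro a b ha hb
    refine (hg.mono ?_).intervalIntegrable
    intro x hx
    exact le_trans (le_min ha hb) hx.1
  have hvderiv : ∀ x : ℝ, 0 < x → HasDerivAt v (g x) x := by
    intro x hx
    have hcont : ContinuousAt g x :=
      hg.continuousAt (Filter.mem_of_superset (isOpen_Ioi.mem_nhds hx) Ioi_subset_Ici_self)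
    have hmeas : StronglyMeasurableAtFilter g (nhds x) volume :=
      ContinuousOn.stronglyMeasurableAtFilter isOpen_Ioi
        (hg.mono Ioi_subset_Ici_self) x hx
    exact intervalIntegral.integral_hasDerivAt_right (hginte 0 x le_rfl hx.le) hmeas hcont
  have huderiv : ∀ x : ℝ, 0 < x → HasDerivAt u (-u x + f x) x := by
    intro x hx
    have h1 : HasDerivAt (fun t : ℝ => Real.exp (-t)) (-Real.exp (-x)) x := by
      simpa [Function.comp_def] using (Real.hasDerivAt_exp (-x)).comp x (hasDerivAt_neg x)
    have h2 := h1.mul (hvderiv x hx)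
    have h3 : -Real.exp (-x) * v x + Real.exp (-x) * g x = -u x + f x := by
      have he : Real.exp (-x) * Real.exp x = 1 := by
        rw [← Real.exp_add]; simp
      rw [hu_def, hg_def]
      simp only []
      rw [← mul_assoc, he]
      ring
    rw [h3] at h2
    exact h2
  have key : ∀ t : ℝ, 1 ≤ t →
      (∫ s in t..(t + δ), f s) = (u (t + δ) - u t) + ∫ s in t..(t + δ), u s := by
    intro t ht
    have hsub : Set.uIcc t (t + δ) ⊆ Set.Ioi 0 := by
      rw [Set.uIcc_of_le (by linarith)]
      intro x hx
      have := hx.1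
      simp only [Set.mem_Ioi]
      linarith
    have hucont : ContinuousOn u (Set.uIcc t (t + δ)) := fun x hx =>
      ((huderiv x (hsub hx)).continuousAt).continuousWithinAt
    have hfint : IntervalIntegrable f volume t (t + δ) :=
      (hf.mono (hsub.trans Ioi_subset_Ici_self)).intervalIntegrable
    have huint : IntervalIntegrable u volume t (t + δ) := hucont.intervalIntegrable
    have hder : ∀ x ∈ Set.uIcc t (t + δ), HasDerivAt u (-u x + f x) x :=
      fun x hx => huderiv x (hsub hx)
    have hint : IntervalIntegrable (fun x => -u x + f x) volume t (t + δ) :=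
      huint.neg.add hfint
    have heq := intervalIntegral.integral_eq_sub_of_hasDerivAt hder hint
    have h4 : (∫ y in t..(t + δ), (-u y + f y)) =
        (∫ y in t..(t + δ), -u y) + ∫ y in t..(t + δ), f y :=
      intervalIntegral.integral_add huint.neg hfint
    have h5 : (∫ y in t..(t + δ), -u y) = -∫ y in t..(t + δ), u y :=
      intervalIntegral.integral_neg
    linarith [heq, h4, h5]
  have hA : Tendsto (fun t => u (t + δ) - u t) atTop (nhds 0) := by
    have h1 : Tendsto (fun t => u (t + δ)) atTop (nhds 0) :=
      hu'.comp (tendsto_atTop_add_const_right atTop δ tendsto_id)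
    simpa using h1.sub hu'
  have hB : Tendsto (fun t => ∫ s in t..(t + δ), u s) atTop (nhds 0) := by
    rw [Metric.tendsto_atTop]
    intro ε hε
    obtain ⟨N, hN⟩ := Metric.tendsto_atTop.mp hu' (ε / 2) (by positivity)
    refine ⟨max N 1, fun t ht => ?_⟩
    have htN : N ≤ t := le_trans (le_max_left _ _) ht
    have hbound : ∀ x ∈ Set.uIoc t (t + δ), ‖u x‖ ≤ ε / 2 := by
      intro x hx
      rw [Set.uIoc_of_le (by linarith)] at hx
      have hNx : N ≤ x := le_of_lt (lt_of_le_of_lt htN hx.1)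
      have := hN x hNx
      rw [Real.dist_eq, sub_zero] at this
      exact le_of_lt this
    have hle := intervalIntegral.norm_integral_le_of_norm_le_const hbound
    rw [Real.dist_eq, sub_zero]
    have habs : |t + δ - t| = δ := by
      rw [show t + δ - t = δ by ring, abs_of_pos hδ0]
    rw [habs] at hle
    calc |∫ s in t..(t + δ), u s| ≤ ε / 2 * δ := hle
      _ ≤ ε / 2 * 1 := by nlinarith
      _ < ε := by linarith
  have hsum : Tendsto (fun t => (u (t + δ) - u t) + ∫ s in t..(t + δ), u s)
      atTop (nhds 0) := by
    simpa using hA.add hB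
  refine hsum.congr' ?_
  filter_upwards [eventually_ge_atTop (1:ℝ)] with t ht
  exact (key t ht).symm
end

section
/- Let β > 0, let f : [0,∞) → ℝ be continuous, and define u(t) = ∫_0^t e^{-β(t-s)} f(s) ds for t ≥ 0 (so that u solves u'(t) = -β u(t) + f(t) with u(0) = 0). Then u(t) → 0 as t → ∞ if and only if for every δ ∈ (0,1] one has ∫_t^{t+δ} f(s) ds → 0 as t → ∞. -/
open MeasureTheory Filter Set

lemma unif_small (P : ℝ → ℝ) (hP : Continuous P)
    (h : ∀ δ ∈ Set.Ioc (0:ℝ) 1, Tendsto (fun t => P (t+δ) - P t) atTop (nhds 0))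
    {ε : ℝ} (hε : 0 < ε) :
    ∃ n₀ : ℕ, ∃ w : ℝ, 0 < w ∧ w ≤ 1 ∧
      ∀ δ ∈ Set.Icc (0:ℝ) w, ∀ t : ℝ, (n₀:ℝ) + 1 ≤ t → |P (t+δ) - P t| ≤ ε/2 := by
  set E : ℕ → Set (Set.Icc (0:ℝ) 1) :=
    fun n => {δ | ∀ t : ℝ, (n:ℝ) ≤ t → |P (t + δ.1) - P t| ≤ ε/4} with hE
  have hclosed : ∀ n, IsClosed (E n) := by
    intro n
    have : E n = ⋂ (t : ℝ) (_ : (n:ℝ) ≤ t),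
        {δ : Set.Icc (0:ℝ) 1 | |P (t + δ.1) - P t| ≤ ε/4} := by
      ext δ; simp [hE]
    rw [this]
    refine isClosed_iInter fun t => isClosed_iInter fun _ => ?_
    exact isClosed_le (continuous_abs.comp ((hP.comp
      (continuous_const.add continuous_subtype_val)).sub continuous_const)) continuous_const
  have hcover : (⋃ n, E n) = univ := by
    rw [Set.eq_univ_iff_forall]
    intro δ
    rcases eq_or_lt_of_le δ.2.1 with h0 | hpos
    · refine Set.mem_iUnion.mpr ⟨0, fun t _ => ?_⟩
      rw [← h0]
      simp [le_of_lt (by positivity : (0:ℝ) < ε/4)]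
    · obtain ⟨N, hN⟩ := Metric.tendsto_atTop.mp (h δ.1 ⟨hpos, δ.2.2⟩) (ε/4) (by positivity)
      obtain ⟨n, hn⟩ := exists_nat_ge N
      refine Set.mem_iUnion.mpr ⟨n, fun t ht => ?_⟩
      have := hN t (le_trans hn ht)
      rw [Real.dist_0_eq_abs] at this
      exact le_of_lt this
  obtain ⟨n₀, δ₀, hδ₀⟩ := nonempty_interior_of_iUnion_of_closed hclosed hcover
  obtain ⟨r, hr, hball⟩ := Metric.mem_nhds_iff.mp (mem_interior_iff_mem_nhds.mp hδ₀)
  set m : ℝ := min (r/2) (1/2) with hm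
  have hm0 : 0 < m := by positivity
  have hm2 : m ≤ 1/2 := min_le_right _ _
  have hmr : m < r := lt_of_le_of_lt (min_le_left _ _) (by linarith)
  set c : ℝ := δ₀.1 with hc
  have hc0 : 0 ≤ c := δ₀.2.1
  have hc1 : c ≤ 1 := δ₀.2.2
  set a : ℝ := max 0 (c - m) with ha
  set b : ℝ := min 1 (c + m) with hb
  have ha0 : 0 ≤ a := le_max_left _ _
  have hb1 : b ≤ 1 := min_le_left _ _
  have hab : a < b := by
    rw [ha, hb]
    apply max_lt <;> [skip; skip] <;> apply lt_min <;> linarith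
  have hkey : ∀ x ∈ Set.Icc a b, ∀ t : ℝ, (n₀:ℝ) ≤ t → |P (t + x) - P t| ≤ ε/4 := by
    intro x hx t ht
    have hx01 : x ∈ Set.Icc (0:ℝ) 1 := ⟨le_trans ha0 hx.1, le_trans hx.2 hb1⟩
    have hmem : (⟨x, hx01⟩ : Set.Icc (0:ℝ) 1) ∈ E n₀ := by
      apply hball
      rw [Metric.mem_ball, Subtype.dist_eq, Real.dist_eq]
      have h1 : c - m ≤ x := le_trans (le_max_right _ _) hx.1
      have h2 : x ≤ c + m := le_trans hx.2 (min_le_right _ _)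
      show |x - c| < r
      rw [abs_lt]
      constructor <;> linarith [hmr]
    exact hmem t ht
  refine ⟨n₀, b - a, by linarith, by linarith, ?_⟩
  intro δ hδ t ht
  have hta : (n₀:ℝ) ≤ t - a := by
    have : a ≤ 1 := le_trans (le_of_lt hab) hb1
    linarith
  have h1 := hkey (a + δ) ⟨by linarith [hδ.1], by linarith [hδ.2]⟩ (t - a) hta
  have h2 := hkey a ⟨le_refl a, le_of_lt hab⟩ (t - a) hta
  have e1 : t - a + (a + δ) = t + δ := by ring
  have e2 : t - a + a = t := by ring
  rw [e1] at h1; rw [e2] at h2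
  calc |P (t+δ) - P t| = |(P (t+δ) - P (t-a)) - (P t - P (t-a))| := by ring_nf
    _ ≤ |P (t+δ) - P (t-a)| + |P t - P (t-a)| := abs_sub _ _
    _ ≤ ε/4 + ε/4 := add_le_add h1 h2
    _ = ε/2 := by ring

lemma unif (P : ℝ → ℝ) (hP : Continuous P)
    (h : ∀ δ ∈ Set.Ioc (0:ℝ) 1, Tendsto (fun t => P (t+δ) - P t) atTop (nhds 0))
    {ε : ℝ} (hε : 0 < ε) :
    ∃ T : ℝ, ∀ t ≥ T, ∀ δ ∈ Set.Icc (0:ℝ) 1, |P (t+δ) - P t| ≤ ε := by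
  obtain ⟨n₀, w, hw0, hw1, hsmall⟩ := unif_small P hP h hε
  set N : ℕ := ⌊1/w⌋₊ with hN
  have hgrid : ∀ j ∈ Finset.Icc 1 N, (j:ℝ) * w ∈ Set.Ioc (0:ℝ) 1 := by
    intro j hj
    obtain ⟨hj1, hjN⟩ := Finset.mem_Icc.mp hj
    constructor
    · have : (1:ℝ) ≤ (j:ℝ) := by exact_mod_cast hj1
      nlinarith
    · have h1 : (j:ℝ) ≤ (N:ℝ) := by exact_mod_cast hjN
      have h2 : (N:ℝ) ≤ 1/w := Nat.floor_le (by positivity)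
      calc (j:ℝ) * w ≤ (1/w) * w := by nlinarith
        _ = 1 := by field_simp
  have hev : ∀ᶠ t in atTop, ∀ j ∈ (↑(Finset.Icc 1 N) : Set ℕ), |P (t + (j:ℝ)*w) - P t| ≤ ε/2 := by
    rw [eventually_all_finite (Finset.Icc 1 N).finite_toSet]
    intro j hj
    rw [Finset.mem_coe] at hj
    obtain ⟨M, hM⟩ := Metric.tendsto_atTop.mp (h ((j:ℝ)*w) (hgrid j hj)) (ε/2) (by positivity)
    filter_upwards [eventually_ge_atTop M] with t ht
    have := hM t ht
    rw [Real.dist_0_eq_abs] at this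
    exact le_of_lt this
  obtain ⟨T₁, hT₁⟩ := eventually_atTop.mp (hev.and (eventually_ge_atTop ((n₀:ℝ)+1)))
  refine ⟨T₁, fun t ht δ hδ => ?_⟩
  obtain ⟨hgridT', htn⟩ := hT₁ t ht
  have hgridT : ∀ j ∈ Finset.Icc 1 N, |P (t + (j:ℝ)*w) - P t| ≤ ε/2 :=
    fun j hj => hgridT' j (Finset.mem_coe.mpr hj)
  rcases le_or_gt δ w with hδw | hδw
  · have := hsmall δ ⟨hδ.1, hδw⟩ t htn
    linarith
  · set n : ℕ := ⌊δ/w⌋₊ with hn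
    have hn1 : 1 ≤ n := Nat.le_floor (by rw [le_div_iff₀ hw0]; push_cast; linarith)
    have hnN : n ≤ N := Nat.floor_le_floor (by gcongr; exact hδ.2)
    have hg1 : (n:ℝ) * w ≤ δ := by
      have := Nat.floor_le (div_nonneg hδ.1 (le_of_lt hw0))
      rw [← hn] at this
      calc (n:ℝ) * w ≤ (δ/w) * w := by nlinarith
        _ = δ := by field_simp
    have hg2 : δ - (n:ℝ)*w ≤ w := by
      have := Nat.lt_floor_add_one (δ/w)
      rw [← hn] at this
      have h2 : δ/w * w < ((n:ℝ)+1) * w := by nlinarith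
      rw [div_mul_cancel₀ _ (ne_of_gt hw0)] at h2
      linarith
    have hbig := hgridT n (Finset.mem_Icc.mpr ⟨hn1, hnN⟩)
    have h1n : (1:ℝ) ≤ (n:ℝ) := by exact_mod_cast hn1
    have hrem := hsmall (δ - (n:ℝ)*w) ⟨by linarith, hg2⟩ (t + (n:ℝ)*w)
      (by nlinarith)
    have e1 : t + (n:ℝ)*w + (δ - (n:ℝ)*w) = t + δ := by ring
    rw [e1] at hrem
    calc |P (t+δ) - P t| = |(P (t + (n:ℝ)*w) - P t) + (P (t+δ) - P (t + (n:ℝ)*w))| := by ring_nf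
      _ ≤ |P (t + (n:ℝ)*w) - P t| + |P (t+δ) - P (t + (n:ℝ)*w)| := abs_add_le _ _
      _ ≤ ε/2 + ε/2 := add_le_add hbig hrem
      _ = ε := by ring

lemma growth (P : ℝ → ℝ) (T ε' : ℝ) (hε' : 0 ≤ ε')
    (hT : ∀ t ≥ T, ∀ δ ∈ Set.Icc (0:ℝ) 1, |P (t+δ) - P t| ≤ ε') :
    ∀ s t : ℝ, T ≤ s → s ≤ t → |P t - P s| ≤ ε' * (t - s + 1) := by
  have key : ∀ n : ℕ, ∀ s t : ℝ, T ≤ s → s ≤ t → t ≤ s + (n:ℝ) + 1 →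
      |P t - P s| ≤ ε' * (t - s + 1) := by
    intro n
    induction n with
    | zero =>
      intro s t hTs hst htn
      have := hT s hTs (t - s) ⟨by linarith, by push_cast at htn; linarith⟩
      rw [show s + (t - s) = t by ring] at this
      nlinarith
    | succ n ih =>
      intro s t hTs hst htn
      rcases le_or_gt t (s + (n:ℝ) + 1) with hc | hc
      · exact ih s t hTs hst hc
      · have h1 := hT s hTs 1 ⟨zero_le_one, le_refl 1⟩
        have h1n : (0:ℝ) ≤ (n:ℝ) := Nat.cast_nonneg n
        have h2 := ih (s+1) t (by linarith) (by linarith) (by push_cast at htn ⊢; linarith)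
        calc |P t - P s| = |(P (s+1) - P s) + (P t - P (s+1))| := by ring_nf
          _ ≤ |P (s+1) - P s| + |P t - P (s+1)| := abs_add_le _ _
          _ ≤ ε' + ε' * (t - (s+1) + 1) := add_le_add h1 h2
          _ = ε' * (t - s + 1) := by ring
  intro s t hTs hst
  exact key ⌈t - s⌉₊ s t hTs hst (by
    have := Nat.le_ceil (t - s)
    linarith)

lemma aux_mpr (β : ℝ) (hβ : 0 < β) (g : ℝ → ℝ) (hg : Continuous g)
    (h : ∀ δ ∈ Set.Ioc (0:ℝ) 1, Tendsto (fun t => ∫ s in t..(t+δ), g s) atTop (nhds 0)) :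
    Tendsto (fun t => ∫ s in (0:ℝ)..t, Real.exp (-(β * (t - s))) * g s) atTop (nhds 0) := by
  set P : ℝ → ℝ := fun x => ∫ s in (0:ℝ)..x, g s with hP
  have hPd : ∀ x : ℝ, HasDerivAt P (g x) x := fun x =>
    intervalIntegral.integral_hasDerivAt_right (hg.intervalIntegrable _ _)
      (hg.stronglyMeasurableAtFilter _ _) hg.continuousAt
  have hPc : Continuous P := continuous_iff_continuousAt.mpr fun x => (hPd x).continuousAt
  have hsec : ∀ t δ : ℝ, P (t+δ) - P t = ∫ s in t..(t+δ), g s := fun t δ =>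
    intervalIntegral.integral_interval_sub_left (hg.intervalIntegrable _ _)
      (hg.intervalIntegrable _ _)
  have h' : ∀ δ ∈ Set.Ioc (0:ℝ) 1, Tendsto (fun t => P (t+δ) - P t) atTop (nhds 0) :=
    fun δ hδ => (h δ hδ).congr fun t => (hsec t δ).symm
  rw [NormedAddCommGroup.tendsto_nhds_zero]
  intro ε hε
  set c : ℝ := 2/β + 1 with hc
  have hc0 : 0 < c := by positivity
  -- key exponential estimate
  have keyexp : ∀ r : ℝ, 0 ≤ r → (r + 1) * Real.exp (-(β * r)) ≤ c * Real.exp (-(β/2 * r)) := by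
    intro r hr
    have e1 : β*r/2 + 1 ≤ Real.exp (β*r/2) := Real.add_one_le_exp _
    have e2 : (1:ℝ) ≤ Real.exp (β*r/2) := Real.one_le_exp (by positivity)
    have e3 : r + 1 ≤ c * Real.exp (β*r/2) := by
      have h3 : c * (β*r/2+1) ≤ c * Real.exp (β*r/2) :=
        mul_le_mul_of_nonneg_left e1 hc0.le
      have hX : c * (β*r/2+1) = (2/β)*(β*r/2) + 2/β + β*r/2 + 1 := by rw [hc]; ring
      have hY : (2/β)*(β*r/2) = r := by field_simp
      have h5 : 0 ≤ 2/β := by positivity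
      have h6 : 0 ≤ β*r/2 := by positivity
      linarith
    have e4 : (0:ℝ) < Real.exp (-(β * r)) := Real.exp_pos _
    calc (r + 1) * Real.exp (-(β * r)) ≤ (c * Real.exp (β*r/2)) * Real.exp (-(β * r)) := by
          nlinarith
      _ = c * Real.exp (-(β/2 * r)) := by
          rw [mul_assoc, ← Real.exp_add]; ring_nf
  set ε' : ℝ := ε / (6 * c) with hε'def
  have hε'0 : 0 < ε' := by positivity
  obtain ⟨T, hT⟩ := unif P hPc h' hε'0
  set T₀ : ℝ := max T 0 with hT₀
  have hT₀T : T ≤ T₀ := le_max_left _ _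
  have hT₀0 : (0:ℝ) ≤ T₀ := le_max_right _ _
  have hG : ∀ s t : ℝ, T ≤ s → s ≤ t → |P t - P s| ≤ ε' * (t - s + 1) :=
    growth P T ε' hε'0.le hT
  set u₀ : ℝ := ∫ s in (0:ℝ)..T₀, Real.exp (-(β * (T₀ - s))) * g s with hu₀
  -- decay of exponential term
  have hdecay : Tendsto (fun t : ℝ => Real.exp (-(β * (t - T₀))) * u₀) atTop (nhds 0) := by
    have h1 : Tendsto (fun t : ℝ => β * (t - T₀)) atTop atTop := by
      apply Tendsto.const_mul_atTop hβ
      exact tendsto_atTop_add_const_right _ (-T₀) tendsto_id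
    have h2 : Tendsto (fun t : ℝ => -(β * (t - T₀))) atTop atBot :=
      tendsto_neg_atBot_iff.mpr h1
    have h3 : Tendsto (fun t : ℝ => Real.exp (-(β * (t - T₀)))) atTop (nhds 0) :=
      Real.tendsto_exp_atBot.comp h2
    simpa using h3.mul_const u₀
  have hdecay' := (NormedAddCommGroup.tendsto_nhds_zero.mp hdecay) (ε/2) (by positivity)
  filter_upwards [eventually_ge_atTop T₀, hdecay'] with t ht hdec
  -- decomposition of u t
  have cont1 : ∀ a : ℝ, Continuous (fun s => Real.exp (-(β * (a - s))) * g s) := by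
    intro a; fun_prop
  have hsplit : (∫ s in (0:ℝ)..t, Real.exp (-(β * (t - s))) * g s) =
      (∫ s in (0:ℝ)..T₀, Real.exp (-(β * (t - s))) * g s) +
      ∫ s in T₀..t, Real.exp (-(β * (t - s))) * g s :=
    (intervalIntegral.integral_add_adjacent_intervals
      ((cont1 t).intervalIntegrable _ _) ((cont1 t).intervalIntegrable _ _)).symm
  have hfirst : (∫ s in (0:ℝ)..T₀, Real.exp (-(β * (t - s))) * g s) =
      Real.exp (-(β * (t - T₀))) * u₀ := by
    rw [hu₀, ← intervalIntegral.integral_const_mul]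
    apply intervalIntegral.integral_congr
    intro s _
    show Real.exp (-(β * (t - s))) * g s =
      Real.exp (-(β * (t - T₀))) * (Real.exp (-(β * (T₀ - s))) * g s)
    rw [← mul_assoc, ← Real.exp_add,
      show -(β * (t - T₀)) + -(β * (T₀ - s)) = -(β * (t - s)) by ring]
  -- integration by parts via FTC
  have hFTC : (∫ s in T₀..t, (Real.exp (-(β * (t - s))) * β * (P s - P t) +
        Real.exp (-(β * (t - s))) * g s)) =
      Real.exp (-(β * (t - T₀))) * (P t - P T₀) := by
    have hder : ∀ s ∈ uIcc T₀ t, HasDerivAt (fun y => Real.exp (-(β * (t - y))) * (P y - P t))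
        (Real.exp (-(β * (t - s))) * β * (P s - P t) + Real.exp (-(β * (t - s))) * g s) s := by
      intro s _
      have hi : HasDerivAt (fun y : ℝ => -(β * (t - y))) β s := by
        have base : HasDerivAt (fun y : ℝ => β * y - β * t) β s := by
          simpa using ((hasDerivAt_id s).const_mul β).sub_const (β * t)
        have hfun : (fun y : ℝ => -(β * (t - y))) = (fun y : ℝ => β * y - β * t) := by
          funext y; ring
        rw [hfun]; exact base
      have hexp := (Real.hasDerivAt_exp _).comp s hi
      have hlin : HasDerivAt (fun y => P y - P t) (g s) s := (hPd s).sub_const _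
      have := hexp.mul hlin
      convert this using 1 <;> rfl
    have hint : IntervalIntegrable (fun s => Real.exp (-(β * (t - s))) * β * (P s - P t) +
        Real.exp (-(β * (t - s))) * g s) volume T₀ t := by
      apply Continuous.intervalIntegrable; fun_prop
    rw [intervalIntegral.integral_eq_sub_of_hasDerivAt hder hint]
    simp
    ring
  have hintA : IntervalIntegrable (fun s => Real.exp (-(β * (t - s))) * β * (P s - P t))
      volume T₀ t := by apply Continuous.intervalIntegrable; fun_prop
  have hintB : IntervalIntegrable (fun s => Real.exp (-(β * (t - s))) * g s) volume T₀ t :=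
    (cont1 t).intervalIntegrable _ _
  have hIeq : (∫ s in T₀..t, Real.exp (-(β * (t - s))) * g s) =
      Real.exp (-(β * (t - T₀))) * (P t - P T₀) -
      ∫ s in T₀..t, Real.exp (-(β * (t - s))) * β * (P s - P t) := by
    rw [← hFTC, intervalIntegral.integral_add hintA hintB]; ring
  -- bound the IBP remainder integral
  have hbound1 : |∫ s in T₀..t, Real.exp (-(β * (t - s))) * β * (P s - P t)| ≤ 2 * ε' * c := by
    calc |∫ s in T₀..t, Real.exp (-(β * (t - s))) * β * (P s - P t)|
        ≤ ∫ s in T₀..t, |Real.exp (-(β * (t - s))) * β * (P s - P t)| :=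
          intervalIntegral.abs_integral_le_integral_abs ht
      _ ≤ ∫ s in T₀..t, (β * (ε' * c)) * Real.exp (-(β/2 * (t - s))) := by
          apply intervalIntegral.integral_mono_on ht
          · exact (Continuous.abs (by fun_prop)).intervalIntegrable _ _
          · exact (Continuous.intervalIntegrable (by fun_prop)) _ _
          · intro s hs
            have hs1 : T₀ ≤ s := hs.1
            have hs2 : s ≤ t := hs.2
            have hPb : |P s - P t| ≤ ε' * ((t - s) + 1) := by
              rw [abs_sub_comm]
              exact hG s t (le_trans hT₀T hs1) hs2
            have hke := keyexp (t - s) (by linarith)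
            have he : (0:ℝ) < Real.exp (-(β * (t - s))) := Real.exp_pos _
            rw [abs_mul, abs_mul, Real.abs_exp, abs_of_pos hβ]
            calc Real.exp (-(β * (t - s))) * β * |P s - P t|
                ≤ Real.exp (-(β * (t - s))) * β * (ε' * ((t - s) + 1)) :=
                  mul_le_mul_of_nonneg_left hPb (by positivity)
              _ = (β * ε') * (((t - s) + 1) * Real.exp (-(β * (t - s)))) := by ring
              _ ≤ (β * ε') * (c * Real.exp (-(β/2 * (t - s)))) :=
                  mul_le_mul_of_nonneg_left hke (by positivity)
              _ = (β * (ε' * c)) * Real.exp (-(β/2 * (t - s))) := by ring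
      _ ≤ 2 * ε' * c := by
          have hφ : ∀ s ∈ uIcc T₀ t, HasDerivAt (fun y => (2/β) * Real.exp (-(β/2 * (t - y))))
              (Real.exp (-(β/2 * (t - s)))) s := by
            intro s _
            have hi : HasDerivAt (fun y : ℝ => -(β/2 * (t - y))) (β/2) s := by
              have base : HasDerivAt (fun y : ℝ => β/2 * y - β/2 * t) (β/2) s := by
                simpa using ((hasDerivAt_id s).const_mul (β/2)).sub_const (β/2 * t)
              have hfun : (fun y : ℝ => -(β/2 * (t - y))) = (fun y : ℝ => β/2 * y - β/2 * t) := by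
                funext y; ring
              rw [hfun]; exact base
            have := ((Real.hasDerivAt_exp _).comp s hi).const_mul (2/β)
            convert this using 1
            · rfl
            · rfl
            · rfl
            field_simp
          rw [intervalIntegral.integral_const_mul,
            intervalIntegral.integral_eq_sub_of_hasDerivAt hφ
              (Continuous.intervalIntegrable (by fun_prop) _ _)]
          have he1 : Real.exp (-(β/2 * (t - t))) = 1 := by simp
          have he2 : (0:ℝ) < Real.exp (-(β/2 * (t - T₀))) := Real.exp_pos _
          rw [he1]
          have hfac : (0:ℝ) < β * (ε' * c) := by positivity
          have hterm : (0:ℝ) ≤ 2/β * Real.exp (-(β/2 * (t - T₀))) := by positivity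
          have hstep : β * (ε' * c) * (2/β * 1 - 2/β * Real.exp (-(β/2 * (t - T₀)))) ≤
              β * (ε' * c) * (2/β) := by nlinarith [mul_nonneg hfac.le hterm]
          calc β * (ε' * c) * (2/β * 1 - 2/β * Real.exp (-(β/2 * (t - T₀)))) ≤
              β * (ε' * c) * (2/β) := hstep
            _ = 2 * ε' * c := by field_simp
  -- bound the boundary term
  have hbound2 : |Real.exp (-(β * (t - T₀))) * (P t - P T₀)| ≤ ε' * c := by
    have hPb : |P t - P T₀| ≤ ε' * ((t - T₀) + 1) := hG T₀ t hT₀T ht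
    have hke := keyexp (t - T₀) (by linarith)
    have he : (0:ℝ) < Real.exp (-(β * (t - T₀))) := Real.exp_pos _
    have he2 : Real.exp (-(β/2 * (t - T₀))) ≤ 1 := Real.exp_le_one_iff.mpr (by nlinarith)
    rw [abs_mul, Real.abs_exp]
    calc Real.exp (-(β * (t - T₀))) * |P t - P T₀|
        ≤ Real.exp (-(β * (t - T₀))) * (ε' * ((t - T₀) + 1)) :=
          mul_le_mul_of_nonneg_left hPb he.le
      _ = ε' * (((t - T₀) + 1) * Real.exp (-(β * (t - T₀)))) := by ring
      _ ≤ ε' * (c * Real.exp (-(β/2 * (t - T₀)))) :=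
          mul_le_mul_of_nonneg_left hke hε'0.le
      _ = (ε' * c) * Real.exp (-(β/2 * (t - T₀))) := by ring
      _ ≤ (ε' * c) * 1 := mul_le_mul_of_nonneg_left he2 (by positivity)
      _ = ε' * c := mul_one _
  -- conclude
  have hI : |∫ s in T₀..t, Real.exp (-(β * (t - s))) * g s| ≤ 3 * ε' * c := by
    rw [hIeq]
    calc |Real.exp (-(β * (t - T₀))) * (P t - P T₀) -
        ∫ s in T₀..t, Real.exp (-(β * (t - s))) * β * (P s - P t)|
        ≤ |Real.exp (-(β * (t - T₀))) * (P t - P T₀)| +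
          |∫ s in T₀..t, Real.exp (-(β * (t - s))) * β * (P s - P t)| := abs_sub _ _
      _ ≤ ε' * c + 2 * ε' * c := add_le_add hbound2 hbound1
      _ = 3 * ε' * c := by ring
  have h3c : 3 * ε' * c = ε / 2 := by
    rw [hε'def]; field_simp; ring
  have hd1 : |Real.exp (-(β * (t - T₀))) * u₀| < ε/2 := by
    rwa [Real.norm_eq_abs] at hdec
  have hd2 : |∫ s in T₀..t, Real.exp (-(β * (t - s))) * g s| ≤ ε/2 := by
    rw [← h3c]; exact hI
  show ‖∫ s in (0:ℝ)..t, Real.exp (-(β * (t - s))) * g s‖ < ε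
  rw [Real.norm_eq_abs, hsplit, hfirst]
  calc |Real.exp (-(β * (t - T₀))) * u₀ + ∫ s in T₀..t, Real.exp (-(β * (t - s))) * g s|
      ≤ |Real.exp (-(β * (t - T₀))) * u₀| + |∫ s in T₀..t, Real.exp (-(β * (t - s))) * g s| :=
        abs_add_le _ _
    _ < ε := by linarith

lemma aux_mp (β : ℝ) (hβ : 0 < β) (g : ℝ → ℝ) (hg : Continuous g)
    (hu : Tendsto (fun t => ∫ s in (0:ℝ)..t, Real.exp (-(β * (t - s))) * g s) atTop (nhds 0)) :
    ∀ δ ∈ Set.Ioc (0:ℝ) 1, Tendsto (fun t => ∫ s in t..(t+δ), g s) atTop (nhds 0) := by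
  have hcont : Continuous (fun s : ℝ => Real.exp (β * s) * g s) := by fun_prop
  set v : ℝ → ℝ := fun x => ∫ s in (0:ℝ)..x, Real.exp (β * s) * g s with hv
  have hvd : ∀ x : ℝ, HasDerivAt v (Real.exp (β * x) * g x) x := fun x =>
    intervalIntegral.integral_hasDerivAt_right (hcont.intervalIntegrable _ _)
      (hcont.stronglyMeasurableAtFilter _ _) hcont.continuousAt
  have hvc : Continuous v := continuous_iff_continuousAt.mpr fun x => (hvd x).continuousAt
  set w : ℝ → ℝ := fun t => Real.exp (-(β * t)) * v t with hw
  have hwc : Continuous w := by fun_prop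
  -- the solution equals w
  have huw : (fun t => ∫ s in (0:ℝ)..t, Real.exp (-(β * (t - s))) * g s) = w := by
    funext t
    rw [hw, hv]
    show (∫ s in (0:ℝ)..t, Real.exp (-(β * (t - s))) * g s) =
      Real.exp (-(β * t)) * ∫ s in (0:ℝ)..t, Real.exp (β * s) * g s
    rw [← intervalIntegral.integral_const_mul]
    apply intervalIntegral.integral_congr
    intro s _
    show Real.exp (-(β * (t - s))) * g s = Real.exp (-(β * t)) * (Real.exp (β * s) * g s)
    rw [← mul_assoc, ← Real.exp_add, show -(β * t) + β * s = -(β * (t - s)) by ring]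
  rw [huw] at hu
  -- derivative of w
  have hwd : ∀ x : ℝ, HasDerivAt w (-β * w x + g x) x := by
    intro x
    have hi : HasDerivAt (fun y : ℝ => -(β * y)) (-β) x := by
      have base : HasDerivAt (fun y : ℝ => -β * y) (-β) x := by
        simpa using (hasDerivAt_id x).const_mul (-β)
      have hfun : (fun y : ℝ => -(β * y)) = (fun y : ℝ => -β * y) := by funext y; ring
      rw [hfun]; exact base
    have hexp := (Real.hasDerivAt_exp _).comp x hi
    have := hexp.mul (hvd x)
    convert this using 1
    · rfl
    · rfl
    · rfl
    rw [hw]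
    show -β * (Real.exp (-(β * x)) * v x) + g x =
      Real.exp (-(β * x)) * -β * v x + Real.exp (-(β * x)) * (Real.exp (β * x) * g x)
    rw [show Real.exp (-(β * x)) * (Real.exp (β * x) * g x) = g x from by
      rw [← mul_assoc, ← Real.exp_add, show -(β * x) + β * x = 0 by ring, Real.exp_zero, one_mul]]
    ring
  intro δ hδ
  -- section identity
  have hid : ∀ t : ℝ, (∫ s in t..(t+δ), g s) =
      (w (t+δ) - w t) + β * ∫ s in t..(t+δ), w s := by
    intro t
    have hFTC : (∫ s in t..(t+δ), (-β * w s + g s)) = w (t+δ) - w t :=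
      intervalIntegral.integral_eq_sub_of_hasDerivAt (fun s _ => hwd s)
        (Continuous.intervalIntegrable (by fun_prop) _ _)
    have hsplit : (∫ s in t..(t+δ), (-β * w s + g s)) =
        (∫ s in t..(t+δ), -β * w s) + ∫ s in t..(t+δ), g s :=
      intervalIntegral.integral_add (Continuous.intervalIntegrable (by fun_prop) _ _)
        (hg.intervalIntegrable _ _)
    have hc : (∫ s in t..(t+δ), -β * w s) = -β * ∫ s in t..(t+δ), w s :=
      intervalIntegral.integral_const_mul _ _
    rw [hsplit, hc] at hFTC
    linarith [hFTC]
  -- limit of each piece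
  have h1 : Tendsto (fun t => w (t+δ) - w t) atTop (nhds 0) := by
    have := (hu.comp (tendsto_atTop_add_const_right atTop δ tendsto_id)).sub hu
    simpa using this
  have h2 : Tendsto (fun t => β * ∫ s in t..(t+δ), w s) atTop (nhds 0) := by
    rw [NormedAddCommGroup.tendsto_nhds_zero]
    intro ε hε
    have hδ0 : 0 < δ := hδ.1
    have hδ1 : δ ≤ 1 := hδ.2
    have hb : 0 < ε / (2 * (β + 1)) := by positivity
    obtain ⟨T, hT⟩ := eventually_atTop.mp ((NormedAddCommGroup.tendsto_nhds_zero.mp hu) _ hb)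
    filter_upwards [eventually_ge_atTop T] with t ht
    have hbd : ‖∫ s in t..(t+δ), w s‖ ≤ (ε / (2 * (β + 1))) * |t + δ - t| := by
      apply intervalIntegral.norm_integral_le_of_norm_le_const
      intro x hx
      rw [Set.uIoc_of_le (by linarith : t ≤ t + δ)] at hx
      exact le_of_lt (hT x (by linarith [hx.1]))
    rw [show t + δ - t = δ by ring, abs_of_pos hδ0] at hbd
    rw [Real.norm_eq_abs, abs_mul, abs_of_pos hβ]
    rw [Real.norm_eq_abs] at hbd
    calc β * |∫ s in t..(t+δ), w s| ≤ β * ((ε / (2 * (β + 1))) * δ) := by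
          apply mul_le_mul_of_nonneg_left hbd hβ.le
      _ < ε := by
          have h2b : (0:ℝ) < 2*(β+1) := by positivity
          rw [show β * (ε / (2 * (β + 1)) * δ) = ε * (β*δ) / (2*(β+1)) from by ring,
            div_lt_iff₀ h2b]
          nlinarith [mul_pos hε hβ, mul_le_mul_of_nonneg_left hδ1 (le_of_lt (mul_pos hε hβ))]
  have := h1.add h2
  rw [add_zero] at this
  exact this.congr fun t => (hid t).symm

/-- For `β > 0` and continuous `f`, the solution `u(t) = ∫_0^t e^{-β(t-s)} f(s) ds` of
`u' = -β u + f`, `u(0) = 0`, tends to zero as `t → ∞` if and only if for every `δ ∈ (0,1]`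
the sectional average `∫_t^{t+δ} f(s) ds` tends to zero as `t → ∞`. -/
theorem perturbedODE_tendsto_zero_iff_avg
    (β : ℝ) (hβ : 0 < β)
    (f : ℝ → ℝ) (hf : ContinuousOn f (Set.Ici (0:ℝ))) :
    Tendsto (fun t => ∫ s in (0:ℝ)..t, Real.exp (-(β * (t - s))) * f s) atTop (nhds 0) ↔
      ∀ δ ∈ Set.Ioc (0:ℝ) 1,
        Tendsto (fun t => ∫ s in t..(t + δ), f s) atTop (nhds 0) := by
  set g : ℝ → ℝ := fun x => f (max x 0) with hgdef
  have hgc : Continuous g := hf.comp_continuous (continuous_id.max continuous_const)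
    (fun x => Set.mem_Ici.mpr (le_max_right x 0))
  have hgf : ∀ s : ℝ, 0 ≤ s → f s = g s := by
    intro s hs
    rw [hgdef]
    simp [max_eq_left hs]
  have hL : Tendsto (fun t => ∫ s in (0:ℝ)..t, Real.exp (-(β * (t - s))) * f s) atTop (nhds 0) ↔
      Tendsto (fun t => ∫ s in (0:ℝ)..t, Real.exp (-(β * (t - s))) * g s) atTop (nhds 0) := by
    apply tendsto_congr'
    filter_upwards [eventually_ge_atTop (0:ℝ)] with t ht
    apply intervalIntegral.integral_congr
    intro s hs
    rw [Set.uIcc_of_le ht] at hs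
    show Real.exp (-(β * (t - s))) * f s = Real.exp (-(β * (t - s))) * g s
    rw [hgf s hs.1]
  have hR : ∀ δ ∈ Set.Ioc (0:ℝ) 1,
      (Tendsto (fun t => ∫ s in t..(t+δ), f s) atTop (nhds 0) ↔
        Tendsto (fun t => ∫ s in t..(t+δ), g s) atTop (nhds 0)) := by
    intro δ hδ
    apply tendsto_congr'
    filter_upwards [eventually_ge_atTop (0:ℝ)] with t ht
    apply intervalIntegral.integral_congr
    intro s hs
    rw [Set.uIcc_of_le (by linarith [hδ.1] : t ≤ t+δ)] at hs
    show f s = g s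
    exact hgf s (by linarith [hs.1])
  constructor
  · intro hu δ hδ
    rw [hR δ hδ]
    exact aux_mp β hβ g hgc (hL.mp hu) δ hδ
  · intro hs
    rw [hL]
    exact aux_mpr β hβ g hgc (fun δ hδ => (hR δ hδ).mp (hs δ hδ))
end

section
/- Let f : [0,∞) → ℝ be continuous and suppose there exist β₂ > 0 and B > 0 such that |∫_0^t e^{β₂ s} f(s) ds| ≤ B for all t ≥ 0. Then for every β ∈ (0, β₂] one has |∫_0^t e^{β s} f(s) ds| ≤ 2B for all t ≥ 0. -/
open MeasureTheory Filter Set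

/-- If the exponentially weighted primitive `∫_0^t e^{β₂ s} f(s) ds` is uniformly bounded by
`B`, then for every smaller positive rate `β ∈ (0, β₂]` the weighted primitive
`∫_0^t e^{β s} f(s) ds` is uniformly bounded by `2B`. -/
theorem exp_weighted_primitive_bound_all_smaller_rates
    (f : ℝ → ℝ) (hf : ContinuousOn f (Set.Ici (0:ℝ)))
    (β₂ B : ℝ) (hβ₂ : 0 < β₂) (hB : 0 < B)
    (hbound : ∀ t ≥ (0:ℝ), |∫ s in (0:ℝ)..t, Real.exp (β₂ * s) * f s| ≤ B) :
    ∀ β ∈ Set.Ioc (0:ℝ) β₂, ∀ t ≥ (0:ℝ),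
      |∫ s in (0:ℝ)..t, Real.exp (β * s) * f s| ≤ 2 * B := by
  intro β hβ t ht
  obtain ⟨hβ0, hββ₂⟩ := hβ
  set c : ℝ := β - β₂ with hcdef
  have hc0 : c ≤ 0 := by simp only [hcdef]; linarith
  -- extend f continuously to all of ℝ
  set g : ℝ → ℝ := fun s => f (max s 0) with hgdef
  have hgc : Continuous g := by
    have hmax : Continuous fun x : ℝ => max x 0 := by fun_prop
    apply hf.comp_continuous hmax
    intro x; simp [Set.mem_Ici]
  set h : ℝ → ℝ := fun s => Real.exp (β₂ * s) * g s with hhdef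
  have hhc : Continuous h :=
    (Real.continuous_exp.comp (continuous_const.mul continuous_id)).mul hgc
  set F : ℝ → ℝ := fun u => ∫ s in (0:ℝ)..u, h s with hFdef
  have hFd : ∀ x : ℝ, HasDerivAt F (h x) x := fun x =>
    intervalIntegral.integral_hasDerivAt_right (hhc.intervalIntegrable _ _)
      (hhc.stronglyMeasurableAtFilter _ _) hhc.continuousAt
  have hFcont : Continuous F := by
    apply continuous_iff_continuousAt.2
    intro x; exact (hFd x).continuousAt
  have hFbound : ∀ s, 0 ≤ s → |F s| ≤ B := by
    intro s hs
    have heq : F s = ∫ x in (0:ℝ)..s, Real.exp (β₂ * x) * f x := by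
      apply intervalIntegral.integral_congr
      intro x hx
      rw [Set.uIcc_of_le hs] at hx
      simp [hhdef, hgdef, max_eq_left hx.1]
    rw [heq]; exact hbound s hs
  have huc : Continuous fun s : ℝ => Real.exp (c * s) :=
    Real.continuous_exp.comp (continuous_const.mul continuous_id)
  have hud : ∀ x : ℝ, HasDerivAt (fun s => Real.exp (c * s)) (c * Real.exp (c * x)) x := by
    intro x
    have h1 : HasDerivAt (fun s : ℝ => c * s) c x := by
      simpa using (hasDerivAt_id x).const_mul c
    simpa [mul_comm] using h1.exp
  -- key identity via integration by parts
  have key : (∫ s in (0:ℝ)..t, Real.exp (β * s) * f s)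
      = Real.exp (c * t) * F t - ∫ s in (0:ℝ)..t, (c * Real.exp (c * s)) * F s := by
    have h1 : (∫ s in (0:ℝ)..t, Real.exp (β * s) * f s)
        = ∫ s in (0:ℝ)..t, Real.exp (c * s) * h s := by
      apply intervalIntegral.integral_congr
      intro x hx
      rw [Set.uIcc_of_le ht] at hx
      simp only [hhdef, hgdef, max_eq_left hx.1]
      rw [← mul_assoc, ← Real.exp_add]
      rw [hcdef]
      ring_nf
    rw [h1]
    have hparts := intervalIntegral.integral_mul_deriv_eq_deriv_mul
      (u := fun s => Real.exp (c * s)) (u' := fun s => c * Real.exp (c * s))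
      (v := F) (v' := h) (a := 0) (b := t)
      (fun x _ => hud x) (fun x _ => hFd x)
      (((continuous_const.mul huc : Continuous fun s => c * Real.exp (c * s))).intervalIntegrable _ _)
      (hhc.intervalIntegrable _ _)
    rw [hparts]
    simp [hFdef]
  rw [key]
  have e1 : |Real.exp (c * t) * F t| ≤ B := by
    rw [abs_mul, abs_of_pos (Real.exp_pos _)]
    have h1 : Real.exp (c * t) ≤ 1 :=
      Real.exp_le_one_iff.2 (mul_nonpos_of_nonpos_of_nonneg hc0 ht)
    calc Real.exp (c * t) * |F t| ≤ 1 * B :=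
          mul_le_mul h1 (hFbound t ht) (abs_nonneg _) zero_le_one
      _ = B := one_mul B
  have e2 : |∫ s in (0:ℝ)..t, (c * Real.exp (c * s)) * F s| ≤ B := by
    have habs : |∫ s in (0:ℝ)..t, (c * Real.exp (c * s)) * F s|
        ≤ ∫ s in (0:ℝ)..t, |(c * Real.exp (c * s)) * F s| :=
      intervalIntegral.abs_integral_le_integral_abs ht
    have hmono : (∫ s in (0:ℝ)..t, |(c * Real.exp (c * s)) * F s|)
        ≤ ∫ s in (0:ℝ)..t, (-c) * Real.exp (c * s) * B := by
      apply intervalIntegral.integral_mono_on ht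
      · exact ((((continuous_const.mul huc : Continuous fun s => c * Real.exp (c * s))).mul hFcont).abs.intervalIntegrable _ _)
      · exact ((((continuous_const.mul huc : Continuous fun s => (-c) * Real.exp (c * s))).mul continuous_const).intervalIntegrable _ _)
      · intro x hx
        rw [abs_mul, abs_mul, abs_of_nonpos hc0, abs_of_pos (Real.exp_pos _)]
        exact mul_le_mul_of_nonneg_left (hFbound x hx.1)
          (mul_nonneg (neg_nonneg.2 hc0) (Real.exp_pos _).le)
    have hcomp : (∫ s in (0:ℝ)..t, (-c) * Real.exp (c * s) * B)
        = B * (1 - Real.exp (c * t)) := by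
      have hG : ∀ x ∈ Set.uIcc (0:ℝ) t,
          HasDerivAt (fun s => -(B * Real.exp (c * s))) ((-c) * Real.exp (c * x) * B) x := by
        intro x _
        have := ((hud x).const_mul B).neg
        refine this.congr_deriv ?_
        ring
      rw [intervalIntegral.integral_eq_sub_of_hasDerivAt hG
        ((((continuous_const.mul huc : Continuous fun s => (-c) * Real.exp (c * s))).mul continuous_const).intervalIntegrable _ _)]
      simp [mul_comm]
      ring
    have hle : B * (1 - Real.exp (c * t)) ≤ B := by
      nlinarith [Real.exp_pos (c * t)]
    linarith
  calc |Real.exp (c * t) * F t - ∫ s in (0:ℝ)..t, (c * Real.exp (c * s)) * F s|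
      ≤ |Real.exp (c * t) * F t| + |∫ s in (0:ℝ)..t, (c * Real.exp (c * s)) * F s| :=
        abs_sub _ _
    _ ≤ 2 * B := by linarith
end

section
/- Let 0 < α < β and define f(t) = e^{α t} sin(e^{β t}) for t ≥ 0. Then for each η ∈ (0, β - α) there exists B > 0 such that |∫_0^t e^{η s} f(s) ds| ≤ B for all t ≥ 0. -/
open MeasureTheory Filter Set

/-- For `0 < α < β` and `f(t) = e^{α t} sin(e^{β t})`, for each `η ∈ (0, β - α)` there is
`B > 0` such that `|∫_0^t e^{η s} f(s) ds| ≤ B` for all `t ≥ 0`. -/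
theorem exp_weighted_primitive_exp_sin_exp_bounded
    (α β : ℝ) (hα : 0 < α) (hαβ : α < β) (η : ℝ) (hη : η ∈ Set.Ioo (0:ℝ) (β - α)) :
    ∃ B > (0:ℝ), ∀ t ≥ (0:ℝ),
      |∫ s in (0:ℝ)..t,
        Real.exp (η * s) * (Real.exp (α * s) * Real.sin (Real.exp (β * s)))| ≤ B := by
  obtain ⟨hη0, hηβ⟩ := hη
  have hβ : 0 < β := hα.trans hαβ
  set c : ℝ := η + α - β with hc
  have hcneg : c < 0 := by simp only [hc]; linarith
  refine ⟨3 / β, by positivity, fun t ht => ?_⟩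
  set u : ℝ → ℝ := fun s => -(1/β) * Real.exp (c * s) with hu_def
  set v : ℝ → ℝ := fun s => Real.cos (Real.exp (β * s)) with hv_def
  set u' : ℝ → ℝ := fun s => -(c/β) * Real.exp (c * s) with hu'_def
  set v' : ℝ → ℝ := fun s => -β * Real.exp (β * s) * Real.sin (Real.exp (β * s)) with hv'_def
  have hu : ∀ x ∈ Set.uIcc (0:ℝ) t, HasDerivAt u (u' x) x := by
    intro x _
    have h := ((hasDerivAt_id x).const_mul c).exp
    have h2 := h.const_mul (-(1/β))
    refine h2.congr_deriv ?_
    simp [hu'_def]; ring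
  have hv : ∀ x ∈ Set.uIcc (0:ℝ) t, HasDerivAt v (v' x) x := by
    intro x _
    have h := (((hasDerivAt_id x).const_mul β).exp).cos
    refine h.congr_deriv ?_
    simp [hv'_def]; ring
  have hcu' : Continuous u' := by
    simp only [hu'_def]; fun_prop
  have hcv' : Continuous v' := by
    simp only [hv'_def]; fun_prop
  have hiu' : IntervalIntegrable u' volume 0 t := hcu'.intervalIntegrable _ _
  have hiv' : IntervalIntegrable v' volume 0 t := hcv'.intervalIntegrable _ _
  have ibp := intervalIntegral.integral_mul_deriv_eq_deriv_mul hu hv hiu' hiv'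
  have hcong : (∫ s in (0:ℝ)..t,
      Real.exp (η * s) * (Real.exp (α * s) * Real.sin (Real.exp (β * s))))
      = ∫ s in (0:ℝ)..t, u s * v' s := by
    apply intervalIntegral.integral_congr
    intro s _
    simp only [hu_def, hv'_def]
    rw [show Real.exp (η*s) * (Real.exp (α*s) * Real.sin (Real.exp (β*s)))
        = (Real.exp (η*s) * Real.exp (α*s)) * Real.sin (Real.exp (β*s)) by ring,
      ← Real.exp_add]
    rw [show -(1/β) * Real.exp (c*s) * (-β * Real.exp (β*s) * Real.sin (Real.exp (β*s)))
        = (β/β) * (Real.exp (c*s) * Real.exp (β*s)) * Real.sin (Real.exp (β*s)) by ring,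
      ← Real.exp_add, div_self hβ.ne', one_mul]
    ring_nf
    simp only [hc]; ring_nf
  rw [hcong, ibp]
  -- bound each term
  have habs_u : ∀ s ≥ (0:ℝ), |u s| ≤ 1/β := by
    intro s hs
    simp only [hu_def, abs_mul, abs_neg, abs_of_pos (show (0:ℝ) < 1/β by positivity),
      Real.abs_exp]
    have : Real.exp (c * s) ≤ 1 := by
      rw [Real.exp_le_one_iff]
      exact mul_nonpos_of_nonpos_of_nonneg hcneg.le hs
    nlinarith [one_div_pos.mpr hβ]
  have hb1 : |u t * v t| ≤ 1/β := by
    rw [abs_mul]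
    calc |u t| * |v t| ≤ (1/β) * 1 := by
          apply mul_le_mul (habs_u t ht) ?_ (abs_nonneg _) (by positivity)
          simp only [hv_def]; exact Real.abs_cos_le_one _
      _ = 1/β := by ring
  have hb2 : |u 0 * v 0| ≤ 1/β := by
    rw [abs_mul]
    calc |u 0| * |v 0| ≤ (1/β) * 1 := by
          apply mul_le_mul (habs_u 0 le_rfl) ?_ (abs_nonneg _) (by positivity)
          simp only [hv_def]; exact Real.abs_cos_le_one _
      _ = 1/β := by ring
  have hb3 : |∫ s in (0:ℝ)..t, u' s * v s| ≤ 1/β := by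
    have h1 : |∫ s in (0:ℝ)..t, u' s * v s| ≤ ∫ s in (0:ℝ)..t, |u' s * v s| :=
      intervalIntegral.abs_integral_le_integral_abs ht
    have hcv : Continuous v := by simp only [hv_def]; fun_prop
    have h2 : (∫ s in (0:ℝ)..t, |u' s * v s|) ≤ ∫ s in (0:ℝ)..t, -(c/β) * Real.exp (c * s) := by
      apply intervalIntegral.integral_mono_on ht
      · exact ((hcu'.mul hcv).abs).intervalIntegrable _ _
      · exact hcu'.intervalIntegrable _ _
      · intro s hs
        rw [abs_mul]
        have hu'pos : (0:ℝ) ≤ -(c/β) * Real.exp (c * s) := by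
          apply mul_nonneg _ (Real.exp_pos _).le
          have : c / β < 0 := div_neg_of_neg_of_pos hcneg hβ
          linarith
        calc |u' s| * |v s| ≤ |u' s| * 1 := by
              apply mul_le_mul_of_nonneg_left ?_ (abs_nonneg _)
              simp only [hv_def]; exact Real.abs_cos_le_one _
          _ = -(c/β) * Real.exp (c * s) := by
              rw [mul_one]
              simp only [hu'_def]
              rw [abs_of_nonneg hu'pos]
    have h3 : (∫ s in (0:ℝ)..t, -(c/β) * Real.exp (c * s))
        = -(1/β) * Real.exp (c * t) - (-(1/β) * Real.exp (c * 0)) := by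
      apply intervalIntegral.integral_eq_sub_of_hasDerivAt
      · intro x _
        have h := ((hasDerivAt_id x).const_mul c).exp
        have h2 := h.const_mul (-(1/β))
        refine h2.congr_deriv ?_
        field_simp
        try ring
        try tauto
      · exact hcu'.intervalIntegrable _ _
    have h4 : -(1/β) * Real.exp (c * t) - (-(1/β) * Real.exp (c * 0)) ≤ 1/β := by
      rw [mul_zero, Real.exp_zero]
      nlinarith [Real.exp_pos (c * t), one_div_pos.mpr hβ]
    linarith
  calc |u t * v t - u 0 * v 0 - ∫ s in (0:ℝ)..t, u' s * v s|
      ≤ |u t * v t| + |u 0 * v 0| + |∫ s in (0:ℝ)..t, u' s * v s| := by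
        exact (abs_sub _ _).trans (by gcongr; exact abs_sub _ _)
    _ ≤ 1/β + 1/β + 1/β := by gcongr
    _ = 3/β := by ring
end

section
/- Let τ > 0, let μ be a finite signed Borel measure on [-τ,0], and let r : ℝ → ℝ be measurable with r(t) = 0 for t < 0 and |r(t)| ≤ K e^{-α t} for all t ≥ 0, where K > 0 and α > 0. Set G(r_t) := ∫_{[-τ,0]} r(t+s) dμ(s) and Γ(λ) := ∫_0^∞ e^{2λ s} G²(r_s) ds. Let ρ : [0,∞) → [0,∞) be locally integrable and satisfy the resolvent equation ρ(t) = G²(r_t) + ∫_0^t G²(r_{t-s}) ρ(s) ds for almost every t ≥ 0. Then for every ε ≥ 0 with Γ(ε) < 1 one has ∫_0^∞ e^{2ε s} ρ(s) ds = Γ(ε)/(1 - Γ(ε)) < ∞; in particular ρ ∈ L¹(0,∞) whenever Γ(0) = ∫_0^∞ G²(r_s) ds < 1. -/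
open MeasureTheory Filter Set

/-- Integral of a real function against a finite signed Borel measure, defined through the
Jordan decomposition. -/
noncomputable def sInt (μ : MeasureTheory.SignedMeasure ℝ) (f : ℝ → ℝ) : ℝ :=
  (∫ s, f s ∂μ.toJordanDecomposition.posPart) - (∫ s, f s ∂μ.toJordanDecomposition.negPart)

/-- `Γ(λ) = ∫_0^∞ e^{2λ s} G²(s) ds`, with values in `[0,∞]`. -/
noncomputable def Gam (G : ℝ → ℝ) (l : ℝ) : ENNReal :=
  ∫⁻ s in Set.Ioi (0:ℝ), ENNReal.ofReal (Real.exp (2 * l * s) * (G s) ^ 2)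

/-- Tonelli for the causal convolution. -/
lemma key_conv (f g : ℝ → ENNReal) (hf : Measurable f) (hg : Measurable g) :
    ∫⁻ t in Ioi (0:ℝ), ∫⁻ s in Ioo 0 t, f (t - s) * g s
      = (∫⁻ t in Ioi (0:ℝ), f t) * (∫⁻ s in Ioi (0:ℝ), g s) := by
  set f' := (Ioi (0:ℝ)).indicator f with hf'def
  set g' := (Ioi (0:ℝ)).indicator g with hg'def
  have hf' : Measurable f' := hf.indicator measurableSet_Ioi
  have hg' : Measurable g' := hg.indicator measurableSet_Ioi
  have h1 : ∀ t ∈ Ioi (0:ℝ),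
      ∫⁻ s in Ioo 0 t, f (t - s) * g s = ∫⁻ s, f' (t - s) * g' s := by
    intro t _
    rw [← lintegral_indicator measurableSet_Ioo]
    congr 1; funext s
    by_cases hs : s ∈ Ioo 0 t
    · rw [indicator_of_mem hs, hf'def, hg'def,
        indicator_of_mem (show t - s ∈ Ioi (0:ℝ) by simp [hs.2]),
        indicator_of_mem (show s ∈ Ioi (0:ℝ) from hs.1)]
    · rw [indicator_of_notMem hs]
      rcases lt_or_ge 0 s with h0 | h0
      · have : t - s ∉ Ioi (0:ℝ) := by
          simp only [mem_Ioo, not_and, not_lt] at hs ⊢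
          simp only [mem_Ioi, not_lt]
          linarith [hs h0]
        rw [hf'def, indicator_of_notMem this, zero_mul]
      · rw [hg'def, indicator_of_notMem (by simpa using h0), mul_zero]
  rw [setLIntegral_congr_fun measurableSet_Ioi
    (fun t ht => h1 t ht)]
  have h2 : ∫⁻ t in Ioi (0:ℝ), ∫⁻ s, f' (t - s) * g' s
      = ∫⁻ t, ∫⁻ s, f' (t - s) * g' s := by
    rw [← lintegral_indicator measurableSet_Ioi]
    congr 1; funext t
    by_cases ht : t ∈ Ioi (0:ℝ)
    · rw [indicator_of_mem ht]
    · rw [indicator_of_notMem ht]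
      symm
      have : ∀ s, f' (t - s) * g' s = 0 := by
        intro s
        by_cases hs : s ∈ Ioi (0:ℝ)
        · have : t - s ∉ Ioi (0:ℝ) := by
            simp only [mem_Ioi, not_lt] at ht ⊢
            simp only [mem_Ioi] at hs; linarith
          rw [hf'def, indicator_of_notMem this, zero_mul]
        · rw [hg'def, indicator_of_notMem hs, mul_zero]
      simp [this]
  rw [h2]
  have hswap : ∫⁻ t, ∫⁻ s, f' (t - s) * g' s
      = ∫⁻ s, ∫⁻ t, f' (t - s) * g' s := by
    apply lintegral_lintegral_swap
    exact ((hf'.comp (measurable_fst.sub measurable_snd)).mul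
      (hg'.comp measurable_snd)).aemeasurable
  rw [hswap]
  have h3 : ∀ s : ℝ, ∫⁻ t, f' (t - s) * g' s = (∫⁻ u, f' u) * g' s := by
    intro s
    calc ∫⁻ t, f' (t - s) * g' s = ∫⁻ t, g' s * f' (t - s) := by
          simp_rw [mul_comm]
      _ = g' s * ∫⁻ t, f' (t - s) := lintegral_const_mul _ (hf'.comp (measurable_id.sub measurable_const))
      _ = g' s * ∫⁻ u, f' u := by
          congr 1
          simp_rw [sub_eq_add_neg]
          exact lintegral_add_right_eq_self f' (-s)
      _ = (∫⁻ u, f' u) * g' s := mul_comm _ _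
  simp_rw [h3]
  rw [lintegral_const_mul _ hg', hf'def, hg'def, lintegral_indicator measurableSet_Ioi,
    lintegral_indicator measurableSet_Ioi]
/-- If the nonnegative resolvent `ρ` satisfies `ρ(t) = G²(r_t) + ∫_0^t G²(r_{t-s}) ρ(s) ds`
for a.e. `t ≥ 0`, where `G(r_t) = ∫_{[-τ,0]} r(t+s) dμ(s)` and `|r(t)| ≤ K e^{-α t}`, then
for every `ε ≥ 0` with `Γ(ε) < 1` one has
`∫_0^∞ e^{2ε s} ρ(s) ds = Γ(ε)/(1-Γ(ε)) < ∞`; in particular `ρ ∈ L¹(0,∞)` when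
`Γ(0) = ∫_0^∞ G²(r_s) ds < 1`. -/
theorem resolvent_exp_integrability
    (τ : ℝ) (hτ : 0 < τ) (μ : MeasureTheory.SignedMeasure ℝ)
    (hμ : μ.totalVariation (Set.Icc (-τ) 0)ᶜ = 0)
    (r : ℝ → ℝ) (hrm : Measurable r) (hr0 : ∀ t < (0:ℝ), r t = 0)
    (K α : ℝ) (hK : 0 < K) (hα : 0 < α)
    (hrb : ∀ t ≥ (0:ℝ), |r t| ≤ K * Real.exp (-α * t))
    (G : ℝ → ℝ) (hG : ∀ t, G t = sInt μ (fun s => r (t + s)))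
    (ρ : ℝ → ℝ) (hρ0 : ∀ t ≥ (0:ℝ), 0 ≤ ρ t)
    (hρloc : LocallyIntegrableOn ρ (Set.Ici (0:ℝ)))
    (hρeq : ∀ᵐ t ∂(MeasureTheory.volume.restrict (Set.Ici (0:ℝ))),
      ρ t = (G t) ^ 2 + ∫ s in (0:ℝ)..t, (G (t - s)) ^ 2 * ρ s) :
    (∀ ε ≥ (0:ℝ), Gam G ε < 1 →
      (∫⁻ s in Set.Ioi (0:ℝ), ENNReal.ofReal (Real.exp (2 * ε * s) * ρ s))
          = Gam G ε / (1 - Gam G ε) ∧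
        Gam G ε / (1 - Gam G ε) ≠ ⊤) ∧
    (Gam G 0 < 1 → IntegrableOn ρ (Set.Ioi (0:ℝ))) := by
  classical
  -- a measurable nonnegative version of ρ
  obtain ⟨ρ₀, hρ₀m, hρae⟩ := hρloc.aestronglyMeasurable
  set ρ' : ℝ → ℝ := fun s => max (ρ₀ s) 0 with hρ'def
  have hρ'm : Measurable ρ' := hρ₀m.measurable.max measurable_const
  have hρ'ae : ∀ᵐ s ∂(volume.restrict (Ici (0:ℝ))), ρ s = ρ' s := by
    filter_upwards [hρae, ae_restrict_mem measurableSet_Ici] with s h1 h2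
    rw [hρ'def]; simp only [← h1]
    rw [max_eq_left (hρ0 s h2)]
  have hρ'0 : ∀ s, 0 ≤ ρ' s := fun s => le_max_right _ _
  -- G is measurable
  have hGm : Measurable G := by
    have h1 : StronglyMeasurable (Function.uncurry fun t s : ℝ => r (t + s)) :=
      (hrm.comp (measurable_fst.add measurable_snd)).stronglyMeasurable
    have h2 := (h1.integral_prod_right (ν := μ.toJordanDecomposition.posPart)).measurable
    have h3 := (h1.integral_prod_right (ν := μ.toJordanDecomposition.negPart)).measurable
    have : G = fun t => (∫ s, r (t + s) ∂μ.toJordanDecomposition.posPart)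
        - ∫ s, r (t + s) ∂μ.toJordanDecomposition.negPart := funext fun t => by rw [hG t]; rfl
    rw [this]; exact h2.sub h3
  -- G is bounded
  obtain ⟨C, hC0, hGb⟩ : ∃ C : ℝ, 0 ≤ C ∧ ∀ t, |G t| ≤ C := by
    have hrK : ∀ u, ‖r u‖ ≤ K := by
      intro u
      rcases lt_or_ge u 0 with h | h
      · rw [hr0 u h]; simpa using hK.le
      · refine (hrb u h).trans ?_
        calc K * Real.exp (-α * u) ≤ K * 1 := by
              gcongr
              exact Real.exp_le_one_iff.2 (by nlinarith)
          _ = K := mul_one K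
    refine ⟨K * (μ.toJordanDecomposition.posPart univ).toReal
        + K * (μ.toJordanDecomposition.negPart univ).toReal,
      by positivity, fun t => ?_⟩
    rw [hG t]
    unfold sInt
    refine (abs_sub _ _).trans (add_le_add ?_ ?_) <;>
      exact norm_integral_le_of_norm_le_const (Eventually.of_forall fun s => hrK _)
  -- the main estimate
  have main : ∀ ε ≥ (0:ℝ), Gam G ε < 1 →
      (∫⁻ s in Set.Ioi (0:ℝ), ENNReal.ofReal (Real.exp (2 * ε * s) * ρ s))
          = Gam G ε / (1 - Gam G ε) ∧ Gam G ε / (1 - Gam G ε) ≠ ⊤ := by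
    intro ε hε hΓ
    set Γ := Gam G ε with hΓdef
    have hΓtop : Γ ≠ ⊤ := (hΓ.trans ENNReal.one_lt_top).ne
    have h1Γ0 : 1 - Γ ≠ 0 := (tsub_pos_of_lt hΓ).ne'
    have h1Γtop : 1 - Γ ≠ ⊤ := (tsub_le_self.trans_lt ENNReal.one_lt_top).ne
    set F : ℝ → ENNReal := fun t => ENNReal.ofReal (Real.exp (2 * ε * t) * G t ^ 2) with hFdef
    have hFm : Measurable F :=
      ((Real.measurable_exp.comp (measurable_const.mul measurable_id)).mul
        (hGm.pow_const 2)).ennreal_ofReal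
    have hΓF : Γ = ∫⁻ t in Ioi (0:ℝ), F t := rfl
    set P : ℝ → ENNReal := fun s => ENNReal.ofReal (Real.exp (2 * ε * s) * ρ' s) with hPdef
    have hPm : Measurable P :=
      ((Real.measurable_exp.comp (measurable_const.mul measurable_id)).mul hρ'm).ennreal_ofReal
    have hLHS : (∫⁻ s in Set.Ioi (0:ℝ), ENNReal.ofReal (Real.exp (2 * ε * s) * ρ s))
        = ∫⁻ s in Ioi (0:ℝ), P s := by
      refine lintegral_congr_ae ?_
      filter_upwards [ae_restrict_of_ae_restrict_of_subset Ioi_subset_Ici_self hρ'ae] with s hs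
      rw [hPdef, hs]
    -- integrability of ρ' on bounded intervals
    have hρ'int : ∀ T : ℝ, IntegrableOn ρ' (Ioc 0 T) := by
      intro T
      rcases le_or_gt T 0 with h | h
      · rw [Set.Ioc_eq_empty (by intro hc; exact absurd (hc.trans_le h) (lt_irrefl 0))]
        exact integrableOn_empty
      · have h1 : IntegrableOn ρ (Icc 0 T) :=
          hρloc.integrableOn_compact_subset Icc_subset_Ici_self isCompact_Icc
        exact (h1.mono_set Ioc_subset_Icc_self).congr
          (ae_restrict_of_ae_restrict_of_subset (fun x hx => le_of_lt hx.1) hρ'ae)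
    -- the key pointwise (a.e.) renewal identity in ℝ≥0∞
    have hkey : ∀ᵐ t ∂(volume.restrict (Ioi (0:ℝ))),
        P t = F t + ∫⁻ s in Ioo 0 t, F (t - s) * P s := by
      filter_upwards [ae_restrict_of_ae_restrict_of_subset Ioi_subset_Ici_self hρeq,
        ae_restrict_of_ae_restrict_of_subset Ioi_subset_Ici_self hρ'ae,
        ae_restrict_mem measurableSet_Ioi] with t heq hteq ht
      have ht0 : (0:ℝ) < t := ht
      have hsub : ∀ᵐ s ∂(volume.restrict (Ioc 0 t)), ρ s = ρ' s :=
        ae_restrict_of_ae_restrict_of_subset (fun x hx => le_of_lt hx.1) hρ'ae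
      set h : ℝ → ℝ := fun s =>
        (Real.exp (2 * ε * (t - s)) * G (t - s) ^ 2) * (Real.exp (2 * ε * s) * ρ' s) with hhdef
      have hhm : Measurable h := by
        apply Measurable.mul
        · exact (Real.measurable_exp.comp
            (measurable_const.mul (measurable_const.sub measurable_id))).mul
            ((hGm.comp (measurable_const.sub measurable_id)).pow_const 2)
        · exact (Real.measurable_exp.comp (measurable_const.mul measurable_id)).mul hρ'm
      have hh0 : ∀ s, 0 ≤ h s := fun s =>
        mul_nonneg (mul_nonneg (Real.exp_pos _).le (sq_nonneg _))
          (mul_nonneg (Real.exp_pos _).le (hρ'0 s))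
      have hhint : IntegrableOn h (Ioc 0 t) := by
        refine Integrable.mono
          (((hρ'int t).const_mul (Real.exp (2*ε*t) * C ^ 2 * Real.exp (2*ε*t))))
          hhm.aestronglyMeasurable ?_
        rw [ae_restrict_iff' measurableSet_Ioc]
        refine Eventually.of_forall fun s hs => ?_
        have b1 : Real.exp (2*ε*(t-s)) ≤ Real.exp (2*ε*t) :=
          Real.exp_le_exp.2 (by nlinarith [hs.1])
        have b2 : G (t-s) ^ 2 ≤ C ^ 2 := by
          have := abs_le.1 (hGb (t-s)); nlinarith [this.1, this.2]
        have b3 : Real.exp (2*ε*s) ≤ Real.exp (2*ε*t) :=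
          Real.exp_le_exp.2 (by nlinarith [hs.2])
        have hBρ : 0 ≤ Real.exp (2*ε*t) * C ^ 2 * Real.exp (2*ε*t) * ρ' s := by positivity
        rw [Real.norm_of_nonneg (hh0 s), Real.norm_of_nonneg hBρ]
        calc h s ≤ (Real.exp (2*ε*t) * C ^ 2) * (Real.exp (2*ε*t) * ρ' s) := by
              refine mul_le_mul (mul_le_mul b1 b2 (sq_nonneg _) (Real.exp_pos _).le)
                (mul_le_mul b3 le_rfl (hρ'0 s) (Real.exp_pos _).le)
                (mul_nonneg (Real.exp_pos _).le (hρ'0 s))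
                (mul_nonneg (Real.exp_pos _).le (by positivity))
          _ = Real.exp (2*ε*t) * C ^ 2 * Real.exp (2*ε*t) * ρ' s := by ring
      have e1 : ρ t = G t ^ 2 + ∫ s in Ioc 0 t, G (t - s) ^ 2 * ρ s := by
        rw [heq, intervalIntegral.integral_of_le ht0.le]
      have e2 : (∫ s in Ioc 0 t, G (t - s) ^ 2 * ρ s)
          = ∫ s in Ioc 0 t, G (t - s) ^ 2 * ρ' s := by
        refine integral_congr_ae ?_
        filter_upwards [hsub] with s hs; rw [hs]
      have e3 : Real.exp (2*ε*t) * ρ' t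
          = Real.exp (2*ε*t) * G t ^ 2 + ∫ s in Ioc 0 t, h s := by
        rw [← hteq, e1, e2, mul_add, ← integral_const_mul]
        congr 1
        refine integral_congr_ae (Eventually.of_forall fun s => ?_)
        have hex : Real.exp (2*ε*(t-s)) * Real.exp (2*ε*s) = Real.exp (2*ε*t) := by
          rw [← Real.exp_add]; ring_nf
        calc Real.exp (2*ε*t) * (G (t-s) ^ 2 * ρ' s)
            = (Real.exp (2*ε*(t-s)) * Real.exp (2*ε*s)) * (G (t-s) ^ 2 * ρ' s) := by rw [hex]
          _ = h s := by rw [hhdef]; ring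
      have hint0 : 0 ≤ ∫ s in Ioc 0 t, h s :=
        setIntegral_nonneg measurableSet_Ioc fun s _ => hh0 s
      calc P t = ENNReal.ofReal (Real.exp (2*ε*t) * ρ' t) := rfl
        _ = ENNReal.ofReal (Real.exp (2*ε*t) * G t ^ 2 + ∫ s in Ioc 0 t, h s) := by
            rw [e3]
        _ = F t + ENNReal.ofReal (∫ s in Ioc 0 t, h s) := by
            rw [ENNReal.ofReal_add (mul_nonneg (Real.exp_pos _).le (sq_nonneg _)) hint0, hFdef]
        _ = F t + ∫⁻ s in Ioc 0 t, ENNReal.ofReal (h s) := by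
            rw [ofReal_integral_eq_lintegral_ofReal hhint (Eventually.of_forall hh0)]
        _ = F t + ∫⁻ s in Ioo 0 t, ENNReal.ofReal (h s) := by
            rw [setLIntegral_congr (Ioo_ae_eq_Ioc (a := (0:ℝ)) (b := t))]
        _ = F t + ∫⁻ s in Ioo 0 t, F (t - s) * P s := by
            congr 1
            refine lintegral_congr fun s => ?_
            rw [hhdef, hFdef, hPdef]
            exact ENNReal.ofReal_mul (mul_nonneg (Real.exp_pos _).le (sq_nonneg _))
    -- truncated integrals
    set I : ℕ → ENNReal := fun n => ∫⁻ s in Ioo 0 (n:ℝ), P s with hIdef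
    have hIfin : ∀ n : ℕ, I n ≠ ⊤ := by
      intro n
      have hb : ∀ s ∈ Ioo (0:ℝ) (n:ℝ),
          P s ≤ ENNReal.ofReal (Real.exp (2*ε*n)) * ↑‖ρ' s‖₊ := by
        intro s hs
        rw [hPdef, ← enorm_eq_nnnorm, Real.enorm_eq_ofReal (hρ'0 s), ← ENNReal.ofReal_mul (Real.exp_pos _).le]
        exact ENNReal.ofReal_le_ofReal
          (mul_le_mul (Real.exp_le_exp.2 (by nlinarith [hs.1, hs.2])) le_rfl (hρ'0 s)
            (Real.exp_pos _).le)
      have h1 : I n ≤ ENNReal.ofReal (Real.exp (2*ε*n)) * ∫⁻ s in Ioo 0 (n:ℝ), ↑‖ρ' s‖₊ := by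
        rw [hIdef, ← lintegral_const_mul _ hρ'm.nnnorm.coe_nnreal_ennreal]
        exact setLIntegral_mono (by fun_prop) hb
      have h2 : (∫⁻ s in Ioo 0 (n:ℝ), ↑‖ρ' s‖₊) < ⊤ :=
        ((hρ'int n).mono_set Ioo_subset_Ioc_self).2
      exact (h1.trans_lt (ENNReal.mul_lt_top ENNReal.ofReal_lt_top h2)).ne
    have hIbound : ∀ n : ℕ, I n ≤ Γ + Γ * I n := by
      intro n
      have h1 : I n = ∫⁻ t in Ioo 0 (n:ℝ), (F t + ∫⁻ s in Ioo 0 t, F (t - s) * P s) :=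
        lintegral_congr_ae (ae_restrict_of_ae_restrict_of_subset Ioo_subset_Ioi_self hkey)
      refine h1.trans_le ?_
      rw [lintegral_add_left hFm]
      refine add_le_add ?_ ?_
      · rw [hΓF]; exact lintegral_mono_set Ioo_subset_Ioi_self
      · set Pn := (Ioo (0:ℝ) (n:ℝ)).indicator P with hPndef
        have hPnm : Measurable Pn := hPm.indicator measurableSet_Ioo
        have h2 : ∀ t ∈ Ioo (0:ℝ) (n:ℝ),
            (∫⁻ s in Ioo 0 t, F (t - s) * P s) = ∫⁻ s in Ioo 0 t, F (t - s) * Pn s := by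
          intro t hmem
          refine setLIntegral_congr_fun measurableSet_Ioo
            (fun s hs => ?_)
          rw [hPndef, indicator_of_mem (show s ∈ Ioo (0:ℝ) (n:ℝ) from ⟨hs.1, hs.2.trans hmem.2⟩)]
        calc ∫⁻ t in Ioo 0 (n:ℝ), ∫⁻ s in Ioo 0 t, F (t - s) * P s
            = ∫⁻ t in Ioo 0 (n:ℝ), ∫⁻ s in Ioo 0 t, F (t - s) * Pn s :=
              setLIntegral_congr_fun measurableSet_Ioo h2
          _ ≤ ∫⁻ t in Ioi 0, ∫⁻ s in Ioo 0 t, F (t - s) * Pn s :=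
              lintegral_mono_set Ioo_subset_Ioi_self
          _ = (∫⁻ t in Ioi (0:ℝ), F t) * ∫⁻ s in Ioi (0:ℝ), Pn s := key_conv F Pn hFm hPnm
          _ = Γ * I n := by
              rw [← hΓF, hPndef, setLIntegral_indicator measurableSet_Ioo,
                Set.inter_eq_left.mpr Ioo_subset_Ioi_self]
    have halg : ∀ J : ENNReal, J ≠ ⊤ → J ≤ Γ + Γ * J → J ≤ Γ / (1 - Γ) := by
      intro J hJtop hJ
      rw [ENNReal.le_div_iff_mul_le (Or.inl h1Γ0) (Or.inl h1Γtop)]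
      calc J * (1 - Γ) = (1 - Γ) * J := mul_comm _ _
        _ = 1 * J - Γ * J := ENNReal.sub_mul fun _ _ => hJtop
        _ = J - Γ * J := by rw [one_mul]
        _ ≤ Γ := tsub_le_iff_right.mpr hJ
    have hJsup : (∫⁻ s in Ioi (0:ℝ), P s) = ⨆ n : ℕ, I n := by
      have h1 : ∀ s : ℝ, (Ioi (0:ℝ)).indicator P s
          = ⨆ n : ℕ, (Ioo (0:ℝ) (n:ℝ)).indicator P s := by
        intro s
        by_cases hs : s ∈ Ioi (0:ℝ)
        · rw [indicator_of_mem hs]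
          refine le_antisymm ?_ (iSup_le fun n => ?_)
          · obtain ⟨n, hn⟩ := exists_nat_gt s
            exact le_iSup_of_le n (le_of_eq (indicator_of_mem (show s ∈ Ioo (0:ℝ) (n:ℝ) from ⟨hs, hn⟩) P).symm)
          · exact indicator_le_self _ _ s
        · rw [indicator_of_notMem hs]
          have : ∀ n : ℕ, (Ioo (0:ℝ) (n:ℝ)).indicator P s = 0 := fun n =>
            indicator_of_notMem (fun hc => hs hc.1) P
          simp [this]
      rw [← lintegral_indicator measurableSet_Ioi, lintegral_congr h1,
        lintegral_iSup (fun n => hPm.indicator measurableSet_Ioo)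
          (fun m n hmn => indicator_le_indicator_of_subset
            (Ioo_subset_Ioo_right (Nat.cast_le.2 hmn)) (fun a => zero_le))]
      exact iSup_congr fun n => lintegral_indicator measurableSet_Ioo P
    have hJle : (∫⁻ s in Ioi (0:ℝ), P s) ≤ Γ / (1 - Γ) := by
      rw [hJsup]; exact iSup_le fun n => halg _ (hIfin n) (hIbound n)
    have hJtop : (∫⁻ s in Ioi (0:ℝ), P s) ≠ ⊤ :=
      (hJle.trans_lt (ENNReal.div_lt_top hΓtop h1Γ0)).ne
    have hJeq : (∫⁻ s in Ioi (0:ℝ), P s) = Γ + Γ * ∫⁻ s in Ioi (0:ℝ), P s := by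
      calc ∫⁻ s in Ioi (0:ℝ), P s
          = ∫⁻ t in Ioi (0:ℝ), (F t + ∫⁻ s in Ioo 0 t, F (t - s) * P s) :=
            lintegral_congr_ae hkey
        _ = (∫⁻ t in Ioi (0:ℝ), F t) + ∫⁻ t in Ioi 0, ∫⁻ s in Ioo 0 t, F (t - s) * P s :=
            lintegral_add_left hFm _
        _ = Γ + Γ * ∫⁻ s in Ioi (0:ℝ), P s := by rw [key_conv F P hFm hPm, ← hΓF]
    have hfinal : (∫⁻ s in Ioi (0:ℝ), P s) = Γ / (1 - Γ) := by
      rw [ENNReal.eq_div_iff h1Γ0 h1Γtop]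
      calc (1 - Γ) * ∫⁻ s in Ioi (0:ℝ), P s
          = 1 * (∫⁻ s in Ioi (0:ℝ), P s) - Γ * ∫⁻ s in Ioi (0:ℝ), P s :=
            ENNReal.sub_mul fun _ _ => hJtop
        _ = (∫⁻ s in Ioi (0:ℝ), P s) - Γ * ∫⁻ s in Ioi (0:ℝ), P s := by rw [one_mul]
        _ = Γ := by
            nth_rewrite 1 [hJeq]
            exact ENNReal.add_sub_cancel_right (ENNReal.mul_ne_top hΓtop hJtop)
    exact ⟨by rw [hLHS, hfinal], (ENNReal.div_lt_top hΓtop h1Γ0).ne⟩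
  refine ⟨main, fun h0 => ?_⟩
  obtain ⟨heq, hne⟩ := main 0 le_rfl h0
  refine ⟨⟨ρ', hρ'm.stronglyMeasurable,
      ae_restrict_of_ae_restrict_of_subset Ioi_subset_Ici_self hρ'ae⟩, ?_⟩
  · rw [hasFiniteIntegral_iff_norm]
    have h1 : (∫⁻ s in Ioi (0:ℝ), ENNReal.ofReal ‖ρ s‖)
        = ∫⁻ s in Ioi (0:ℝ), ENNReal.ofReal (Real.exp (2 * 0 * s) * ρ s) := by
      refine setLIntegral_congr_fun measurableSet_Ioi (fun s hs => ?_)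
      rw [Real.norm_of_nonneg (hρ0 s (le_of_lt hs))]
      norm_num
    rw [h1, heq]
    exact ENNReal.div_lt_top ((h0.trans ENNReal.one_lt_top).ne)
      (tsub_pos_of_lt h0).ne'
end

section
/- Let τ > 0, let ν be a finite signed Borel measure on [-τ,0], let r be the differential resolvent of ν, extended by r(t) = 0 for t < 0, and let f : [0,∞) → ℝ be continuous. Define x₁(t) = ∫_0^t r(t-s) f(s) ds for t ≥ 0 and x₁(t) = 0 for t ∈ [-τ,0). Then x₁ is locally absolutely continuous on [0,∞) and satisfies x₁(t) = ∫_0^t ( f(s) + ∫_{[-τ,0]} x₁(s+u) dν(u) ) ds for all t ≥ 0; equivalently, x₁'(t) = ∫_{[-τ,0]} x₁(t+u) dν(u) + f(t) for almost every t > 0, with zero initial function. -/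
open MeasureTheory Filter Set

/-- `r` is the differential resolvent of the finite signed measure `ν` on `[-τ,0]`:
it vanishes on `(-∞,0)`, is continuous on `[0,∞)`, and satisfies
`r(t) = 1 + ∫_0^t ∫_{[-τ,0]} r(s+u) dν(u) ds` for `t ≥ 0` (the extension of `r` by zero on
the negative half-line makes the inner integral equal to the one over `[max(-τ,-s),0]`). -/
def IsResolvent (ν : MeasureTheory.SignedMeasure ℝ) (r : ℝ → ℝ) : Prop :=
  (∀ t < (0:ℝ), r t = 0) ∧ ContinuousOn r (Set.Ici (0:ℝ)) ∧
    ∀ t ≥ (0:ℝ), r t = 1 + ∫ s in (0:ℝ)..t, sInt ν (fun u => r (s + u))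

private lemma abs_sub'' (a b : ℝ) : |a - b| ≤ |a| + |b| := by
  rw [sub_eq_add_neg]
  exact (abs_add_le _ _).trans (by rw [abs_neg])

/-- A measurable function bounded on intervals is interval integrable. -/
private lemma II_of_bdd {h : ℝ → ℝ} (hm : Measurable h) {a b C : ℝ}
    (hC : ∀ x ∈ Set.uIoc a b, |h x| ≤ C) : IntervalIntegrable h volume a b := by
  rw [intervalIntegrable_iff]
  refine Measure.integrableOn_of_bounded ?_ hm.aestronglyMeasurable
    (M := C) ?_
  · rw [Set.uIoc]; exact measure_Ioc_lt_top.ne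
  · filter_upwards [ae_restrict_mem measurableSet_uIoc] with x hx
    simpa [Real.norm_eq_abs] using hC x hx

private lemma meas_int {μ : Measure ℝ} [SFinite μ] {h : ℝ → ℝ} (hm : Measurable h) :
    Measurable fun σ : ℝ => ∫ u, h (σ + u) ∂μ :=
  ((hm.comp (measurable_fst.add measurable_snd)).stronglyMeasurable.integral_prod_right').measurable

private lemma swap_lemma {μ : Measure ℝ} [IsFiniteMeasure μ] {a b : ℝ} {F : ℝ → ℝ → ℝ}
    (hFm : Measurable (fun p : ℝ × ℝ => F p.1 p.2))
    {C : ℝ} (hC : ∀ᵐ p ∂((volume.restrict (Set.Ioc a b)).prod μ), |F p.1 p.2| ≤ C) :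
    (∫ s in Set.Ioc a b, (∫ u, F s u ∂μ)) = ∫ u, (∫ s in Set.Ioc a b, F s u) ∂μ := by
  haveI : IsFiniteMeasure (volume.restrict (Set.Ioc a b)) :=
    ⟨by simpa [Measure.restrict_apply_univ] using measure_Ioc_lt_top⟩
  apply integral_integral_swap
  apply Integrable.mono' (integrable_const C) hFm.aestronglyMeasurable
  simpa [Real.norm_eq_abs] using hC

/-- The forced solution `x₁ = r ∗ f`, extended by zero on `[-τ,0)`, is (locally absolutely)
continuous on `[0,∞)` and satisfies the integrated forced delay equation
`x₁(t) = ∫_0^t ( f(s) + ∫_{[-τ,0]} x₁(s+u) dν(u) ) ds` for all `t ≥ 0`. -/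
theorem forced_solution_satisfies_integrated_delay_equation
    (τ : ℝ) (hτ : 0 < τ) (ν : MeasureTheory.SignedMeasure ℝ)
    (hν : ν.totalVariation (Set.Icc (-τ) 0)ᶜ = 0)
    (r : ℝ → ℝ) (hr : IsResolvent ν r)
    (f : ℝ → ℝ) (hf : ContinuousOn f (Set.Ici (0:ℝ)))
    (x₁ : ℝ → ℝ) (hx₁neg : ∀ t < (0:ℝ), x₁ t = 0)
    (hx₁ : ∀ t ≥ (0:ℝ), x₁ t = ∫ s in (0:ℝ)..t, r (t - s) * f s) :
    ContinuousOn x₁ (Set.Ici (0:ℝ)) ∧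
      ∀ t ≥ (0:ℝ), x₁ t = ∫ s in (0:ℝ)..t, (f s + sInt ν (fun u => x₁ (s + u))) := by
  obtain ⟨hrneg, hrcont, hreq⟩ := hr
  set μp := ν.toJordanDecomposition.posPart with hμpdef
  set μn := ν.toJordanDecomposition.negPart with hμndef
  have sInt_eq : ∀ h : ℝ → ℝ, sInt ν h = (∫ u, h u ∂μp) - ∫ u, h u ∂μn := fun h => rfl
  have hμ0 : μp (Set.Icc (-τ) 0)ᶜ = 0 ∧ μn (Set.Icc (-τ) 0)ᶜ = 0 := by
    rw [SignedMeasure.totalVariation, Measure.add_apply, add_eq_zero] at hν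
    exact hν
  have haep : ∀ᵐ u ∂μp, u ∈ Set.Icc (-τ) 0 := by
    rw [ae_iff]; exact hμ0.1
  have haen : ∀ᵐ u ∂μn, u ∈ Set.Icc (-τ) 0 := by
    rw [ae_iff]; exact hμ0.2
  have hμpr : μp.restrict (Set.Icc (-τ) 0) = μp := Measure.restrict_eq_self_of_ae_mem haep
  have hμnr : μn.restrict (Set.Icc (-τ) 0) = μn := Measure.restrict_eq_self_of_ae_mem haen
  -- continuous extensions of `r` and `f`
  set rc : ℝ → ℝ := fun x => r (max x 0) with hrcdef
  have hrc_cont : Continuous rc :=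
    hrcont.comp_continuous (continuous_id.max continuous_const) fun x => Set.mem_Ici.mpr (le_max_right _ _)
  have hrc_eq : ∀ x ≥ (0:ℝ), r x = rc x := fun x hx => by
    simp only [hrcdef, max_eq_left hx]
  have hr_ind : r = (Set.Ici (0:ℝ)).indicator rc := by
    funext x
    by_cases hx : (0:ℝ) ≤ x
    · rw [Set.indicator_of_mem (Set.mem_Ici.mpr hx), ← hrc_eq x hx]
    · rw [Set.indicator_of_notMem (by simpa using hx), hrneg x (lt_of_not_ge hx)]
  have hrm : Measurable r := hr_ind ▸ hrc_cont.measurable.indicator measurableSet_Ici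
  set fc : ℝ → ℝ := fun x => f (max x 0) with hfcdef
  have hfc_cont : Continuous fc :=
    hf.comp_continuous (continuous_id.max continuous_const) fun x => Set.mem_Ici.mpr (le_max_right _ _)
  have hfc_eq : ∀ x ≥ (0:ℝ), f x = fc x := fun x hx => by
    simp only [hfcdef, max_eq_left hx]
  -- bounds
  have hrbdd : ∀ T : ℝ, ∃ M : ℝ, 0 ≤ M ∧ ∀ x ≤ T, |r x| ≤ M := by
    intro T
    obtain ⟨M, hM⟩ := (isCompact_Icc (a := (0:ℝ)) (b := max T 0)).exists_bound_of_continuousOn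
      hrc_cont.continuousOn
    refine ⟨max M 0, le_max_right _ _, fun x hx => ?_⟩
    by_cases h0 : (0:ℝ) ≤ x
    · rw [hrc_eq x h0]
      have h2 := hM x (Set.mem_Icc.mpr ⟨h0, le_max_of_le_left hx⟩)
      rw [Real.norm_eq_abs] at h2
      exact le_max_of_le_left h2
    · simp [hrneg x (lt_of_not_ge h0), le_max_right]
  have hfcbdd : ∀ T : ℝ, ∃ M : ℝ, 0 ≤ M ∧ ∀ x ≤ T, |fc x| ≤ M := by
    intro T
    obtain ⟨M, hM⟩ := (isCompact_Icc (a := (0:ℝ)) (b := max T 0)).exists_bound_of_continuousOn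
      hfc_cont.continuousOn
    refine ⟨max M 0, le_max_right _ _, fun x hx => ?_⟩
    have hx' : fc x = fc (max x 0) := by
      have : max (max x 0) 0 = max x 0 := max_eq_left (le_max_right _ _)
      simp only [hfcdef, this]
    rw [hx']
    have h2 := hM (max x 0)
      (Set.mem_Icc.mpr ⟨le_max_right _ _, max_le (le_max_of_le_left hx) (le_max_right _ _)⟩)
    rw [Real.norm_eq_abs] at h2
    exact le_max_of_le_left h2
  -- the function g
  set g : ℝ → ℝ := fun σ => sInt ν (fun u => r (σ + u)) with hgdef
  have hg_eq : ∀ σ, g σ = (∫ u, r (σ + u) ∂μp) - ∫ u, r (σ + u) ∂μn := fun σ => rfl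
  have hgm : Measurable g := by
    have h1 : Measurable fun σ : ℝ => ∫ u, r (σ + u) ∂μp := meas_int hrm
    have h2 : Measurable fun σ : ℝ => ∫ u, r (σ + u) ∂μn := meas_int hrm
    exact h1.sub h2
  have hgneg : ∀ σ < (0:ℝ), g σ = 0 := by
    intro σ hσ
    have hp : (∫ u, r (σ + u) ∂μp) = 0 := by
      have : (fun u => r (σ + u)) =ᵐ[μp] fun _ => 0 :=
        haep.mono fun u hu => hrneg _ (by linarith [hu.2])
      rw [integral_congr_ae this, integral_zero]
    have hn : (∫ u, r (σ + u) ∂μn) = 0 := by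
      have : (fun u => r (σ + u)) =ᵐ[μn] fun _ => 0 :=
        haen.mono fun u hu => hrneg _ (by linarith [hu.2])
      rw [integral_congr_ae this, integral_zero]
    rw [hg_eq, hp, hn, sub_zero]
  have hgbdd : ∀ T : ℝ, ∃ C : ℝ, 0 ≤ C ∧ ∀ σ ≤ T, |g σ| ≤ C := by
    intro T
    obtain ⟨M, hM0, hM⟩ := hrbdd T
    refine ⟨M * (μp Set.univ).toReal + M * (μn Set.univ).toReal, by positivity, fun σ hσ => ?_⟩
    have hp : |∫ u, r (σ + u) ∂μp| ≤ M * (μp Set.univ).toReal := by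
      have hb : ∀ᵐ u ∂μp, ‖r (σ + u)‖ ≤ M := haep.mono fun u hu => by
        rw [Real.norm_eq_abs]; exact hM (σ + u) (by linarith [hu.2])
      have := norm_integral_le_of_norm_le_const hb
      rwa [Real.norm_eq_abs] at this
    have hn : |∫ u, r (σ + u) ∂μn| ≤ M * (μn Set.univ).toReal := by
      have hb : ∀ᵐ u ∂μn, ‖r (σ + u)‖ ≤ M := haen.mono fun u hu => by
        rw [Real.norm_eq_abs]; exact hM (σ + u) (by linarith [hu.2])
      have := norm_integral_le_of_norm_le_const hb
      rwa [Real.norm_eq_abs] at this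
    calc |g σ| ≤ |∫ u, r (σ + u) ∂μp| + |∫ u, r (σ + u) ∂μn| := by
          rw [hg_eq]; exact abs_sub'' _ _
      _ ≤ _ := add_le_add hp hn
  have hgint : ∀ a b : ℝ, IntervalIntegrable g volume a b := by
    intro a b
    obtain ⟨C, hC0, hC⟩ := hgbdd (max a b)
    exact II_of_bdd hgm fun x hx => hC x hx.2
  -- the primitive of g
  set G : ℝ → ℝ := fun w => ∫ σ in (0:ℝ)..w, g σ with hGdef
  have hGcont : Continuous G := intervalIntegral.continuous_primitive hgint 0
  have hrG : ∀ w ≥ (0:ℝ), r w = 1 + G w := fun w hw => hreq w hw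
  -- the continuous version of x₁ on [0,∞)
  set xc : ℝ → ℝ := fun w => ∫ s in (0:ℝ)..w, rc (w - s) * fc s with hxcdef
  have hxc_cont : Continuous xc := by
    apply intervalIntegral.continuous_parametric_intervalIntegral_of_continuous (μ := volume)
      (f := fun w s => rc (w - s) * fc s) ?_ continuous_id
    exact (hrc_cont.comp (continuous_fst.sub continuous_snd)).mul (hfc_cont.comp continuous_snd)
  have hx₁eq : ∀ w ≥ (0:ℝ), x₁ w = xc w := by
    intro w hw
    rw [hx₁ w hw]
    apply intervalIntegral.integral_congr
    intro s hs
    rw [Set.uIcc_of_le hw] at hs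
    show r (w - s) * f s = rc (w - s) * fc s
    rw [hrc_eq _ (by linarith [hs.1, hs.2] : (0:ℝ) ≤ w - s), hfc_eq _ hs.1]
  have hx₁ind : x₁ = (Set.Ici (0:ℝ)).indicator xc := by
    funext w
    by_cases hw : (0:ℝ) ≤ w
    · rw [Set.indicator_of_mem (Set.mem_Ici.mpr hw), hx₁eq w hw]
    · rw [Set.indicator_of_notMem (by simpa using hw), hx₁neg w (lt_of_not_ge hw)]
  have hx₁m : Measurable x₁ := hx₁ind ▸ hxc_cont.measurable.indicator measurableSet_Ici
  have hx₁bdd : ∀ T : ℝ, ∃ C : ℝ, 0 ≤ C ∧ ∀ w ≤ T, |x₁ w| ≤ C := by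
    intro T
    obtain ⟨C, hC⟩ := (isCompact_Icc (a := (0:ℝ)) (b := max T 0)).exists_bound_of_continuousOn
      hxc_cont.continuousOn
    refine ⟨max C 0, le_max_right _ _, fun w hw => ?_⟩
    by_cases h0 : (0:ℝ) ≤ w
    · rw [hx₁eq w h0]
      have h2 := hC w (Set.mem_Icc.mpr ⟨h0, le_max_of_le_left hw⟩)
      rw [Real.norm_eq_abs] at h2
      exact le_max_of_le_left h2
    · simp [hx₁neg w (lt_of_not_ge h0), le_max_right]
  refine ⟨hxc_cont.continuousOn.congr fun w hw => hx₁eq w hw, ?_⟩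
  -- the main computation
  intro t ht
  obtain ⟨M, hM0, hM⟩ := hrbdd t
  obtain ⟨Fb, hFb0, hFb⟩ := hfcbdd t
  obtain ⟨Cg, hCg0, hCg⟩ := hgbdd t
  have hGf_cont : Continuous fun s => G (t - s) * fc s :=
    (hGcont.comp (continuous_const.sub continuous_id)).mul hfc_cont
  have step1 : x₁ t = (∫ s in (0:ℝ)..t, fc s) + ∫ s in (0:ℝ)..t, G (t - s) * fc s := by
    rw [hx₁ t ht, ← intervalIntegral.integral_add (hfc_cont.intervalIntegrable _ _)
      (hGf_cont.intervalIntegrable _ _)]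
    apply intervalIntegral.integral_congr
    intro s hs
    rw [Set.uIcc_of_le ht] at hs
    have h1 : r (t - s) = 1 + G (t - s) := hrG (t - s) (by linarith [hs.2])
    show r (t - s) * f s = fc s + G (t - s) * fc s
    rw [h1, ← hfc_eq s hs.1]
    ring
  have hne0 : ∀ᵐ σ : ℝ, σ ≠ (0:ℝ) := by
    rw [ae_iff]
    simpa using measure_singleton (0:ℝ)
  have step2 : ∀ s ∈ Set.Icc (0:ℝ) t, G (t - s) = ∫ w in (0:ℝ)..t, g (w - s) := by
    intro s hs
    have h1 : (∫ w in (0:ℝ)..t, g (w - s)) = ∫ w in (0-s)..(t-s), g w :=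
      intervalIntegral.integral_comp_sub_right g s
    have h2 : (∫ w in (0-s)..(0:ℝ), g w) = 0 := by
      rw [intervalIntegral.integral_of_le (by linarith [hs.1] : (0:ℝ) - s ≤ 0)]
      apply setIntegral_eq_zero_of_ae_eq_zero
      filter_upwards [hne0] with σ hσ hmem
      exact hgneg σ (lt_of_le_of_ne hmem.2 hσ)
    have h3 : (∫ w in (0-s)..(0:ℝ), g w) + (∫ w in (0:ℝ)..(t-s), g w)
        = ∫ w in (0-s)..(t-s), g w :=
      intervalIntegral.integral_add_adjacent_intervals (hgint _ _) (hgint _ _)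
    rw [h1, ← h3, h2, zero_add]
  -- Fubini over the square
  have hPm : Measurable fun p : ℝ × ℝ => g (p.2 - p.1) * fc p.1 :=
    (hgm.comp (measurable_snd.sub measurable_fst)).mul (hfc_cont.measurable.comp measurable_fst)
  have hPint : Integrable (fun p : ℝ × ℝ => g (p.2 - p.1) * fc p.1)
      ((volume.restrict (Set.Ioc 0 t)).prod (volume.restrict (Set.Ioc 0 t))) := by
    haveI : IsFiniteMeasure (volume.restrict (Set.Ioc (0:ℝ) t)) :=
      ⟨by simpa [Measure.restrict_apply_univ] using measure_Ioc_lt_top⟩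
    apply Integrable.mono' (integrable_const (Cg * Fb)) hPm.aestronglyMeasurable
    have hmem : ∀ᵐ p : ℝ × ℝ ∂((volume.restrict (Set.Ioc 0 t)).prod
        (volume.restrict (Set.Ioc 0 t))), p ∈ Set.Ioc (0:ℝ) t ×ˢ Set.Ioc (0:ℝ) t := by
      rw [Measure.prod_restrict]
      exact ae_restrict_mem (measurableSet_Ioc.prod measurableSet_Ioc)
    filter_upwards [hmem] with p hp
    rw [Real.norm_eq_abs, abs_mul]
    exact mul_le_mul (hCg _ (by linarith [hp.2.2, hp.1.1])) (hFb _ hp.1.2) (abs_nonneg _) hCg0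
  have step3 : (∫ s in (0:ℝ)..t, (∫ w in (0:ℝ)..t, g (w - s)) * fc s)
      = ∫ w in (0:ℝ)..t, ∫ s in (0:ℝ)..t, g (w - s) * fc s := by
    have e : ∀ s : ℝ, (∫ w in (0:ℝ)..t, g (w - s)) * fc s
        = ∫ w in (0:ℝ)..t, g (w - s) * fc s := fun s =>
      (intervalIntegral.integral_mul_const _ _).symm
    simp_rw [e]
    rw [intervalIntegral.integral_of_le ht]
    simp_rw [intervalIntegral.integral_of_le ht]
    exact integral_integral_swap hPint
  -- cutting off the inner integral
  have hswint : ∀ (w a b : ℝ), IntervalIntegrable (fun s => g (w - s) * fc s) volume a b := by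
    intro w a b
    obtain ⟨C1, hC10, hC1⟩ := hgbdd (w - min a b)
    obtain ⟨C2, hC20, hC2⟩ := hfcbdd (max a b)
    apply II_of_bdd ((hgm.comp (measurable_id.const_sub w)).mul hfc_cont.measurable)
      (C := C1 * C2)
    intro x hx
    show |g (w - x) * fc x| ≤ C1 * C2
    rw [abs_mul]
    have h1 : min a b ≤ x := le_of_lt hx.1
    exact mul_le_mul (hC1 _ (by linarith)) (hC2 _ hx.2) (abs_nonneg _) hC10
  have step4 : ∀ w ∈ Set.Icc (0:ℝ) t,
      (∫ s in (0:ℝ)..t, g (w - s) * fc s) = ∫ s in (0:ℝ)..w, g (w - s) * fc s := by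
    intro w hw
    have hsplit := intervalIntegral.integral_add_adjacent_intervals
      (a := (0:ℝ)) (b := w) (c := t) (hswint w 0 w) (hswint w w t)
    have hzero : (∫ s in w..t, g (w - s) * fc s) = 0 := by
      rw [intervalIntegral.integral_of_le hw.2]
      apply setIntegral_eq_zero_of_forall_eq_zero
      intro x hx
      rw [hgneg (w - x) (by linarith [hx.1]), zero_mul]
    rw [← hsplit, hzero, add_zero]
  -- the key Fubini with the measures μp and μn
  have key : ∀ w ∈ Set.Icc (0:ℝ) t, ∀ u ∈ Set.Icc (-τ) (0:ℝ),
      (∫ s in Set.Ioc (0:ℝ) w, r (w - s + u) * fc s) = x₁ (w + u) := by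
    intro w hw u hu
    have hint1 : ∀ a b : ℝ, IntervalIntegrable (fun s => r (w - s + u) * fc s) volume a b := by
      intro a b
      obtain ⟨C1, hC10, hC1⟩ := hrbdd (w - min a b + u)
      obtain ⟨C2, hC20, hC2⟩ := hfcbdd (max a b)
      apply II_of_bdd ((hrm.comp ((measurable_id.const_sub w).add_const u)).mul
        hfc_cont.measurable) (C := C1 * C2)
      intro x hx
      show |r (w - x + u) * fc x| ≤ C1 * C2
      rw [abs_mul]
      have h1 : min a b ≤ x := le_of_lt hx.1
      exact mul_le_mul (hC1 _ (by linarith)) (hC2 _ hx.2) (abs_nonneg _) hC10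
    by_cases h0 : (0:ℝ) ≤ w + u
    · have e1 : x₁ (w + u) = ∫ s in (0:ℝ)..(w+u), r (w - s + u) * fc s := by
        rw [hx₁ (w+u) h0]
        apply intervalIntegral.integral_congr
        intro s hs
        rw [Set.uIcc_of_le h0] at hs
        show r (w + u - s) * f s = r (w - s + u) * fc s
        have harg : w + u - s = w - s + u := by ring
        rw [hfc_eq s hs.1, harg]
      have e2 : (∫ s in (w+u)..w, r (w - s + u) * fc s) = 0 := by
        rw [intervalIntegral.integral_of_le (by linarith [hu.2])]
        apply setIntegral_eq_zero_of_forall_eq_zero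
        intro x hx
        rw [hrneg (w - x + u) (by linarith [hx.1]), zero_mul]
      have e3 := intervalIntegral.integral_add_adjacent_intervals
        (a := (0:ℝ)) (b := w + u) (c := w) (hint1 0 (w+u)) (hint1 (w+u) w)
      rw [← intervalIntegral.integral_of_le hw.1, e1, ← e3, e2, add_zero]
    · push_neg at h0
      rw [hx₁neg (w + u) h0]
      apply setIntegral_eq_zero_of_forall_eq_zero
      intro x hx
      rw [hrneg (w - x + u) (by linarith [hx.1]), zero_mul]
  have step5 : ∀ w ∈ Set.Icc (0:ℝ) t,
      (∫ s in (0:ℝ)..w, g (w - s) * fc s) = sInt ν fun u => x₁ (w + u) := by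
    intro w hw
    obtain ⟨Mw, hMw0, hMw⟩ := hrbdd w
    obtain ⟨Fw, hFw0, hFw⟩ := hfcbdd w
    have hFm : Measurable fun p : ℝ × ℝ => r (w - p.1 + p.2) * fc p.1 :=
      (hrm.comp ((measurable_fst.const_sub w).add measurable_snd)).mul
        (hfc_cont.measurable.comp measurable_fst)
    have hbd : ∀ (μ : Measure ℝ) [SFinite μ], μ.restrict (Set.Icc (-τ) 0) = μ →
        ∀ᵐ p : ℝ × ℝ ∂((volume.restrict (Set.Ioc 0 w)).prod μ),
          |r (w - p.1 + p.2) * fc p.1| ≤ Mw * Fw := by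
      intro μ hsf hμr
      haveI := hsf
      have hmem : ∀ᵐ p : ℝ × ℝ ∂((volume.restrict (Set.Ioc 0 w)).prod μ),
          p ∈ Set.Ioc (0:ℝ) w ×ˢ Set.Icc (-τ) (0:ℝ) := by
        rw [← hμr, Measure.prod_restrict]
        exact ae_restrict_mem (measurableSet_Ioc.prod measurableSet_Icc)
      filter_upwards [hmem] with p hp
      rw [abs_mul]
      have harg : w - p.1 + p.2 ≤ w := by
        have h1 := hp.1.1
        have h2 := hp.2.2
        linarith
      exact mul_le_mul (hMw _ harg) (hFw _ hp.1.2) (abs_nonneg _) hMw0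
    have hA : ∀ (μ : Measure ℝ) [IsFiniteMeasure μ], (∀ᵐ u ∂μ, u ∈ Set.Icc (-τ) 0) →
        IntegrableOn (fun s => ∫ u, r (w - s + u) * fc s ∂μ) (Set.Ioc 0 w) volume := by
      intro μ hfin hμae
      haveI := hfin

      apply Measure.integrableOn_of_bounded measure_Ioc_lt_top.ne
        ((hFm.stronglyMeasurable.integral_prod_right').measurable.aestronglyMeasurable)
        (M := Mw * Fw * (μ Set.univ).toReal)
      filter_upwards [ae_restrict_mem measurableSet_Ioc] with s hs
      have hb : ∀ᵐ u ∂μ, ‖r (w - s + u) * fc s‖ ≤ Mw * Fw := by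
        filter_upwards [hμae] with u hu
        rw [Real.norm_eq_abs, abs_mul]
        have harg : w - s + u ≤ w := by
          have h1 := hs.1
          have h2 := hu.2
          linarith
        exact mul_le_mul (hMw _ harg) (hFw _ hs.2) (abs_nonneg _) hMw0
      have := norm_integral_le_of_norm_le_const hb
      rwa [Real.norm_eq_abs] at this
    have hkey : ∀ (μ : Measure ℝ), (∀ᵐ u ∂μ, u ∈ Set.Icc (-τ) 0) →
        (∫ u, (∫ s in Set.Ioc (0:ℝ) w, r (w - s + u) * fc s) ∂μ) = ∫ u, x₁ (w + u) ∂μ := by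
      intro μ hμae
      apply integral_congr_ae
      filter_upwards [hμae] with u hu
      exact key w hw u hu
    rw [intervalIntegral.integral_of_le hw.1]
    calc ∫ s in Set.Ioc (0:ℝ) w, g (w - s) * fc s
        = ∫ s in Set.Ioc (0:ℝ) w,
            ((∫ u, r (w - s + u) * fc s ∂μp) - ∫ u, r (w - s + u) * fc s ∂μn) := by
          apply setIntegral_congr_fun measurableSet_Ioc
          intro s _
          show g (w - s) * fc s
            = (∫ u, r (w - s + u) * fc s ∂μp) - ∫ u, r (w - s + u) * fc s ∂μn
          rw [hg_eq, sub_mul, integral_mul_const, integral_mul_const]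
      _ = (∫ s in Set.Ioc (0:ℝ) w, ∫ u, r (w - s + u) * fc s ∂μp)
            - ∫ s in Set.Ioc (0:ℝ) w, ∫ u, r (w - s + u) * fc s ∂μn :=
          integral_sub (hA μp haep) (hA μn haen)
      _ = (∫ u, (∫ s in Set.Ioc (0:ℝ) w, r (w - s + u) * fc s) ∂μp)
            - ∫ u, (∫ s in Set.Ioc (0:ℝ) w, r (w - s + u) * fc s) ∂μn := by
          rw [swap_lemma hFm (hbd μp hμpr), swap_lemma hFm (hbd μn hμnr)]
      _ = (∫ u, x₁ (w + u) ∂μp) - ∫ u, x₁ (w + u) ∂μn := by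
          rw [hkey μp haep, hkey μn haen]
      _ = sInt ν fun u => x₁ (w + u) := (sInt_eq _).symm
  -- integrability of the delayed term
  have hSm : Measurable fun w => sInt ν fun u => x₁ (w + u) := by
    have h1 : Measurable fun w : ℝ => ∫ u, x₁ (w + u) ∂μp := meas_int hx₁m
    have h2 : Measurable fun w : ℝ => ∫ u, x₁ (w + u) ∂μn := meas_int hx₁m
    exact h1.sub h2
  have hSint : IntervalIntegrable (fun w => sInt ν fun u => x₁ (w + u)) volume 0 t := by
    obtain ⟨Cx, hCx0, hCx⟩ := hx₁bdd t
    apply II_of_bdd hSm (C := Cx * (μp Set.univ).toReal + Cx * (μn Set.univ).toReal)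
    intro σ hσ
    rw [Set.uIoc_of_le ht] at hσ
    have hp : |∫ u, x₁ (σ + u) ∂μp| ≤ Cx * (μp Set.univ).toReal := by
      have hb : ∀ᵐ u ∂μp, ‖x₁ (σ + u)‖ ≤ Cx := haep.mono fun u hu => by
        rw [Real.norm_eq_abs]; exact hCx (σ + u) (by linarith [hu.2, hσ.2])
      have := norm_integral_le_of_norm_le_const hb
      rwa [Real.norm_eq_abs] at this
    have hn : |∫ u, x₁ (σ + u) ∂μn| ≤ Cx * (μn Set.univ).toReal := by
      have hb : ∀ᵐ u ∂μn, ‖x₁ (σ + u)‖ ≤ Cx := haen.mono fun u hu => by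
        rw [Real.norm_eq_abs]; exact hCx (σ + u) (by linarith [hu.2, hσ.2])
      have := norm_integral_le_of_norm_le_const hb
      rwa [Real.norm_eq_abs] at this
    calc |sInt ν fun u => x₁ (σ + u)|
        ≤ |∫ u, x₁ (σ + u) ∂μp| + |∫ u, x₁ (σ + u) ∂μn| := by
          rw [sInt_eq]; exact abs_sub'' _ _
      _ ≤ _ := add_le_add hp hn
  -- final chain
  have chain : (∫ s in (0:ℝ)..t, G (t - s) * fc s)
      = ∫ w in (0:ℝ)..t, sInt ν fun u => x₁ (w + u) := by
    have c1 : (∫ s in (0:ℝ)..t, G (t - s) * fc s)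
        = ∫ s in (0:ℝ)..t, (∫ w in (0:ℝ)..t, g (w - s)) * fc s := by
      apply intervalIntegral.integral_congr
      intro s hs
      rw [Set.uIcc_of_le ht] at hs
      show G (t - s) * fc s = (∫ w in (0:ℝ)..t, g (w - s)) * fc s
      rw [step2 s hs]
    have c2 : (∫ w in (0:ℝ)..t, ∫ s in (0:ℝ)..t, g (w - s) * fc s)
        = ∫ w in (0:ℝ)..t, sInt ν fun u => x₁ (w + u) := by
      apply intervalIntegral.integral_congr
      intro w hw
      rw [Set.uIcc_of_le ht] at hw
      show (∫ s in (0:ℝ)..t, g (w - s) * fc s) = sInt ν fun u => x₁ (w + u)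
      rw [step4 w hw, step5 w hw]
    rw [c1, step3, c2]
  rw [step1, chain,
    ← intervalIntegral.integral_add (hfc_cont.intervalIntegrable _ _) hSint]
  apply intervalIntegral.integral_congr
  intro s hs
  rw [Set.uIcc_of_le ht] at hs
  show fc s + (sInt ν fun u => x₁ (s + u)) = f s + sInt ν fun u => x₁ (s + u)
  rw [hfc_eq s hs.1]
end

section
/- Let τ > 0, let ν be a finite signed Borel measure on [-τ,0], let r be the differential resolvent of ν, extended by r(t) = 0 for t < 0, and assume r ∈ L¹(0,∞). Let f : [0,∞) → ℝ be continuous and suppose that for every δ ∈ (0,1], ∫_t^{t+δ} f(s) ds → 0 as t → ∞. Then (r ∗ f)(t) = ∫_0^t r(t-s) f(s) ds → 0 as t → ∞; that is, the solution of the forced delay equation x₁'(t) = ∫_{[-τ,0]} x₁(t+u) dν(u) + f(t) with zero initial function tends to zero at infinity. -/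
open MeasureTheory Filter Set

/-!
Let `F` be a primitive of `f`. A Baire category argument upgrades the pointwise hypothesis
`F (t + δ) - F t → 0` to a uniform bound on these increments, so that `g₁ t = F (t + 1) - F t`
and `H t = ∫₀¹ (F (t + v) - F t) dv` are bounded and tend to zero, and `f = g₁ - H'`.
Since `r` is absolutely continuous with `r 0 = 1` and `r' = K`, `K s = ∫ r (s + u) dν(u)`,
integration by parts gives `r ∗ f = r ∗ g₁ - H + H 0 • r - K ∗ H`. Both `r` and `K` are
integrable (`ν` is finite), and the convolution of an integrable kernel with a bounded function
tending to zero tends to zero; finally `r → 0` because `r` converges and is integrable.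
-/

open scoped Topology

lemma exists_Icc_forall_abs_sub_le_one {F : ℝ → ℝ} (hF : Continuous F)
    (h : ∀ δ ∈ Ioc (0:ℝ) 1, Tendsto (fun t => F (t + δ) - F t) atTop (𝓝 0)) :
    ∃ N a b : ℝ, a < b ∧ ∀ t ≥ N, ∀ v ∈ Icc a b, |F (t + v) - F t| ≤ 1 := by
  let S : ℕ → Set (Icc (0:ℝ) 1) := fun N => {v | ∀ t ≥ (N:ℝ), |F (t + v) - F t| ≤ 1}
  have hS_closed : ∀ N, IsClosed (S N) := fun N => by
    simp only [S, ofPred_forall]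
    exact isClosed_iInter fun t => isClosed_iInter fun _ => isClosed_le
      (by fun_prop) continuous_const
  have hS_cover : ⋃ N, S N = univ := by
    refine eq_univ_of_forall fun v => mem_iUnion.2 ?_
    rcases v.2.1.eq_or_lt with hv | hv
    · exact ⟨0, fun t _ => by simp [← hv]⟩
    · obtain ⟨a, ha⟩ := eventually_atTop.1
        ((h v ⟨hv, v.2.2⟩).abs.eventually (eventually_le_nhds (by norm_num : |(0:ℝ)| < 1)))
      exact ⟨⌈a⌉₊, fun t ht => ha t ((Nat.le_ceil a).trans ht)⟩
  obtain ⟨N, v₀, hv₀⟩ := nonempty_interior_of_iUnion_of_closed hS_closed hS_cover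
  obtain ⟨ε, hε, hball⟩ := Metric.mem_nhds_iff.1 (mem_interior_iff_mem_nhds.1 hv₀)
  have hv₀' := v₀.2
  refine ⟨N, max (v₀ - ε / 2) 0, min (v₀ + ε / 2) 1,
    max_lt (lt_min (by linarith) (by linarith [hv₀'.2])) (lt_min (by linarith [hv₀'.1]) one_pos),
    fun t ht v hv => ?_⟩
  have hv01 : v ∈ Icc (0:ℝ) 1 := ⟨le_of_max_le_right hv.1, le_of_le_min_right hv.2⟩
  refine hball (show (⟨v, hv01⟩ : Icc (0:ℝ) 1) ∈ Metric.ball v₀ ε from ?_) t ht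
  rw [Metric.mem_ball, Subtype.dist_eq, Real.dist_eq, abs_lt]
  constructor <;> linarith [le_of_max_le_left hv.1, le_of_le_min_left hv.2]

lemma exists_forall_abs_sub_le_of_Icc {F : ℝ → ℝ} {N a b : ℝ} (hab : a < b)
    (h : ∀ t ≥ N, ∀ v ∈ Icc a b, |F (t + v) - F t| ≤ 1) :
    ∃ C, ∀ t ≥ N, ∀ v ∈ Icc (0:ℝ) 1, |F (t + v) - F t| ≤ C := by
  set η := b - a
  have hη : 0 < η := sub_pos.2 hab
  -- a width `v ≤ η` is the difference of the two good widths `a + v` and `a`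
  have small : ∀ t ≥ N, ∀ v ∈ Icc 0 η, |F (t + v) - F t| ≤ 2 := fun t ht v hv => by
    have h₁ := h t ht (a + v) ⟨by linarith [hv.1], by linarith [hv.2]⟩
    have h₂ := h (t + v) (by linarith [hv.1]) a ⟨le_rfl, hab.le⟩
    rw [← add_assoc, add_right_comm] at h₁
    calc |F (t + v) - F t| = |(F (t + v + a) - F t) - (F (t + v + a) - F (t + v))| := by ring_nf
      _ ≤ 2 := (abs_sub _ _).trans (by linarith)
  have chain : ∀ n : ℕ, ∀ t ≥ N, ∀ v ∈ Icc 0 (n * η), |F (t + v) - F t| ≤ 2 * (n + 1) := by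
    intro n
    induction n with
    | zero =>
      exact fun t ht v hv =>
        (small t ht v ⟨hv.1, hv.2.trans (by simpa using hη.le)⟩).trans (by norm_num)
    | succ n ih =>
      intro t ht v hv
      rcases le_total v η with hvη | hηv
      · exact (small t ht v ⟨hv.1, hvη⟩).trans (by push_cast; linarith [n.cast_nonneg (α := ℝ)])
      · have h₁ := ih t ht (v - η) ⟨by linarith, by push_cast at hv; linarith [hv.2]⟩
        have h₂ := small (t + (v - η)) (by linarith) η ⟨hη.le, le_rfl⟩
        rw [add_assoc, sub_add_cancel] at h₂
        calc |F (t + v) - F t| = |(F (t + v) - F (t + (v - η))) + (F (t + (v - η)) - F t)| := by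
              ring_nf
          _ ≤ 2 * ((n + 1 : ℕ) + 1) := (abs_add_le _ _).trans (by push_cast; linarith)
  obtain ⟨n, hn⟩ := Archimedean.arch 1 hη
  rw [nsmul_eq_mul] at hn
  exact ⟨2 * (n + 1), fun t ht v hv => chain n t ht v ⟨hv.1, hv.2.trans hn⟩⟩

lemma exists_forall_abs_sub_le {F : ℝ → ℝ} (hF : Continuous F)
    (h : ∀ δ ∈ Ioc (0:ℝ) 1, Tendsto (fun t => F (t + δ) - F t) atTop (𝓝 0)) :
    ∃ C, ∀ t ≥ 0, ∀ v ∈ Icc (0:ℝ) 1, |F (t + v) - F t| ≤ C := by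
  obtain ⟨N, a, b, hab, hN⟩ := exists_Icc_forall_abs_sub_le_one hF h
  obtain ⟨C, hC⟩ := exists_forall_abs_sub_le_of_Icc hab hN
  obtain ⟨M, hM⟩ :=
    (isCompact_Icc (a := 0) (b := N + 1)).exists_bound_of_continuousOn hF.continuousOn
  refine ⟨max C (2 * M), fun t ht v hv => ?_⟩
  rcases le_total N t with hNt | htN
  · exact (hC t hNt v hv).trans (le_max_left _ _)
  · have h₁ := hM t ⟨ht, by linarith⟩
    have h₂ := hM (t + v) ⟨by linarith [hv.1], by linarith [hv.2]⟩
    exact ((abs_sub _ _).trans (by simp only [Real.norm_eq_abs] at *; linarith)).trans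
      (le_max_right _ _)

lemma hasDerivAt_integral_increment {F g : ℝ → ℝ} (hF : ∀ s, HasDerivAt F (g s) s) (s : ℝ) :
    HasDerivAt (fun x => ∫ v in (0:ℝ)..1, (F (x + v) - F x)) (F (s + 1) - F s - g s) s := by
  have hFc : Continuous F := continuous_iff_continuousAt.2 fun x => (hF x).continuousAt
  set Φ : ℝ → ℝ := fun x => ∫ y in (0:ℝ)..x, F y
  have hΦ : ∀ x, HasDerivAt Φ (F x) x := fun x => (hFc.integral_hasStrictDerivAt 0 x).hasDerivAt
  have hEq : (fun x => ∫ v in (0:ℝ)..1, (F (x + v) - F x)) = fun x => Φ (x + 1) - Φ x - F x := by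
    funext x
    have hint : IntervalIntegrable (fun v => F (x + v)) volume 0 1 :=
      (hFc.comp (continuous_const_add x)).intervalIntegrable _ _
    rw [intervalIntegral.integral_sub hint intervalIntegrable_const,
      intervalIntegral.integral_comp_add_left F x, add_zero,
      ← intervalIntegral.integral_interval_sub_left (hFc.intervalIntegrable 0 _)
        (hFc.intervalIntegrable 0 _)]
    simp [Φ]
  rw [hEq]
  exact (((hΦ (s + 1)).comp_add_const s 1).sub (hΦ s)).sub (hF s)

lemma tendsto_integral_increment {F : ℝ → ℝ} {C : ℝ} (hF : Continuous F)
    (hC : ∀ t ≥ 0, ∀ v ∈ Icc (0:ℝ) 1, |F (t + v) - F t| ≤ C)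
    (h : ∀ δ ∈ Ioc (0:ℝ) 1, Tendsto (fun t => F (t + δ) - F t) atTop (𝓝 0)) :
    Tendsto (fun t => ∫ v in (0:ℝ)..1, (F (t + v) - F t)) atTop (𝓝 0) := by
  have hDCT := intervalIntegral.tendsto_integral_filter_of_dominated_convergence (a := 0) (b := 1)
    (μ := volume) (l := atTop) (F := fun t v => F (t + v) - F t) (f := fun _ => 0) (fun _ => C)
    (Eventually.of_forall fun t => by fun_prop)
    (by
      filter_upwards [eventually_ge_atTop 0] with t ht
      refine ae_of_all _ fun v hv => ?_
      rw [uIoc_of_le zero_le_one] at hv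
      exact hC t ht v ⟨hv.1.le, hv.2⟩)
    intervalIntegrable_const
    (ae_of_all _ fun v hv => h v (by rwa [uIoc_of_le zero_le_one] at hv))
  simpa using hDCT

lemma tendsto_integral_comp_sub_mul {k φ : ℝ → ℝ} {M : ℝ} (hk : IntegrableOn k (Ioi 0))
    (hφ : Continuous φ) (hφM : ∀ s ≥ 0, |φ s| ≤ M) (hφ_lim : Tendsto φ atTop (𝓝 0)) :
    Tendsto (fun t => ∫ s in (0:ℝ)..t, k (t - s) * φ s) atTop (𝓝 0) := by
  let G : ℝ → ℝ → ℝ := fun t => (Iic t).indicator fun u => k u * φ (t - u)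
  have hG_bound : ∀ t u, ‖G t u‖ ≤ M * ‖k u‖ := fun t u => by
    by_cases hu : u ∈ Iic t
    · simp only [G]
      rw [indicator_of_mem hu, norm_mul, mul_comm]
      exact mul_le_mul_of_nonneg_right (hφM _ (sub_nonneg.2 hu)) (norm_nonneg _)
    · simp only [G]
      rw [indicator_of_notMem hu, norm_zero]
      exact mul_nonneg ((abs_nonneg _).trans (hφM 0 le_rfl)) (norm_nonneg _)
  have hG_lim : ∀ u, Tendsto (fun t => G t u) atTop (𝓝 0) := fun u => by
    have : Tendsto (fun t => k u * φ (t - u)) atTop (𝓝 0) := by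
      simpa [sub_eq_add_neg] using
        (hφ_lim.comp (tendsto_atTop_add_const_right _ (-u) tendsto_id)).const_mul (k u)
    refine this.congr' ?_
    filter_upwards [eventually_ge_atTop u] with t ht
    exact (indicator_of_mem (mem_Iic.2 ht) (fun u => k u * φ (t - u))).symm
  have hDCT := tendsto_integral_filter_of_dominated_convergence (μ := volume.restrict (Ioi 0))
    (F := G) _ (Eventually.of_forall fun t =>
      (hk.aestronglyMeasurable.mul
        (by fun_prop : Continuous fun u => φ (t - u)).aestronglyMeasurable).indicator
          measurableSet_Iic)
    (Eventually.of_forall fun t => ae_of_all _ (hG_bound t)) (hk.norm.const_mul M)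
    (ae_of_all _ hG_lim)
  rw [integral_zero] at hDCT
  refine hDCT.congr' ?_
  filter_upwards [eventually_ge_atTop 0] with t ht
  rw [setIntegral_indicator measurableSet_Iic, Ioi_inter_Iic, ← intervalIntegral.integral_of_le ht]
  simpa using (intervalIntegral.integral_comp_sub_left (a := 0) (b := t)
    (fun u => k u * φ (t - u)) t).symm

lemma integral_primitive_comp_sub_mul_deriv {K H q : ℝ → ℝ} {t : ℝ}
    (hK : IntervalIntegrable K volume 0 t) (hH : ∀ s, HasDerivAt H (q s) s) (hq : Continuous q) :
    ∫ s in (0:ℝ)..t, (∫ w in (0:ℝ)..(t - s), K w) * q s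
      = (∫ s in (0:ℝ)..t, K (t - s) * H s) - (∫ w in (0:ℝ)..t, K w) * H 0 := by
  set G : ℝ → ℝ := fun u => -H (t - u)
  have hG : ∀ u, HasDerivAt G (q (t - u)) u := fun u => by
    have h := ((hH (t - u)).comp_const_sub t u).neg
    rwa [neg_neg] at h
  have hG_C1 : ContDiff ℝ 1 G := contDiff_one_iff_deriv.2 ⟨fun u => (hG u).differentiableAt,
    by rw [funext fun u => (hG u).deriv]; fun_prop⟩
  have hP_deriv : ∫ u in (0:ℝ)..t, deriv (fun x => ∫ w in (0:ℝ)..x, K w) u * G u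
      = ∫ u in (0:ℝ)..t, K u * G u := by
    refine intervalIntegral.integral_congr_ae ?_
    filter_upwards [hK.ae_hasDerivAt_integral] with u hu hut
    rw [(hu (uIoc_subset_uIcc hut) 0 left_mem_uIcc).deriv]
  have parts := (hK.absolutelyContinuousOnInterval_intervalIntegral left_mem_uIcc
    ).integral_mul_deriv_eq_deriv_mul hG_C1.contDiffOn.absolutelyContinuousOnInterval
  rw [hP_deriv] at parts
  simp only [fun u => (hG u).deriv] at parts
  have hsub₁ := intervalIntegral.integral_comp_sub_left (a := 0) (b := t)
    (fun u => (∫ w in (0:ℝ)..u, K w) * q (t - u)) t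
  have hsub₂ := intervalIntegral.integral_comp_sub_left (a := 0) (b := t)
    (fun u => K u * H (t - u)) t
  simp only [sub_sub_cancel, sub_zero, sub_self] at hsub₁ hsub₂
  rw [hsub₁, hsub₂, parts]
  simp [G, intervalIntegral.integral_neg]
  ring

lemma tendsto_zero_of_eq_const_add_integral {r K : ℝ → ℝ} {c : ℝ}
    (hr : ∀ x ≥ 0, r x = c + ∫ w in (0:ℝ)..x, K w) (hK : IntegrableOn K (Ioi 0))
    (hr_int : IntegrableOn r (Ioi 0)) : Tendsto r atTop (𝓝 0) := by
  have hlim : Tendsto r atTop (𝓝 (c + ∫ w in Ioi 0, K w)) := by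
    refine ((intervalIntegral_tendsto_integral_Ioi 0 hK tendsto_id).const_add c).congr' ?_
    filter_upwards [eventually_ge_atTop 0] with x hx
    exact (hr x hx).symm
  rwa [IntegrableAtFilter.eq_zero_of_tendsto ⟨Ioi 0, Ioi_mem_atTop 0, hr_int⟩ ?_ hlim] at hlim
  intro s hs
  obtain ⟨b, hb⟩ := mem_atTop_sets.1 hs
  exact top_le_iff.1 (Real.volume_Ici (a := b) ▸ measure_mono hb)

lemma continuousOn_of_eq_one_add_integral {r K : ℝ → ℝ} {t : ℝ}
    (hr : ∀ x ≥ 0, r x = 1 + ∫ w in (0:ℝ)..x, K w) (hK : IntervalIntegrable K volume 0 t)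
    (ht : 0 ≤ t) : ContinuousOn r (Icc 0 t) := by
  rw [← uIcc_of_le ht]
  refine ((continuousOn_const (c := (1:ℝ))).add
    (hK.absolutelyContinuousOnInterval_intervalIntegral left_mem_uIcc).continuousOn).congr ?_
  intro x hx
  exact hr x (by rw [uIcc_of_le ht] at hx; exact hx.1)

lemma intervalIntegrable_comp_sub_mul {r φ : ℝ → ℝ} {t : ℝ} (hr : ContinuousOn r (Icc 0 t))
    (ht : 0 ≤ t) (hφ : Continuous φ) :
    IntervalIntegrable (fun s => r (t - s) * φ s) volume 0 t := by
  refine ContinuousOn.intervalIntegrable ((hr.comp (by fun_prop) ?_).mul hφ.continuousOn)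
  intro s hs
  rw [uIcc_of_le ht] at hs
  exact ⟨sub_nonneg.2 hs.2, by linarith [hs.1]⟩

lemma integral_comp_sub_mul_deriv_eq {r K H q : ℝ → ℝ} {t : ℝ}
    (hr : ∀ x ≥ 0, r x = 1 + ∫ w in (0:ℝ)..x, K w) (hK : IntervalIntegrable K volume 0 t)
    (ht : 0 ≤ t) (hH : ∀ s, HasDerivAt H (q s) s) (hq : Continuous q) :
    ∫ s in (0:ℝ)..t, r (t - s) * q s = H t - r t * H 0 + ∫ s in (0:ℝ)..t, K (t - s) * H s := by
  have hrq : ∫ s in (0:ℝ)..t, (r (t - s) - 1) * q s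
      = (∫ s in (0:ℝ)..t, K (t - s) * H s) - (∫ w in (0:ℝ)..t, K w) * H 0 := by
    rw [← integral_primitive_comp_sub_mul_deriv hK hH hq]
    refine intervalIntegral.integral_congr fun s hs => ?_
    rw [uIcc_of_le ht] at hs
    simp only [hr (t - s) (sub_nonneg.2 hs.2), add_sub_cancel_left]
  rw [intervalIntegral.integral_congr (g := fun s => (r (t - s) - 1) * q s + q s)
      (fun s _ => by ring), intervalIntegral.integral_add
      (intervalIntegrable_comp_sub_mul (r := fun x => r x - 1)
        ((continuousOn_of_eq_one_add_integral hr hK ht).sub continuousOn_const) ht hq)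
      (hq.intervalIntegrable _ _),
    hrq, intervalIntegral.integral_eq_sub_of_hasDerivAt (fun s _ => hH s)
      (hq.intervalIntegrable _ _), hr t ht]
  ring

lemma tendsto_integral_comp_sub_mul_of_tendsto_integral {r K g : ℝ → ℝ}
    (hr : ∀ x ≥ 0, r x = 1 + ∫ w in (0:ℝ)..x, K w) (hK : IntegrableOn K (Ioi 0))
    (hr_int : IntegrableOn r (Ioi 0)) (hg : Continuous g)
    (hg_avg : ∀ δ ∈ Ioc (0:ℝ) 1, Tendsto (fun t => ∫ s in t..(t + δ), g s) atTop (𝓝 0)) :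
    Tendsto (fun t => ∫ s in (0:ℝ)..t, r (t - s) * g s) atTop (𝓝 0) := by
  set F : ℝ → ℝ := fun x => ∫ y in (0:ℝ)..x, g y
  have hF : ∀ s, HasDerivAt F (g s) s := fun s => (hg.integral_hasStrictDerivAt 0 s).hasDerivAt
  have hF_cont : Continuous F := continuous_iff_continuousAt.2 fun s => (hF s).continuousAt
  have hF_incr : ∀ δ ∈ Ioc (0:ℝ) 1, Tendsto (fun t => F (t + δ) - F t) atTop (𝓝 0) :=
    fun δ hδ => (hg_avg δ hδ).congr fun t => (intervalIntegral.integral_interval_sub_left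
      (hg.intervalIntegrable _ _) (hg.intervalIntegrable _ _)).symm
  obtain ⟨C, hC⟩ := exists_forall_abs_sub_le hF_cont hF_incr
  set g₁ : ℝ → ℝ := fun s => F (s + 1) - F s
  set H : ℝ → ℝ := fun s => ∫ v in (0:ℝ)..1, (F (s + v) - F s)
  have hH : ∀ s, HasDerivAt H (g₁ s - g s) s := hasDerivAt_integral_increment hF
  have hg₁ : Continuous g₁ := by fun_prop
  have hH_bound : ∀ s ≥ 0, |H s| ≤ C := fun s hs => by
    have h := intervalIntegral.norm_integral_le_of_norm_le_const (C := C)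
      (f := fun v => F (s + v) - F s) fun v hv =>
        hC s hs v (by rw [uIoc_of_le zero_le_one] at hv; exact ⟨hv.1.le, hv.2⟩)
    rwa [sub_zero, abs_one, mul_one] at h
  have hH_lim : Tendsto H atTop (𝓝 0) := tendsto_integral_increment hF_cont hC hF_incr
  have hr_lim : Tendsto r atTop (𝓝 0) := tendsto_zero_of_eq_const_add_integral hr hK hr_int
  have hrg₁ := tendsto_integral_comp_sub_mul hr_int hg₁
    (fun s hs => hC s hs 1 ⟨zero_le_one, le_rfl⟩) (hF_incr 1 ⟨one_pos, le_rfl⟩)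
  have hKH := tendsto_integral_comp_sub_mul hK
    (continuous_iff_continuousAt.2 fun s => (hH s).continuousAt) hH_bound hH_lim
  have hlim := hrg₁.sub ((hH_lim.sub (hr_lim.mul_const (H 0))).add hKH)
  simp only [zero_mul, sub_zero, add_zero] at hlim
  refine hlim.congr' ?_
  filter_upwards [eventually_ge_atTop 0] with t ht
  have hK_t : IntervalIntegrable K volume 0 t :=
    (intervalIntegrable_iff_integrableOn_Ioc_of_le ht).2 (hK.mono_set Ioc_subset_Ioi_self)
  have hr_cont := continuousOn_of_eq_one_add_integral hr hK_t ht
  rw [← integral_comp_sub_mul_deriv_eq hr hK_t ht hH (hg₁.sub hg),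
    ← intervalIntegral.integral_sub (intervalIntegrable_comp_sub_mul hr_cont ht hg₁)
      (intervalIntegrable_comp_sub_mul (φ := fun s => g₁ s - g s) hr_cont ht (hg₁.sub hg))]
  exact intervalIntegral.integral_congr fun s _ => by ring

lemma integrable_integral_comp_add {μ : Measure ℝ} [IsFiniteMeasure μ] {r : ℝ → ℝ}
    (hrm : Measurable r) (hr : Integrable r) : Integrable fun s => ∫ u, r (s + u) ∂μ := by
  have h : Integrable (fun p : ℝ × ℝ => r (p.1 + p.2)) (volume.prod μ) := by
    rw [integrable_prod_iff' (f := fun p : ℝ × ℝ => r (p.1 + p.2))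
      (hrm.comp measurable_add).aestronglyMeasurable]
    refine ⟨ae_of_all _ fun u => hr.comp_add_right u, ?_⟩
    simp_rw [integral_add_right_eq_self (fun x => ‖r x‖)]
    exact integrable_const _
  exact h.integral_prod_left

lemma integrable_sInt_comp_add (ν : SignedMeasure ℝ) {r : ℝ → ℝ} (hrm : Measurable r)
    (hr : Integrable r) : Integrable fun s => sInt ν fun u => r (s + u) :=
  (integrable_integral_comp_add hrm hr).sub (integrable_integral_comp_add hrm hr)

namespace IsResolvent

variable {ν : SignedMeasure ℝ} {r : ℝ → ℝ}

lemma measurable (hr : IsResolvent ν r) : Measurable r := by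
  have hr_eq : r = (Ici 0).indicator fun x => r (max x 0) := by
    funext x
    by_cases hx : 0 ≤ x
    · rw [indicator_of_mem (mem_Ici.2 hx), max_eq_left hx]
    · rw [indicator_of_notMem (by simpa using hx), hr.1 x (not_le.1 hx)]
  rw [hr_eq]
  exact (hr.2.1.comp_continuous (by fun_prop) fun x => le_max_right x 0).measurable.indicator
    measurableSet_Ici

lemma integrable (hr : IsResolvent ν r) (hr_int : IntegrableOn r (Ioi 0)) : Integrable r := by
  rw [← integrableOn_univ, ← Iio_union_Ici (a := (0:ℝ))]
  exact (integrableOn_zero.congr_fun (fun x hx => (hr.1 x hx).symm) measurableSet_Iio).union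
    (by rwa [integrableOn_Ici_iff_integrableOn_Ioi])

end IsResolvent

theorem forced_solution_tendsto_zero_of_avg_general
    (ν : MeasureTheory.SignedMeasure ℝ)
    (r : ℝ → ℝ) (hr : IsResolvent ν r)
    (hrL1 : IntegrableOn r (Set.Ioi (0:ℝ)))
    (f : ℝ → ℝ) (hf : ContinuousOn f (Set.Ici (0:ℝ)))
    (havg : ∀ δ ∈ Set.Ioc (0:ℝ) 1,
      Tendsto (fun t => ∫ s in t..(t + δ), f s) atTop (nhds 0)) :
    Tendsto (fun t => ∫ s in (0:ℝ)..t, r (t - s) * f s) atTop (nhds 0) := by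
  have hK := (integrable_sInt_comp_add ν hr.measurable (hr.integrable hrL1)).integrableOn
    (s := Ioi 0)
  set g : ℝ → ℝ := fun s => f (max s 0)
  have hg : Continuous g := hf.comp_continuous (by fun_prop) fun x => le_max_right x 0
  have hgf : ∀ s ≥ 0, g s = f s := fun s hs => congrArg f (max_eq_left hs)
  refine (tendsto_integral_comp_sub_mul_of_tendsto_integral hr.2.2 hK hrL1 hg
    fun δ hδ => ?_).congr' ?_
  · refine (havg δ hδ).congr' ?_
    filter_upwards [eventually_ge_atTop 0] with t ht
    refine intervalIntegral.integral_congr fun s hs => (hgf s ?_).symm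
    rw [uIcc_of_le (by linarith [hδ.1])] at hs
    exact ht.trans hs.1
  · filter_upwards [eventually_ge_atTop 0] with t ht
    refine intervalIntegral.integral_congr fun s hs => ?_
    rw [uIcc_of_le ht] at hs
    simp only [hgf s hs.1]

/-- If the differential resolvent `r` of `ν` is integrable on `(0,∞)` and the sectional
averages `∫_t^{t+δ} f(s) ds` tend to zero for every `δ ∈ (0,1]`, then the solution
`(r ∗ f)(t) = ∫_0^t r(t-s) f(s) ds` of the forced delay equation with zero initial function
tends to zero as `t → ∞`. -/
theorem forced_solution_tendsto_zero_of_avg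
    (τ : ℝ) (hτ : 0 < τ) (ν : MeasureTheory.SignedMeasure ℝ)
    (hν : ν.totalVariation (Set.Icc (-τ) 0)ᶜ = 0)
    (r : ℝ → ℝ) (hr : IsResolvent ν r)
    (hrL1 : IntegrableOn r (Set.Ioi (0:ℝ)))
    (f : ℝ → ℝ) (hf : ContinuousOn f (Set.Ici (0:ℝ)))
    (havg : ∀ δ ∈ Set.Ioc (0:ℝ) 1,
      Tendsto (fun t => ∫ s in t..(t + δ), f s) atTop (nhds 0)) :
    Tendsto (fun t => ∫ s in (0:ℝ)..t, r (t - s) * f s) atTop (nhds 0) :=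
  forced_solution_tendsto_zero_of_avg_general ν r hr hrL1 f hf havg
end

section
/- Let τ > 0, let ν be a finite signed Borel measure on [-τ,0], let r be the differential resolvent of ν, extended by r(t) = 0 for t < 0, and let f : [0,∞) → ℝ be continuous. If (r ∗ f)(t) = ∫_0^t r(t-s) f(s) ds is bounded and tends to 0 as t → ∞, then for every δ ∈ (0,1], ∫_t^{t+δ} f(s) ds → 0 as t → ∞. -/
open MeasureTheory Filter Set

namespace AvgAuxPrf

/-- the forcing extended continuously to all of `ℝ` -/
noncomputable def fext (f : ℝ → ℝ) : ℝ → ℝ := fun s => f (max s 0)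

/-- the solution `x = r ∗ f` -/
noncomputable def xf (r f : ℝ → ℝ) (t : ℝ) : ℝ :=
  ∫ s in Set.Ioc (0:ℝ) t, r (t - s) * fext f s

/-- the convolution kernel `H(w) = ∫ r(w+u) dν(u)` -/
noncomputable def Hf (ν : MeasureTheory.SignedMeasure ℝ) (r : ℝ → ℝ) (w : ℝ) : ℝ :=
  (∫ u, r (w + u) ∂ν.toJordanDecomposition.posPart) -
    ∫ u, r (w + u) ∂ν.toJordanDecomposition.negPart

/-- `G(σ) = ∫ x(σ+u) dν(u)` -/
noncomputable def Gf (ν : MeasureTheory.SignedMeasure ℝ) (r f : ℝ → ℝ) (σ : ℝ) : ℝ :=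
  (∫ u, xf r f (σ + u) ∂ν.toJordanDecomposition.posPart) -
    ∫ u, xf r f (σ + u) ∂ν.toJordanDecomposition.negPart

lemma xf_def (r f : ℝ → ℝ) (t : ℝ) :
    xf r f t = ∫ s in Set.Ioc (0:ℝ) t, r (t - s) * fext f s := rfl

lemma resolvent_measurable {r : ℝ → ℝ} (h0 : ∀ t < (0:ℝ), r t = 0)
    (hc : ContinuousOn r (Set.Ici 0)) : Measurable r := by
  have hcont : Continuous fun t : ℝ => r (max t 0) :=
    hc.comp_continuous (continuous_id.max continuous_const) fun x => Set.mem_Ici.2 (le_max_right _ _)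
  have hre : r = Set.piecewise (Set.Ici (0:ℝ)) (fun t => r (max t 0)) fun _ => 0 := by
    funext t
    by_cases ht : (0:ℝ) ≤ t
    · simp [Set.piecewise, ht, max_eq_left ht]
    · simp [Set.piecewise, ht, h0 t (lt_of_not_ge ht)]
  rw [hre]
  exact Measurable.piecewise measurableSet_Ici hcont.measurable measurable_const

lemma resolvent_bdd {r : ℝ → ℝ} (h0 : ∀ t < (0:ℝ), r t = 0)
    (hc : ContinuousOn r (Set.Ici 0)) (T : ℝ) :
    ∃ C, 0 ≤ C ∧ ∀ v ≤ T, |r v| ≤ C := by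
  obtain ⟨C, hC⟩ :=
    (isCompact_Icc (a := (0:ℝ)) (b := max T 0)).exists_bound_of_continuousOn
      (hc.mono (Set.Icc_subset_Ici_self))
  refine ⟨max C 0, le_max_right _ _, fun v hv => ?_⟩
  rcases lt_or_ge v 0 with h | h
  · rw [h0 v h]; simpa using le_max_right C 0
  · have := hC v ⟨h, le_trans hv (le_max_left _ _)⟩
    simpa [Real.norm_eq_abs] using le_trans this (le_max_left C 0)

lemma ae_prod_mem {μ ρ : Measure ℝ} [SFinite μ] [SFinite ρ] {S I : Set ℝ}
    (hS : μ Sᶜ = 0) (hI : ρ Iᶜ = 0) :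
    ∀ᵐ p ∂(μ.prod ρ), p.1 ∈ S ∧ p.2 ∈ I := by
  have h1 : (μ.prod ρ) (Sᶜ ×ˢ (univ : Set ℝ)) = 0 := by
    rw [Measure.prod_prod, hS, zero_mul]
  have h2 : (μ.prod ρ) ((univ : Set ℝ) ×ˢ Iᶜ) = 0 := by
    rw [Measure.prod_prod, hI, mul_zero]
  rw [MeasureTheory.ae_iff]
  refine measure_mono_null ?_ (measure_union_null h1 h2)
  intro p hp
  simp only [mem_setOf_eq, not_and_or] at hp
  rcases hp with h | h
  · exact Or.inl ⟨h, trivial⟩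
  · exact Or.inr ⟨trivial, h⟩

end AvgAuxPrf

open AvgAuxPrf

/-- If the solution `(r ∗ f)(t) = ∫_0^t r(t-s) f(s) ds` of the forced delay equation with
zero initial function is bounded and tends to zero as `t → ∞`, then for every `δ ∈ (0,1]`
the sectional average `∫_t^{t+δ} f(s) ds` tends to zero as `t → ∞`. -/
theorem avg_tendsto_zero_of_forced_solution
    (τ : ℝ) (hτ : 0 < τ) (ν : MeasureTheory.SignedMeasure ℝ)
    (hν : ν.totalVariation (Set.Icc (-τ) 0)ᶜ = 0)
    (r : ℝ → ℝ) (hr : IsResolvent ν r)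
    (f : ℝ → ℝ) (hf : ContinuousOn f (Set.Ici (0:ℝ)))
    (hbdd : ∃ M : ℝ, ∀ t ≥ (0:ℝ), |∫ s in (0:ℝ)..t, r (t - s) * f s| ≤ M)
    (hto0 : Tendsto (fun t => ∫ s in (0:ℝ)..t, r (t - s) * f s) atTop (nhds 0)) :
    ∀ δ ∈ Set.Ioc (0:ℝ) 1,
      Tendsto (fun t => ∫ s in t..(t + δ), f s) atTop (nhds 0) := by
  intro δ hδ
  obtain ⟨hr0, hrc, hres⟩ := hr
  have hres' : ∀ t ≥ (0:ℝ), r t = 1 + ∫ s in (0:ℝ)..t, Hf ν r s := hres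
  have hrm : Measurable r := resolvent_measurable hr0 hrc
  have rbdd := resolvent_bdd hr0 hrc
  -- the two Jordan parts are carried by `Icc (-τ) 0`
  have hsum : ν.toJordanDecomposition.posPart (Set.Icc (-τ) 0)ᶜ +
      ν.toJordanDecomposition.negPart (Set.Icc (-τ) 0)ᶜ = 0 := by
    have h : (ν.toJordanDecomposition.posPart + ν.toJordanDecomposition.negPart)
        (Set.Icc (-τ) 0)ᶜ = 0 := hν
    simpa [Measure.coe_add, Pi.add_apply] using h
  have hμp : ν.toJordanDecomposition.posPart (Set.Icc (-τ) 0)ᶜ = 0 := (add_eq_zero.1 hsum).1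
  have hμn : ν.toJordanDecomposition.negPart (Set.Icc (-τ) 0)ᶜ = 0 := (add_eq_zero.1 hsum).2
  have aep : ∀ᵐ u ∂ν.toJordanDecomposition.posPart, u ∈ Set.Icc (-τ) 0 := by
    rw [MeasureTheory.ae_iff]; exact hμp
  have aen : ∀ᵐ u ∂ν.toJordanDecomposition.negPart, u ∈ Set.Icc (-τ) 0 := by
    rw [MeasureTheory.ae_iff]; exact hμn
  -- the extended forcing
  have hf'c : Continuous (fext f) :=
    hf.comp_continuous (continuous_id.max continuous_const) fun x => Set.mem_Ici.2 (le_max_right _ _)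
  have hf'eq : ∀ s : ℝ, 0 ≤ s → fext f s = f s := fun s hs => by
    simp [fext, max_eq_left hs]
  have hf'bdd : ∀ a b : ℝ, ∃ D, 0 ≤ D ∧ ∀ s ∈ Set.Icc a b, |fext f s| ≤ D := by
    intro a b
    obtain ⟨D, hD⟩ :=
      (isCompact_Icc (a := a) (b := b)).exists_bound_of_continuousOn hf'c.continuousOn
    refine ⟨max D 0, le_max_right _ _, fun s hs => ?_⟩
    simpa [Real.norm_eq_abs] using le_trans (hD s hs) (le_max_left D 0)
  -- x vanishes on the negative half line
  have hx0 : ∀ v : ℝ, v ≤ 0 → xf r f v = 0 := by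
    intro v hv
    rw [xf_def, Set.Ioc_eq_empty (not_lt.2 hv)]
    simp
  -- integrability of the convolution integrand
  have hconv_int : ∀ c a b : ℝ,
      IntegrableOn (fun s => r (c - s) * fext f s) (Set.Ioc a b) volume := by
    intro c a b
    rcases le_or_gt b a with h | h
    · rw [Set.Ioc_eq_empty (not_lt.2 h)]; exact integrableOn_empty
    obtain ⟨C, hC0, hC⟩ := rbdd (max (c - a) 0)
    obtain ⟨D, hD0, hD⟩ := hf'bdd a b
    refine (integrable_const (C * D)).mono'
      (((hrm.comp (measurable_const.sub measurable_id)).mul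
        hf'c.measurable).aestronglyMeasurable) ?_
    refine (ae_restrict_mem measurableSet_Ioc).mono fun s hs => ?_
    have h1 : |r (c - s)| ≤ C :=
      hC _ (le_trans (by linarith [hs.1]) (le_max_left (c - a) 0))
    have h2 : |fext f s| ≤ D := hD s ⟨hs.1.le, hs.2⟩
    calc ‖r (c - s) * fext f s‖ = |r (c - s)| * |fext f s| := abs_mul _ _
      _ ≤ C * D := mul_le_mul h1 h2 (abs_nonneg _) hC0
  -- shifting lemma
  have hxshift : ∀ u : ℝ, u ≤ 0 → ∀ σ : ℝ,
      (∫ s in Set.Ioc (0:ℝ) σ, r (σ + u - s) * fext f s) = xf r f (σ + u) := by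
    intro u hu σ
    rcases le_or_gt (σ + u) 0 with h | h
    · rw [hx0 _ h]
      rw [setIntegral_congr_fun measurableSet_Ioc
        (g := fun _ => (0:ℝ)) fun s hs => by
          rw [hr0 (σ + u - s) (by linarith [hs.1]), zero_mul]]
      simp
    · have hsplit : Set.Ioc (0:ℝ) σ = Set.Ioc 0 (σ + u) ∪ Set.Ioc (σ + u) σ :=
        (Set.Ioc_union_Ioc_eq_Ioc h.le (by linarith)).symm
      rw [hsplit, setIntegral_union (Set.Ioc_disjoint_Ioc_of_le le_rfl) measurableSet_Ioc
        (hconv_int (σ + u) 0 (σ + u)) (hconv_int (σ + u) (σ + u) σ)]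
      have hzero : (∫ s in Set.Ioc (σ + u) σ, r (σ + u - s) * fext f s) = 0 := by
        rw [setIntegral_congr_fun measurableSet_Ioc (g := fun _ => (0:ℝ))
          fun s hs => by rw [hr0 (σ + u - s) (by linarith [hs.1]), zero_mul]]
        simp
      rw [hzero, add_zero, xf_def]
  -- the inner Fubini: for σ ≥ 0, ∫_0^σ H(σ-s) f(s) ds = G(σ)
  have hinner : ∀ σ : ℝ, 0 ≤ σ →
      (∫ s in Set.Ioc (0:ℝ) σ, Hf ν r (σ - s) * fext f s) = Gf ν r f σ := by
    intro σ hσ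
    obtain ⟨C, hC0, hC⟩ := rbdd σ
    obtain ⟨D, hD0, hD⟩ := hf'bdd 0 σ
    have hμTc : (volume.restrict (Set.Ioc (0:ℝ) σ)) (Set.Ioc (0:ℝ) σ)ᶜ = 0 := by
      rw [Measure.restrict_apply measurableSet_Ioc.compl]; simp
    have hmeas : Measurable fun p : ℝ × ℝ => r (σ + p.2 - p.1) * fext f p.1 :=
      (hrm.comp ((measurable_const.add measurable_snd).sub measurable_fst)).mul
        (hf'c.measurable.comp measurable_fst)
    have hprod : ∀ (μ : Measure ℝ) [IsFiniteMeasure μ], μ (Set.Icc (-τ) 0)ᶜ = 0 →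
        Integrable (Function.uncurry fun s u => r (σ + u - s) * fext f s)
          ((volume.restrict (Set.Ioc (0:ℝ) σ)).prod μ) := by
      intro μ _ hμ
      refine (integrable_const (C * D)).mono' hmeas.aestronglyMeasurable ?_
      refine (ae_prod_mem hμTc hμ).mono fun p hp => ?_
      have h1 : |r (σ + p.2 - p.1)| ≤ C := hC _ (by linarith [hp.1.1, hp.2.2])
      have h2 : |fext f p.1| ≤ D := hD _ ⟨hp.1.1.le, hp.1.2⟩
      calc ‖r (σ + p.2 - p.1) * fext f p.1‖
          = |r (σ + p.2 - p.1)| * |fext f p.1| := abs_mul _ _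
        _ ≤ C * D := mul_le_mul h1 h2 (abs_nonneg _) hC0
    have hswap : ∀ (μ : Measure ℝ) [IsFiniteMeasure μ], μ (Set.Icc (-τ) 0)ᶜ = 0 →
        (∫ s in Set.Ioc (0:ℝ) σ, ∫ u, r (σ + u - s) * fext f s ∂μ) =
          ∫ u, xf r f (σ + u) ∂μ := by
      intro μ _ hμ
      rw [MeasureTheory.integral_integral_swap (hprod μ hμ)]
      refine integral_congr_ae ?_
      have aeμ : ∀ᵐ u ∂μ, u ∈ Set.Icc (-τ) 0 := by
        rw [MeasureTheory.ae_iff]; exact hμ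
      exact aeμ.mono fun u hu => hxshift u hu.2 σ
    have hstep1 : (∫ s in Set.Ioc (0:ℝ) σ, Hf ν r (σ - s) * fext f s) =
        ∫ s in Set.Ioc (0:ℝ) σ,
          ((∫ u, r (σ + u - s) ∂ν.toJordanDecomposition.posPart) -
            ∫ u, r (σ + u - s) ∂ν.toJordanDecomposition.negPart) * fext f s := by
      refine setIntegral_congr_fun measurableSet_Ioc fun s _ => ?_
      have harg : ∀ u : ℝ, σ - s + u = σ + u - s := fun u => by ring
      simp only [Hf, harg]
    have hint1 : ∀ (μ : Measure ℝ) [IsFiniteMeasure μ], μ (Set.Icc (-τ) 0)ᶜ = 0 →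
        IntegrableOn
          (fun s => (∫ u, r (σ + u - s) ∂μ) * fext f s) (Set.Ioc (0:ℝ) σ) volume := by
      intro μ _ hμ
      refine ((hprod μ hμ).integral_prod_left).congr (ae_of_all _ fun s => ?_)
      exact MeasureTheory.integral_mul_const (fext f s) fun u => r (σ + u - s)
    rw [hstep1]
    have hsub : (∫ s in Set.Ioc (0:ℝ) σ,
          ((∫ u, r (σ + u - s) ∂ν.toJordanDecomposition.posPart) -
            ∫ u, r (σ + u - s) ∂ν.toJordanDecomposition.negPart) * fext f s) =
        (∫ s in Set.Ioc (0:ℝ) σ,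
          (∫ u, r (σ + u - s) ∂ν.toJordanDecomposition.posPart) * fext f s) -
        ∫ s in Set.Ioc (0:ℝ) σ,
          (∫ u, r (σ + u - s) ∂ν.toJordanDecomposition.negPart) * fext f s := by
      simp only [sub_mul]
      exact integral_sub (hint1 _ hμp) (hint1 _ hμn)
    rw [hsub]
    have hpull : ∀ (μ : Measure ℝ) [IsFiniteMeasure μ], μ (Set.Icc (-τ) 0)ᶜ = 0 →
        (∫ s in Set.Ioc (0:ℝ) σ, (∫ u, r (σ + u - s) ∂μ) * fext f s) =
          ∫ u, xf r f (σ + u) ∂μ := by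
      intro μ _ hμ
      rw [← hswap μ hμ]
      refine setIntegral_congr_fun measurableSet_Ioc fun s _ => ?_
      exact (MeasureTheory.integral_mul_const (fext f s) fun u => r (σ + u - s)).symm
    rw [hpull _ hμp, hpull _ hμn]
    rfl
  -- measurability and boundedness of H
  have hHm : Measurable (Hf ν r) := by
    have h1 : StronglyMeasurable fun w : ℝ =>
        ∫ u, r (w + u) ∂ν.toJordanDecomposition.posPart :=
      MeasureTheory.StronglyMeasurable.integral_prod_right
        (f := fun w u => r (w + u)) (hrm.comp measurable_add).stronglyMeasurable
    have h2 : StronglyMeasurable fun w : ℝ =>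
        ∫ u, r (w + u) ∂ν.toJordanDecomposition.negPart :=
      MeasureTheory.StronglyMeasurable.integral_prod_right
        (f := fun w u => r (w + u)) (hrm.comp measurable_add).stronglyMeasurable
    exact (h1.measurable).sub (h2.measurable)
  have hHbdd : ∀ T : ℝ, ∃ C, 0 ≤ C ∧ ∀ w ≤ T, |Hf ν r w| ≤ C := by
    intro T
    obtain ⟨C, hC0, hC⟩ := rbdd T
    refine ⟨C * (ν.toJordanDecomposition.posPart Set.univ).toReal +
      C * (ν.toJordanDecomposition.negPart Set.univ).toReal,
      by positivity, fun w hw => ?_⟩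
    have hb : ∀ (μ : Measure ℝ) [IsFiniteMeasure μ], (∀ᵐ u ∂μ, u ∈ Set.Icc (-τ) 0) →
        ‖∫ u, r (w + u) ∂μ‖ ≤ C * (μ Set.univ).toReal := by
      intro μ _ hμ
      refine norm_integral_le_of_norm_le_const (hμ.mono fun u hu => ?_)
      simpa [Real.norm_eq_abs] using hC (w + u) (by linarith [hu.2])
    calc |Hf ν r w| = ‖(∫ u, r (w + u) ∂ν.toJordanDecomposition.posPart) -
          ∫ u, r (w + u) ∂ν.toJordanDecomposition.negPart‖ := (Real.norm_eq_abs _).symm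
      _ ≤ ‖∫ u, r (w + u) ∂ν.toJordanDecomposition.posPart‖ +
          ‖∫ u, r (w + u) ∂ν.toJordanDecomposition.negPart‖ := norm_sub_le _ _
      _ ≤ C * (ν.toJordanDecomposition.posPart Set.univ).toReal +
          C * (ν.toJordanDecomposition.negPart Set.univ).toReal :=
        add_le_add (hb _ aep) (hb _ aen)
  -- the key identity
  have hkey : ∀ T : ℝ, 0 ≤ T → IntegrableOn (Gf ν r f) (Set.Ioc 0 T) volume ∧
      xf r f T = (∫ s in Set.Ioc (0:ℝ) T, fext f s) +
        ∫ σ in Set.Ioc (0:ℝ) T, Gf ν r f σ := by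
    intro T hT
    set Φ : ℝ × ℝ → ℝ :=
      fun p => if p.1 < p.2 then Hf ν r (p.2 - p.1) * fext f p.1 else 0 with hΦ
    have hμTc : (volume.restrict (Set.Ioc (0:ℝ) T)) (Set.Ioc (0:ℝ) T)ᶜ = 0 := by
      rw [Measure.restrict_apply measurableSet_Ioc.compl]; simp
    have hΦm : Measurable Φ :=
      Measurable.ite (measurableSet_lt measurable_fst measurable_snd)
        ((hHm.comp (measurable_snd.sub measurable_fst)).mul
          (hf'c.measurable.comp measurable_fst)) measurable_const
    obtain ⟨CH, hCH0, hCH⟩ := hHbdd T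
    obtain ⟨D, hD0, hD⟩ := hf'bdd 0 T
    have hΦint : Integrable Φ
        ((volume.restrict (Set.Ioc (0:ℝ) T)).prod (volume.restrict (Set.Ioc (0:ℝ) T))) := by
      refine (integrable_const (CH * D)).mono' hΦm.aestronglyMeasurable ?_
      refine (ae_prod_mem hμTc hμTc).mono fun p hp => ?_
      by_cases h : p.1 < p.2
      · have h1 : |Hf ν r (p.2 - p.1)| ≤ CH := hCH _ (by linarith [hp.1.1, hp.2.2])
        have h2 : |fext f p.1| ≤ D := hD _ ⟨hp.1.1.le, hp.1.2⟩
        calc ‖Φ p‖ = |Hf ν r (p.2 - p.1)| * |fext f p.1| := by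
              rw [hΦ]; simp only [h, if_true]; exact abs_mul _ _
          _ ≤ CH * D := mul_le_mul h1 h2 (abs_nonneg _) hCH0
      · rw [hΦ]; simp only [h, if_false]; simpa using mul_nonneg hCH0 hD0
    have hswap := MeasureTheory.integral_integral_swap
      (f := fun s σ => Φ (s, σ)) (μ := volume.restrict (Set.Ioc (0:ℝ) T))
      (ν := volume.restrict (Set.Ioc (0:ℝ) T)) hΦint
    have hL : ∀ s ∈ Set.Ioc (0:ℝ) T,
        (∫ σ in Set.Ioc (0:ℝ) T, Φ (s, σ)) = (r (T - s) - 1) * fext f s := by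
      intro s hs
      have h1 : ∀ σ : ℝ, Φ (s, σ) =
          (Set.Ioi s).indicator (fun σ => Hf ν r (σ - s) * fext f s) σ := by
        intro σ
        by_cases h : s < σ <;> simp [hΦ, h, Set.indicator, Set.mem_Ioi]
      calc (∫ σ in Set.Ioc (0:ℝ) T, Φ (s, σ)) =
            ∫ σ in Set.Ioc (0:ℝ) T,
              (Set.Ioi s).indicator (fun σ => Hf ν r (σ - s) * fext f s) σ :=
          integral_congr_ae (ae_of_all _ h1)
        _ = ∫ σ in Set.Ioc (0:ℝ) T ∩ Set.Ioi s, Hf ν r (σ - s) * fext f s :=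
          setIntegral_indicator measurableSet_Ioi
        _ = ∫ σ in Set.Ioc s T, Hf ν r (σ - s) * fext f s := by
          rw [Set.Ioc_inter_Ioi, sup_eq_right.2 hs.1.le]
        _ = (∫ σ in Set.Ioc s T, Hf ν r (σ - s)) * fext f s :=
          MeasureTheory.integral_mul_const _ _
        _ = (r (T - s) - 1) * fext f s := by
          have harg : (∫ σ in Set.Ioc s T, Hf ν r (σ - s)) =
              ∫ w in (0:ℝ)..(T - s), Hf ν r w := by
            rw [← intervalIntegral.integral_of_le hs.2,
              intervalIntegral.integral_comp_sub_right (fun w => Hf ν r w) s, sub_self]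
          rw [harg, hres' (T - s) (by linarith [hs.2])]
          ring
    have hR : ∀ σ ∈ Set.Ioc (0:ℝ) T,
        (∫ s in Set.Ioc (0:ℝ) T, Φ (s, σ)) = Gf ν r f σ := by
      intro σ hσ
      have h1 : ∀ s : ℝ, Φ (s, σ) =
          (Set.Iio σ).indicator (fun s => Hf ν r (σ - s) * fext f s) s := by
        intro s
        by_cases h : s < σ <;> simp [hΦ, h, Set.indicator, Set.mem_Iio]
      have hset : Set.Ioc (0:ℝ) T ∩ Set.Iio σ = Set.Ioo 0 σ := by
        ext y
        simp only [Set.mem_inter_iff, Set.mem_Ioc, Set.mem_Iio, Set.mem_Ioo]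
        constructor
        · rintro ⟨⟨h1', _⟩, h3⟩; exact ⟨h1', h3⟩
        · rintro ⟨h1', h3⟩; exact ⟨⟨h1', h3.le.trans hσ.2⟩, h3⟩
      calc (∫ s in Set.Ioc (0:ℝ) T, Φ (s, σ)) =
            ∫ s in Set.Ioc (0:ℝ) T,
              (Set.Iio σ).indicator (fun s => Hf ν r (σ - s) * fext f s) s :=
          integral_congr_ae (ae_of_all _ h1)
        _ = ∫ s in Set.Ioc (0:ℝ) T ∩ Set.Iio σ, Hf ν r (σ - s) * fext f s :=
          setIntegral_indicator measurableSet_Iio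
        _ = ∫ s in Set.Ioo (0:ℝ) σ, Hf ν r (σ - s) * fext f s := by rw [hset]
        _ = ∫ s in Set.Ioc (0:ℝ) σ, Hf ν r (σ - s) * fext f s :=
          (MeasureTheory.integral_Ioc_eq_integral_Ioo).symm
        _ = Gf ν r f σ := hinner σ hσ.1.le
    have hGint : IntegrableOn (Gf ν r f) (Set.Ioc 0 T) volume := by
      refine (hΦint.integral_prod_right).congr ?_
      exact (ae_restrict_mem measurableSet_Ioc).mono fun σ hσ => hR σ hσ
    refine ⟨hGint, ?_⟩
    have hf'int : IntegrableOn (fext f) (Set.Ioc (0:ℝ) T) volume :=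
      hf'c.integrableOn_Ioc
    have hLHS : (∫ s in Set.Ioc (0:ℝ) T, ∫ σ in Set.Ioc (0:ℝ) T, Φ (s, σ)) =
        xf r f T - ∫ s in Set.Ioc (0:ℝ) T, fext f s := by
      rw [setIntegral_congr_fun measurableSet_Ioc hL]
      simp only [sub_mul, one_mul]
      rw [integral_sub (hconv_int T 0 T) hf'int, xf_def]
    have hRHS : (∫ σ in Set.Ioc (0:ℝ) T, ∫ s in Set.Ioc (0:ℝ) T, Φ (s, σ)) =
        ∫ σ in Set.Ioc (0:ℝ) T, Gf ν r f σ :=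
      setIntegral_congr_fun measurableSet_Ioc hR
    rw [hLHS, hRHS] at hswap
    linarith
  -- identification of x with the given solution, and its limit
  have hXx : ∀ t : ℝ, 0 ≤ t → (∫ s in (0:ℝ)..t, r (t - s) * f s) = xf r f t := by
    intro t ht
    rw [intervalIntegral.integral_of_le ht, xf_def]
    exact setIntegral_congr_fun measurableSet_Ioc fun s hs => by
      rw [hf'eq s hs.1.le]
  have hx_to0 : Tendsto (xf r f) atTop (nhds 0) :=
    hto0.congr' ((eventually_ge_atTop (0:ℝ)).mono fun t ht => hXx t ht)
  have hxδ : Tendsto (fun t => xf r f (t + δ)) atTop (nhds 0) :=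
    hx_to0.comp (tendsto_atTop_add_const_right atTop δ tendsto_id)
  -- the main pointwise identity for sections
  have hmain : ∀ t : ℝ, 0 ≤ t → (∫ s in t..(t + δ), f s) =
      xf r f (t + δ) - xf r f t - ∫ σ in Set.Ioc t (t + δ), Gf ν r f σ := by
    intro t ht
    have htδ : t ≤ t + δ := by linarith [hδ.1]
    have h0δ : 0 ≤ t + δ := by linarith [hδ.1]
    have h1 := (hkey t ht).2
    have h2 := (hkey (t + δ) h0δ).2
    have hsplitG : (∫ σ in Set.Ioc (0:ℝ) (t + δ), Gf ν r f σ) =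
        (∫ σ in Set.Ioc (0:ℝ) t, Gf ν r f σ) +
          ∫ σ in Set.Ioc t (t + δ), Gf ν r f σ := by
      rw [← Set.Ioc_union_Ioc_eq_Ioc ht htδ]
      exact setIntegral_union (Set.Ioc_disjoint_Ioc_of_le le_rfl) measurableSet_Ioc
        ((hkey (t + δ) h0δ).1.mono_set (Set.Ioc_subset_Ioc_right htδ))
        ((hkey (t + δ) h0δ).1.mono_set (Set.Ioc_subset_Ioc_left ht))
    have hsplitF : (∫ s in Set.Ioc (0:ℝ) (t + δ), fext f s) =
        (∫ s in Set.Ioc (0:ℝ) t, fext f s) + ∫ s in Set.Ioc t (t + δ), fext f s := by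
      rw [← Set.Ioc_union_Ioc_eq_Ioc ht htδ]
      exact setIntegral_union (Set.Ioc_disjoint_Ioc_of_le le_rfl) measurableSet_Ioc
        hf'c.integrableOn_Ioc hf'c.integrableOn_Ioc
    have h3 : (∫ s in t..(t + δ), f s) = ∫ s in Set.Ioc t (t + δ), fext f s := by
      rw [intervalIntegral.integral_of_le htδ]
      exact setIntegral_congr_fun measurableSet_Ioc fun s hs =>
        (hf'eq s (le_of_lt (lt_of_le_of_lt ht hs.1))).symm
    rw [h3]
    rw [hsplitG, hsplitF] at h2
    linarith
  -- the tail integral of G tends to zero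
  have hGto0 : Tendsto (fun t => ∫ σ in Set.Ioc t (t + δ), Gf ν r f σ) atTop (nhds 0) := by
    rw [NormedAddCommGroup.tendsto_nhds_zero]
    intro ε hε
    set Cp := (ν.toJordanDecomposition.posPart Set.univ).toReal with hCp
    set Cn := (ν.toJordanDecomposition.negPart Set.univ).toReal with hCn
    have hCp0 : 0 ≤ Cp := ENNReal.toReal_nonneg
    have hCn0 : 0 ≤ Cn := ENNReal.toReal_nonneg
    set ε' := ε / (2 * (Cp + Cn + 1)) with hε'
    have hε'0 : 0 < ε' := by positivity
    obtain ⟨T₁, hT₁⟩ := (Metric.tendsto_atTop.1 hx_to0) ε' hε'0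
    have hxb : ∀ v : ℝ, v ≥ T₁ → |xf r f v| ≤ ε' := by
      intro v hv
      have := hT₁ v hv
      rw [Real.dist_eq, sub_zero] at this
      exact this.le
    filter_upwards [eventually_ge_atTop (T₁ + τ), eventually_ge_atTop (0:ℝ)] with t ht ht0
    have h0δ : 0 ≤ t + δ := by linarith [hδ.1]
    have hGb : ∀ σ ∈ Set.Ioc t (t + δ), ‖Gf ν r f σ‖ ≤ ε' * (Cp + Cn) := by
      intro σ hσ
      have hb : ∀ (μ : Measure ℝ) [IsFiniteMeasure μ],
          (∀ᵐ u ∂μ, u ∈ Set.Icc (-τ) 0) →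
          ‖∫ u, xf r f (σ + u) ∂μ‖ ≤ ε' * (μ Set.univ).toReal := by
        intro μ _ hμ
        refine norm_integral_le_of_norm_le_const (hμ.mono fun u hu => ?_)
        have : σ + u ≥ T₁ := by linarith [hσ.1, hu.1]
        simpa [Real.norm_eq_abs] using hxb _ this
      calc ‖Gf ν r f σ‖ ≤ ‖∫ u, xf r f (σ + u) ∂ν.toJordanDecomposition.posPart‖ +
            ‖∫ u, xf r f (σ + u) ∂ν.toJordanDecomposition.negPart‖ := norm_sub_le _ _
        _ ≤ ε' * Cp + ε' * Cn := add_le_add (hb _ aep) (hb _ aen)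
        _ = ε' * (Cp + Cn) := by ring
    have hAESM : AEStronglyMeasurable (Gf ν r f) (volume.restrict (Set.Ioc t (t + δ))) :=
      ((hkey (t + δ) h0δ).1.mono_set (Set.Ioc_subset_Ioc_left ht0)).aestronglyMeasurable
    have hbound : ‖∫ σ in Set.Ioc t (t + δ), Gf ν r f σ‖ ≤
        ε' * (Cp + Cn) * ((volume : Measure ℝ) (Set.Ioc t (t + δ))).toReal :=
      norm_setIntegral_le_of_norm_le_const (measure_Ioc_lt_top) hGb
    have hvol : ((volume : Measure ℝ) (Set.Ioc t (t + δ))).toReal = δ := by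
      rw [Real.volume_Ioc, ENNReal.toReal_ofReal (by linarith [hδ.1])]
      ring
    rw [hvol] at hbound
    calc ‖∫ σ in Set.Ioc t (t + δ), Gf ν r f σ‖ ≤ ε' * (Cp + Cn) * δ := hbound
      _ < ε := by
        have ha : 0 ≤ ε' * (Cp + Cn) := mul_nonneg hε'0.le (add_nonneg hCp0 hCn0)
        have hb : ε' * (Cp + Cn) * δ ≤ ε' * (Cp + Cn) * 1 :=
          mul_le_mul_of_nonneg_left hδ.2 ha
        have hne : Cp + Cn + 1 ≠ 0 := by positivity
        have h2' : ε' * (Cp + Cn) + ε' = ε / 2 := by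
          rw [hε']; field_simp
        linarith
  -- conclusion
  have hlim : Tendsto (fun t => xf r f (t + δ) - xf r f t -
      ∫ σ in Set.Ioc t (t + δ), Gf ν r f σ) atTop (nhds 0) := by
    have := (hxδ.sub hx_to0).sub hGto0
    simpa using this
  exact hlim.congr' ((eventually_ge_atTop (0:ℝ)).mono fun t ht => (hmain t ht).symm)
end
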